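/- arXiv:1902.03584 — 8 statements merged into one kernel-verified Lean document; each statement's English description precedes it below -/
import Mathlib

section
/- Let G be an n×n matrix over a field 𝔽 and suppose G = E₁⋯E_k·Z₁·Z₂ where each Eᵢ is idempotent with n(Eᵢ) = nᵢ and Z₁, Z₂ are square-zero with n(Z₁) = m₁ and n(Z₂) = m₂. Then (i) r(G) ≤ n₁ + ⋯ + n_k + n₀(G); (ii) n₁, …, n_k, m₁, m₂ ≤ n(G); (iii) m₁ ≥ n/2 and m₂ ≥ n/2. -/
open Matrix

/-- The nullity of a square matrix: the dimension of its null space. -/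
noncomputable def nullity {𝔽 : Type*} [Field 𝔽] {ι : Type*} [Fintype ι]
    (A : Matrix ι ι 𝔽) : ℕ :=
  Module.finrank 𝔽 (LinearMap.ker A.mulVecLin)

/-- `n₀(A) = n(A) - dim(R(A) ∩ N(A))`. -/
noncomputable def nZero {𝔽 : Type*} [Field 𝔽] {ι : Type*} [Fintype ι]
    (A : Matrix ι ι 𝔽) : ℕ :=
  nullity A -
    Module.finrank 𝔽
      (LinearMap.range A.mulVecLin ⊓ LinearMap.ker A.mulVecLin : Submodule 𝔽 (ι → 𝔽))

section Aux

open Module LinearMap Submodule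

variable {𝔽 : Type*} [Field 𝔽] {V : Type*} [AddCommGroup V] [Module 𝔽 V]
  [FiniteDimensional 𝔽 V]

/-- Submodularity consequence: `dim (X ⊓ (W ⊔ N)) ≤ dim (X ⊓ W) + dim N`. -/
lemma aux_finrank_inf_sup_le (X W N : Submodule 𝔽 V) :
    finrank 𝔽 (X ⊓ (W ⊔ N) : Submodule 𝔽 V) ≤
      finrank 𝔽 (X ⊓ W : Submodule 𝔽 V) + finrank 𝔽 N := by
  have h := Submodule.finrank_sup_add_finrank_inf_eq (X ⊓ (W ⊔ N)) W
  have h1 : (X ⊓ (W ⊔ N)) ⊓ W = X ⊓ W := by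
    rw [inf_assoc, inf_eq_right.mpr (le_sup_left : W ≤ W ⊔ N)]
  have h2 : finrank 𝔽 ((X ⊓ (W ⊔ N)) ⊔ W : Submodule 𝔽 V) ≤ finrank 𝔽 (W ⊔ N : Submodule 𝔽 V) :=
    Submodule.finrank_mono (sup_le inf_le_right le_sup_left)
  have h3 : finrank 𝔽 (W ⊔ N : Submodule 𝔽 V) + finrank 𝔽 (W ⊓ N : Submodule 𝔽 V)
      = finrank 𝔽 W + finrank 𝔽 N := Submodule.finrank_sup_add_finrank_inf_eq W N
  rw [h1] at h
  omega

/-- If `E` is idempotent, composing with `E` changes the dimension of the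
intersection of the range with a fixed subspace by at most `dim ker E`. -/
lemma aux_idem_step (Ee A : V →ₗ[𝔽] V) (hEe : Ee ∘ₗ Ee = Ee) (W : Submodule 𝔽 V) :
    finrank 𝔽 (range (Ee ∘ₗ A) ⊓ W : Submodule 𝔽 V) ≤
      finrank 𝔽 (ker Ee) + finrank 𝔽 (range A ⊓ W : Submodule 𝔽 V) := by
  have hsub : (range (Ee ∘ₗ A) ⊓ W : Submodule 𝔽 V) ≤
      (range A ⊓ (W ⊔ ker Ee)).map Ee := by
    rintro y hy
    obtain ⟨hy1, hy2⟩ := Submodule.mem_inf.mp hy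
    obtain ⟨x, rfl⟩ := hy1
    simp only [LinearMap.comp_apply] at hy2 ⊢
    refine ⟨A x, Submodule.mem_inf.mpr ⟨⟨x, rfl⟩, ?_⟩, rfl⟩
    have hk : A x - Ee (A x) ∈ ker Ee := by
      simp only [LinearMap.mem_ker, map_sub]
      have : Ee (Ee (A x)) = Ee (A x) := by
        conv_rhs => rw [← hEe]
        rfl
      rw [this, sub_self]
    have : A x = Ee (A x) + (A x - Ee (A x)) := by abel
    rw [this]
    exact Submodule.add_mem_sup hy2 hk
  calc finrank 𝔽 (range (Ee ∘ₗ A) ⊓ W : Submodule 𝔽 V)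
      ≤ finrank 𝔽 ((range A ⊓ (W ⊔ ker Ee)).map Ee) := Submodule.finrank_mono hsub
    _ ≤ finrank 𝔽 (range A ⊓ (W ⊔ ker Ee) : Submodule 𝔽 V) := Submodule.finrank_map_le _ _
    _ ≤ finrank 𝔽 (range A ⊓ W : Submodule 𝔽 V) + finrank 𝔽 (ker Ee) :=
        aux_finrank_inf_sup_le _ _ _
    _ = finrank 𝔽 (ker Ee) + finrank 𝔽 (range A ⊓ W : Submodule 𝔽 V) := Nat.add_comm _ _

/-- Iterating `aux_idem_step` over a list of idempotents. -/
lemma aux_list_prod (l : List (V →ₗ[𝔽] V)) (hl : ∀ f ∈ l, f ∘ₗ f = f)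
    (A : V →ₗ[𝔽] V) (W : Submodule 𝔽 V) :
    finrank 𝔽 (range (l.prod ∘ₗ A) ⊓ W : Submodule 𝔽 V) ≤
      (l.map fun f => finrank 𝔽 (ker f)).sum +
        finrank 𝔽 (range A ⊓ W : Submodule 𝔽 V) := by
  induction l with
  | nil => simp [Module.End.one_eq_id]; exact le_rfl
  | cons f t ih =>
    have h1 : ((f :: t).prod) ∘ₗ A = f ∘ₗ (t.prod ∘ₗ A) := by
      rw [List.prod_cons, Module.End.mul_eq_comp, LinearMap.comp_assoc]
    rw [h1]
    have h2 := aux_idem_step f (t.prod ∘ₗ A) (hl f (List.mem_cons_self)) W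
    have h3 := ih fun g hg => hl g (List.mem_cons_of_mem _ hg)
    simp only [List.map_cons, List.sum_cons]
    omega

lemma aux_mulVecLin_list_prod {n : ℕ} (l : List (Matrix (Fin n) (Fin n) 𝔽)) :
    l.prod.mulVecLin = (l.map Matrix.mulVecLin).prod := by
  induction l with
  | nil => simp [Matrix.mulVecLin_one, Module.End.one_eq_id]
  | cons a t ih =>
    simp [Matrix.mulVecLin_mul, ih, Module.End.mul_eq_comp]

lemma aux_rank_list_prod_le {n : ℕ} (l : List (Matrix (Fin n) (Fin n) 𝔽))
    {X : Matrix (Fin n) (Fin n) 𝔽} (hX : X ∈ l) : l.prod.rank ≤ X.rank := by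
  induction l with
  | nil => simp at hX
  | cons a t ih =>
    rw [List.prod_cons]
    rcases List.mem_cons.mp hX with rfl | h
    · exact Matrix.rank_mul_le_left _ _
    · exact (Matrix.rank_mul_le_right _ _).trans (ih h)

end Aux

/-- Necessity: if `G = E₁⋯E_k Z₁ Z₂` with `Eᵢ` idempotent of nullity `nᵢ` and `Z₁, Z₂`
square-zero of nullities `m₁, m₂`, then `r(G) ≤ n₁ + ⋯ + n_k + n₀(G)`, all prescribed
nullities are at most `n(G)`, and `m₁, m₂ ≥ n/2`. -/
theorem stmt1 {𝔽 : Type*} [Field 𝔽] {n k : ℕ} (G : Matrix (Fin n) (Fin n) 𝔽)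
    (nv : Fin k → ℕ) (m₁ m₂ : ℕ)
    (E : Fin k → Matrix (Fin n) (Fin n) 𝔽) (Z₁ Z₂ : Matrix (Fin n) (Fin n) 𝔽)
    (hG : G = (List.ofFn E).prod * Z₁ * Z₂)
    (hE : ∀ i, E i * E i = E i ∧ nullity (E i) = nv i)
    (hZ₁ : Z₁ * Z₁ = 0) (hZ₂ : Z₂ * Z₂ = 0)
    (hm₁ : nullity Z₁ = m₁) (hm₂ : nullity Z₂ = m₂) :
    G.rank ≤ (∑ i, nv i) + nZero G ∧
      (∀ i, nv i ≤ nullity G) ∧ m₁ ≤ nullity G ∧ m₂ ≤ nullity G ∧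
      n ≤ 2 * m₁ ∧ n ≤ 2 * m₂ := by
  classical
  have hrn : ∀ A : Matrix (Fin n) (Fin n) 𝔽, A.rank + nullity A = n := fun A => by
    rw [Matrix.rank, nullity, LinearMap.finrank_range_add_finrank_ker,
      Module.finrank_fin_fun]
  -- square-zero matrices: range ≤ ker
  have hzr : ∀ Z : Matrix (Fin n) (Fin n) 𝔽, Z * Z = 0 →
      LinearMap.range Z.mulVecLin ≤ LinearMap.ker Z.mulVecLin := fun Z h =>
    LinearMap.range_le_ker_iff.mpr (by rw [← Matrix.mulVecLin_mul, h, Matrix.mulVecLin_zero])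
  have hz : ∀ Z : Matrix (Fin n) (Fin n) 𝔽, Z * Z = 0 → Z.rank ≤ nullity Z := fun Z h =>
    Submodule.finrank_mono (hzr Z h)
  -- rank of G is at most the rank of any factor
  have hGZ₂ : G.rank ≤ Z₂.rank := by rw [hG]; exact Matrix.rank_mul_le_right _ _
  have hGZ₁ : G.rank ≤ Z₁.rank := by
    rw [hG]; exact (Matrix.rank_mul_le_left _ _).trans (Matrix.rank_mul_le_right _ _)
  have hGE : ∀ i, G.rank ≤ (E i).rank := fun i => by
    rw [hG]
    refine (Matrix.rank_mul_le_left _ _).trans ((Matrix.rank_mul_le_left _ _).trans ?_)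
    exact aux_rank_list_prod_le _ (List.mem_ofFn.mpr ⟨i, rfl⟩)
  -- part (ii) and (iii)
  have hii₁ : ∀ i, nv i ≤ nullity G := fun i => by
    have h1 := hrn G; have h2 := hrn (E i); have h3 := hGE i
    have h4 := (hE i).2; omega
  have hii₂ : m₁ ≤ nullity G := by
    have h1 := hrn G; have h2 := hrn Z₁; omega
  have hii₃ : m₂ ≤ nullity G := by
    have h1 := hrn G; have h2 := hrn Z₂; omega
  have hiii₁ : n ≤ 2 * m₁ := by
    have h1 := hrn Z₁; have h2 := hz Z₁ hZ₁; omega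
  have hiii₂ : n ≤ 2 * m₂ := by
    have h1 := hrn Z₂; have h2 := hz Z₂ hZ₂; omega
  -- part (i)
  refine ⟨?_, hii₁, hii₂, hii₃, hiii₁, hiii₂⟩
  set g := G.mulVecLin with hgdef
  set a := ((List.ofFn E).prod * Z₁).mulVecLin with hadef
  set z₂ := Z₂.mulVecLin with hz₂def
  set W := LinearMap.ker z₂ with hWdef
  have hga : g = a ∘ₗ z₂ := by rw [hgdef, hG, Matrix.mulVecLin_mul]
  have hWle : W ≤ LinearMap.ker g := by rw [hga]; exact LinearMap.ker_le_ker_comp _ _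
  have hWm₂ : Module.finrank 𝔽 W = m₂ := hm₂
  -- fact 1 : rank G + dim (ker a ⊓ W) ≤ m₂
  have fact1 : G.rank + Module.finrank 𝔽 (LinearMap.ker a ⊓ W : Submodule 𝔽 (Fin n → 𝔽))
      ≤ m₂ := by
    have hrange : LinearMap.range g ≤ Submodule.map a W := by
      rw [hga, LinearMap.range_comp]
      exact Submodule.map_mono (hzr Z₂ hZ₂)
    have hrk : Module.finrank 𝔽 (Submodule.map a W) +
        Module.finrank 𝔽 (LinearMap.ker a ⊓ W : Submodule 𝔽 (Fin n → 𝔽)) =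
        Module.finrank 𝔽 W := by
      have h := LinearMap.finrank_range_add_finrank_ker (a ∘ₗ W.subtype)
      have h1 : LinearMap.range (a ∘ₗ W.subtype) = Submodule.map a W := by
        rw [LinearMap.range_comp, Submodule.range_subtype]
      have h2 : LinearMap.ker (a ∘ₗ W.subtype) =
          Submodule.comap W.subtype (LinearMap.ker a ⊓ W) := by
        rw [LinearMap.ker_comp, Submodule.comap_inf, Submodule.comap_subtype_self, inf_top_eq]
      have h3 : Module.finrank 𝔽 (LinearMap.ker (a ∘ₗ W.subtype)) =
          Module.finrank 𝔽 (LinearMap.ker a ⊓ W : Submodule 𝔽 (Fin n → 𝔽)) := by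
        rw [h2]
        exact LinearEquiv.finrank_eq (Submodule.comapSubtypeEquivOfLe inf_le_right)
      rw [h1, h3] at h
      exact h
    have hmono : Module.finrank 𝔽 (LinearMap.range g) ≤
        Module.finrank 𝔽 (Submodule.map a W) := Submodule.finrank_mono hrange
    have : G.rank = Module.finrank 𝔽 (LinearMap.range g) := rfl
    omega
  -- fact 2 : dim (range g ⊓ W) ≤ ∑ nv + dim (ker a ⊓ W)
  have fact2 : Module.finrank 𝔽 (LinearMap.range g ⊓ W : Submodule 𝔽 (Fin n → 𝔽)) ≤
      (∑ i, nv i) +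
        Module.finrank 𝔽 (LinearMap.ker a ⊓ W : Submodule 𝔽 (Fin n → 𝔽)) := by
    set l : List ((Fin n → 𝔽) →ₗ[𝔽] (Fin n → 𝔽)) :=
      List.ofFn (fun i => (E i).mulVecLin) with hldef
    have hal : a = l.prod ∘ₗ Z₁.mulVecLin := by
      rw [hadef, Matrix.mulVecLin_mul, aux_mulVecLin_list_prod, List.map_ofFn]
      rfl
    have hl : ∀ f ∈ l, f ∘ₗ f = f := by
      intro f hf
      obtain ⟨i, rfl⟩ := List.mem_ofFn.mp hf
      rw [← Matrix.mulVecLin_mul, (hE i).1]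
    have hsum : (l.map fun f => Module.finrank 𝔽 (LinearMap.ker f)).sum = ∑ i, nv i := by
      rw [hldef, List.map_ofFn, List.sum_ofFn]
      exact Finset.sum_congr rfl fun i _ => (hE i).2
    have h1 : Module.finrank 𝔽 (LinearMap.range g ⊓ W : Submodule 𝔽 (Fin n → 𝔽)) ≤
        Module.finrank 𝔽 (LinearMap.range a ⊓ W : Submodule 𝔽 (Fin n → 𝔽)) := by
      refine Submodule.finrank_mono (inf_le_inf_right _ ?_)
      rw [hga]; exact LinearMap.range_comp_le_range _ _
    have h2 := aux_list_prod l hl Z₁.mulVecLin W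
    rw [← hal, hsum] at h2
    have h3 : Module.finrank 𝔽
        (LinearMap.range Z₁.mulVecLin ⊓ W : Submodule 𝔽 (Fin n → 𝔽)) ≤
        Module.finrank 𝔽 (LinearMap.ker a ⊓ W : Submodule 𝔽 (Fin n → 𝔽)) := by
      refine Submodule.finrank_mono (inf_le_inf_right _ ?_)
      refine (hzr Z₁ hZ₁).trans ?_
      rw [hal]; exact LinearMap.ker_le_ker_comp _ _
    omega
  -- fact 3
  have fact3 : Module.finrank 𝔽
        (LinearMap.range g ⊓ LinearMap.ker g : Submodule 𝔽 (Fin n → 𝔽)) + m₂ ≤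
      nullity G +
        Module.finrank 𝔽 (LinearMap.range g ⊓ W : Submodule 𝔽 (Fin n → 𝔽)) := by
    have h := Submodule.finrank_sup_add_finrank_inf_eq
      (LinearMap.range g ⊓ LinearMap.ker g) W
    have h1 : Module.finrank 𝔽
        ((LinearMap.range g ⊓ LinearMap.ker g) ⊔ W : Submodule 𝔽 (Fin n → 𝔽)) ≤
        nullity G :=
      Submodule.finrank_mono (sup_le inf_le_right hWle)
    have h2 : Module.finrank 𝔽
        ((LinearMap.range g ⊓ LinearMap.ker g) ⊓ W : Submodule 𝔽 (Fin n → 𝔽)) ≤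
        Module.finrank 𝔽 (LinearMap.range g ⊓ W : Submodule 𝔽 (Fin n → 𝔽)) :=
      Submodule.finrank_mono (inf_le_inf_right _ inf_le_left)
    omega
  have hio : Module.finrank 𝔽
      (LinearMap.range g ⊓ LinearMap.ker g : Submodule 𝔽 (Fin n → 𝔽)) ≤ nullity G :=
    Submodule.finrank_mono inf_le_right
  have hnz : nZero G = nullity G - Module.finrank 𝔽
      (LinearMap.range g ⊓ LinearMap.ker g : Submodule 𝔽 (Fin n → 𝔽)) := rfl
  rw [hnz]
  omega
end

section
/- Let G be an n×n matrix over a field 𝔽 and let n₁, …, n_k, m₁, m₂ be natural numbers satisfying (i) r(G) ≤ n₁ + ⋯ + n_k + n₀(G), (ii) n₁, …, n_k, m₁, m₂ ≤ n(G), and (iii) m₁ ≥ n/2 and m₂ ≥ n/2. Then there exist n×n matrices E₁, …, E_k, Z₁, Z₂ over 𝔽 with G = E₁⋯E_k·Z₁·Z₂, where each Eᵢ is idempotent with n(Eᵢ) = nᵢ, and Z₁, Z₂ are square-zero with n(Z₁) = m₁ and n(Z₂) = m₂. -/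
open Matrix

namespace Stmt2Aux

open Module Submodule LinearMap


variable {𝔽 V : Type*} [Field 𝔽] [AddCommGroup V] [Module 𝔽 V] [FiniteDimensional 𝔽 V]

/-- complement within a submodule -/
lemma compl_within {U W : Submodule 𝔽 V} (h : U ≤ W) :
    ∃ U' ≤ W, U ⊔ U' = W ∧ U ⊓ U' = ⊥ := by
  obtain ⟨C, hC⟩ := Submodule.exists_isCompl U
  refine ⟨W ⊓ C, inf_le_left, ?_, ?_⟩
  · rw [sup_comm, inf_sup_assoc_of_le _ h, sup_comm, hC.sup_eq_top, inf_top_eq]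
  · rw [eq_bot_iff]
    exact le_trans (inf_le_inf_left U inf_le_right) hC.inf_eq_bot.le

/-- a submodule of any dimension below -/
lemma exists_le_finrank (X : Submodule 𝔽 V) (t : ℕ) (h : t ≤ finrank 𝔽 X) :
    ∃ W ≤ X, finrank 𝔽 W = t := by
  induction t with
  | zero => exact ⟨⊥, bot_le, finrank_bot 𝔽 V⟩
  | succ s ih =>
    obtain ⟨W, hWX, hW⟩ := ih (Nat.le_of_succ_le h)
    have hlt : finrank 𝔽 W < finrank 𝔽 X := hW ▸ h
    obtain ⟨x, hxX, hxW⟩ : ∃ x ∈ X, x ∉ W := by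
      by_contra hc
      push_neg at hc
      exact absurd (Submodule.finrank_mono (hc : X ≤ W)) (by omega)
    have hx0 : x ≠ 0 := fun h0 => hxW (h0 ▸ W.zero_mem)
    have hdisj : W ⊓ (𝔽 ∙ x) = ⊥ := by
      rw [eq_bot_iff]
      rintro y ⟨hyW, hy⟩
      obtain ⟨c, rfl⟩ := Submodule.mem_span_singleton.1 hy
      rcases eq_or_ne c 0 with rfl | hc
      · simp
      · have : x ∈ W := by
          have := W.smul_mem c⁻¹ hyW
          rwa [smul_smul, inv_mul_cancel₀ hc, one_smul] at this
        exact absurd this hxW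
    refine ⟨W ⊔ 𝔽 ∙ x, sup_le hWX ((span_singleton_le_iff_mem x X).2 hxX), ?_⟩
    have := Submodule.finrank_sup_add_finrank_inf_eq W (𝔽 ∙ x)
    rw [hdisj] at this
    simp only [finrank_bot] at this
    rw [finrank_span_singleton hx0] at this
    omega

lemma finrank_sup_of_disjoint {U W : Submodule 𝔽 V} (h : U ⊓ W = ⊥) :
    finrank 𝔽 (U ⊔ W : Submodule 𝔽 V) = finrank 𝔽 U + finrank 𝔽 W := by
  have := Submodule.finrank_sup_add_finrank_inf_eq U W
  rw [h] at this
  simpa using this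

/-- a submodule of prescribed dimension inside X, avoiding Y -/
lemma exists_le_finrank_disjoint (X Y : Submodule 𝔽 V) (t : ℕ)
    (h : t + finrank 𝔽 (X ⊓ Y : Submodule 𝔽 V) ≤ finrank 𝔽 X) :
    ∃ W ≤ X, finrank 𝔽 W = t ∧ W ⊓ Y = ⊥ := by
  obtain ⟨X', hX'X, hsup, hinf⟩ := compl_within (inf_le_left : X ⊓ Y ≤ X)
  have hd : finrank 𝔽 (X ⊓ Y : Submodule 𝔽 V) + finrank 𝔽 X' = finrank 𝔽 X := by
    have := Submodule.finrank_sup_add_finrank_inf_eq (X ⊓ Y) X'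
    rw [hsup, hinf] at this
    simpa using this.symm
  obtain ⟨W, hWX', hW⟩ := exists_le_finrank X' t (by omega)
  refine ⟨W, le_trans hWX' hX'X, hW, ?_⟩
  rw [eq_bot_iff]
  rintro y ⟨hyW, hyY⟩
  have : y ∈ X ⊓ Y ⊓ X' := ⟨⟨le_trans hWX' hX'X hyW, hyY⟩, hWX' hyW⟩
  rwa [hinf] at this

omit [FiniteDimensional 𝔽 V] in
lemma isCompl_shift {P Q Q₁ Q₂ : Submodule 𝔽 V} (h : IsCompl P Q)
    (hsup : Q₁ ⊔ Q₂ = Q) (hinf : Q₁ ⊓ Q₂ = ⊥) : IsCompl (P ⊔ Q₁) Q₂ := by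
  constructor
  · rw [Submodule.disjoint_def]
    intro x hx1 hx2
    obtain ⟨p, hp, q₁, hq₁, rfl⟩ := Submodule.mem_sup.1 hx1
    have hpQ : p ∈ Q := by
      have h1 : p + q₁ - q₁ ∈ Q := by
        refine Submodule.sub_mem _ ?_ ?_ <;> rw [← hsup]
        · exact Submodule.mem_sup_right hx2
        · exact Submodule.mem_sup_left hq₁
      simpa using h1
    have : p = 0 := (Submodule.disjoint_def.1 h.disjoint) p hp hpQ
    subst this
    rw [zero_add] at hx2 ⊢
    have : q₁ ∈ Q₁ ⊓ Q₂ := ⟨hq₁, hx2⟩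
    rwa [hinf] at this
  · rw [codisjoint_iff, sup_assoc, hsup, h.sup_eq_top]

omit [FiniteDimensional 𝔽 V] in
lemma isCompl_unshift {P Q₁ Q₂ : Submodule 𝔽 V} (h : IsCompl (P ⊔ Q₁) Q₂)
    (hPQ : P ⊓ Q₁ = ⊥) : IsCompl P (Q₁ ⊔ Q₂) := by
  constructor
  · rw [Submodule.disjoint_def]
    intro x hxP hx2
    obtain ⟨q₁, hq₁, q₂, hq₂, rfl⟩ := Submodule.mem_sup.1 hx2
    have hq2' : q₂ ∈ P ⊔ Q₁ := by
      have : q₁ + q₂ - q₁ ∈ P ⊔ Q₁ :=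
        Submodule.sub_mem _ (Submodule.mem_sup_left hxP) (Submodule.mem_sup_right hq₁)
      simpa using this
    have : q₂ = 0 := (Submodule.disjoint_def.1 h.disjoint) q₂ hq2' hq₂
    subst this
    rw [add_zero] at hxP ⊢
    have : q₁ ∈ P ⊓ Q₁ := ⟨hxP, hq₁⟩
    rwa [hPQ] at this
  · rw [codisjoint_iff, ← sup_assoc, h.sup_eq_top]



lemma thmB (g : V →ₗ[𝔽] V) (m₁ m₂ : ℕ)
    (hB : finrank 𝔽 (range g) + finrank 𝔽 (range g ⊓ ker g : Submodule 𝔽 V)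
      ≤ finrank 𝔽 (ker g))
    (hm₁ : m₁ ≤ finrank 𝔽 (ker g)) (hm₂ : m₂ ≤ finrank 𝔽 (ker g))
    (h2m₁ : finrank 𝔽 V ≤ 2 * m₁) (h2m₂ : finrank 𝔽 V ≤ 2 * m₂) :
    ∃ z₁ z₂ : V →ₗ[𝔽] V, g = z₁ ∘ₗ z₂ ∧ z₁ ∘ₗ z₁ = 0 ∧ z₂ ∘ₗ z₂ = 0 ∧
      finrank 𝔽 (ker z₁) = m₁ ∧ finrank 𝔽 (ker z₂) = m₂ := by
  classical
  set nn := finrank 𝔽 V with hnn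
  set R := LinearMap.range g with hRdef
  set N := LinearMap.ker g with hNdef
  set D := R ⊓ N with hDdef
  set r := finrank 𝔽 R with hrdef
  set ν := finrank 𝔽 N with hνdef
  set d := finrank 𝔽 D with hddef
  have hrn : r + ν = nn := g.finrank_range_add_finrank_ker
  have hDN : D ≤ N := inf_le_right
  have hDR : D ≤ R := inf_le_left
  have hdν : d ≤ ν := Submodule.finrank_mono hDN
  have hdr : d ≤ r := Submodule.finrank_mono hDR
  set e := max (m₂ + d - ν) (min d (ν - m₂)) with hedef
  set b := min (ν - m₂) e with hbdef
  -- choose the pieces of K₂ and B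
  obtain ⟨DK, hDKD, hDKrank⟩ := exists_le_finrank D e (by omega)
  obtain ⟨BD, hBDDK, hBDrank⟩ := exists_le_finrank DK b (by omega)
  have hNDinf : N ⊓ D = D := inf_eq_right.2 hDN
  obtain ⟨K', hK'N, hK'rank, hK'D⟩ := exists_le_finrank_disjoint N D (m₂ - e)
    (by rw [hNDinf]; omega)
  obtain ⟨A, hAK', hArank⟩ := exists_le_finrank K' r (by omega)
  obtain ⟨A', hA'K', hAA'sup, hAA'inf⟩ := compl_within hAK'
  have hA'rank : r + finrank 𝔽 A' = m₂ - e := by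
    have h1 := finrank_sup_of_disjoint hAA'inf
    rw [hAA'sup] at h1
    omega
  obtain ⟨B', hB'A', hB'rank⟩ := exists_le_finrank A' ((ν - m₂) - b) (by omega)
  have hB'K' : B' ≤ K' := le_trans hB'A' hA'K'
  have hAB' : A ⊓ B' = ⊥ := by
    rw [eq_bot_iff]
    rintro x ⟨hx1, hx2⟩
    have : x ∈ A ⊓ A' := ⟨hx1, hB'A' hx2⟩
    rwa [hAA'inf] at this
  set K₂ := DK ⊔ K' with hK₂def
  have hDKK' : DK ⊓ K' = ⊥ := by
    rw [eq_bot_iff]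
    rintro x ⟨hx1, hx2⟩
    have : x ∈ K' ⊓ D := ⟨hx2, hDKD hx1⟩
    rwa [hK'D] at this
  have hK₂rank : finrank 𝔽 K₂ = m₂ := by
    rw [hK₂def, finrank_sup_of_disjoint hDKK', hDKrank, hK'rank]; omega
  have hK₂N : K₂ ≤ N := sup_le (le_trans hDKD hDN) hK'N
  obtain ⟨F₂, hF₂N, hKF₂sup, hKF₂inf⟩ := compl_within hK₂N
  have hF₂rank : finrank 𝔽 F₂ = ν - m₂ := by
    have h1 := finrank_sup_of_disjoint hKF₂inf
    rw [hKF₂sup, hK₂rank] at h1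
    omega
  obtain ⟨C, hNC⟩ := Submodule.exists_isCompl N
  have hCrank : finrank 𝔽 C = r := by
    have := Submodule.finrank_add_eq_of_isCompl hNC
    omega
  set B := BD ⊔ B' with hBdef
  have hBDB' : BD ⊓ B' = ⊥ := by
    rw [eq_bot_iff]
    rintro x ⟨hx1, hx2⟩
    have : x ∈ K' ⊓ D := ⟨hB'K' hx2, hDKD (hBDDK hx1)⟩
    rwa [hK'D] at this
  have hBrank : finrank 𝔽 B = ν - m₂ := by
    rw [hBdef, finrank_sup_of_disjoint hBDB', hBDrank, hB'rank]; omega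
  have hBK₂ : B ≤ K₂ := sup_le (le_trans hBDDK le_sup_left) (le_trans hB'K' le_sup_right)
  have hAK₂ : A ≤ K₂ := le_trans hAK' le_sup_right
  let φ : C ≃ₗ[𝔽] A := LinearEquiv.ofFinrankEq _ _ (by rw [← hCrank] at hArank; exact hArank.symm ▸ rfl)
  let ψ : F₂ ≃ₗ[𝔽] B := LinearEquiv.ofFinrankEq _ _ (by rw [hF₂rank, hBrank])
  -- A is disjoint from R ⊔ B
  have hAU : A ⊓ (R ⊔ B) = ⊥ := by
    rw [eq_bot_iff]
    rintro x ⟨hxA, hxU⟩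
    obtain ⟨ρ, hρ, bb, hbb, hx⟩ := Submodule.mem_sup.1 hxU
    obtain ⟨β, hβ, β', hβ', hbb'⟩ := Submodule.mem_sup.1 hbb
    have h1 : x - β' ∈ R := by
      have : x - β' = ρ + β := by rw [← hx, ← hbb']; abel
      rw [this]
      exact R.add_mem hρ (hDR (hDKD (hBDDK hβ)))
    have h2 : x - β' ∈ K' := K'.sub_mem (hAK' hxA) (hB'K' hβ')
    have h4 : x - β' ∈ K' ⊓ D := ⟨h2, h1, hK'N h2⟩
    rw [hK'D, Submodule.mem_bot] at h4
    have hxB' : x ∈ B' := by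
      have : x = β' := by
        have := sub_eq_zero.1 h4; exact this
      exact this ▸ hβ'
    have : x ∈ A ⊓ B' := ⟨hxA, hxB'⟩
    rwa [hAB', Submodule.mem_bot] at this
  set U := R ⊔ B with hUdef
  set u := finrank 𝔽 U with hudef
  have hule : u ≤ r + (ν - m₂) := by
    have h1 := Submodule.finrank_sup_add_finrank_inf_eq R B
    rw [← hUdef, ← hudef, hBrank, ← hrdef] at h1
    omega
  obtain ⟨Z, hZ⟩ := Submodule.exists_isCompl (A ⊔ U)
  have hAUrank : finrank 𝔽 (A ⊔ U : Submodule 𝔽 V) = r + u := by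
    rw [finrank_sup_of_disjoint hAU, hArank]
  have hZrank : r + u + finrank 𝔽 Z = nn := by
    have := Submodule.finrank_add_eq_of_isCompl hZ
    rw [hAUrank] at this
    omega
  obtain ⟨Z₁', hZ₁'Z, hZ₁'rank⟩ := exists_le_finrank Z (m₁ - u) (by omega)
  obtain ⟨Y, hYZ, hZsup, hZinf⟩ := compl_within hZ₁'Z
  have hYrank : finrank 𝔽 Y = ν - m₁ := by
    have h1 := finrank_sup_of_disjoint hZinf
    rw [hZsup, hZ₁'rank] at h1
    omega
  set X := U ⊔ Z₁' with hXdef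
  have hUZ₁' : U ⊓ Z₁' = ⊥ := by
    rw [eq_bot_iff]
    rintro x ⟨hx1, hx2⟩
    have : x ∈ (A ⊔ U) ⊓ Z := ⟨Submodule.mem_sup_right hx1, hZ₁'Z hx2⟩
    rwa [hZ.inf_eq_bot] at this
  have hXrank : finrank 𝔽 X = m₁ := by
    rw [hXdef, finrank_sup_of_disjoint hUZ₁', hZ₁'rank]
    omega
  have hcomplA : IsCompl A (X ⊔ Y) := by
    have h1 : IsCompl A (U ⊔ Z) := isCompl_unshift hZ hAU
    have h2 : X ⊔ Y = U ⊔ Z := by rw [hXdef, sup_assoc, hZsup]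
    rwa [h2]
  have hcomplY : IsCompl Y (A ⊔ X) := by
    have h1 : IsCompl ((A ⊔ U) ⊔ Z₁') Y := isCompl_shift hZ hZsup hZinf
    have h2 : A ⊔ X = (A ⊔ U) ⊔ Z₁' := by rw [hXdef, ← sup_assoc]
    rw [h2]
    exact h1.symm
  have hRX : R ≤ X := le_trans le_sup_left le_sup_left
  have hXRinf : X ⊓ R = R := inf_eq_right.2 hRX
  obtain ⟨Y', hY'X, hY'rank, hY'R⟩ := exists_le_finrank_disjoint X R (ν - m₁)
    (by rw [hXRinf, hXrank, ← hrdef]; omega)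
  let γ : Y ≃ₗ[𝔽] Y' := LinearEquiv.ofFinrankEq _ _ (by rw [hYrank, hY'rank])
  -- the projections
  have hCN : IsCompl C N := hNC.symm
  have hF₂compl : IsCompl F₂ (K₂ ⊔ C) := by
    refine isCompl_unshift ?_ ?_
    · rw [sup_comm, hKF₂sup]; exact hNC
    · rw [inf_comm]; exact hKF₂inf
  set πC := Submodule.projectionOnto C N hCN with hπC
  set πF := Submodule.projectionOnto F₂ (K₂ ⊔ C) hF₂compl with hπF
  set z₂ : V →ₗ[𝔽] V :=
    A.subtype ∘ₗ φ.toLinearMap ∘ₗ πC + B.subtype ∘ₗ ψ.toLinearMap ∘ₗ πF with hz₂def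
  have z₂K : ∀ x ∈ K₂, z₂ x = 0 := by
    intro x hx
    have h1 : πC x = 0 := Submodule.projectionOnto_apply_of_mem_right hCN (hK₂N hx)
    have h2 : πF x = 0 := Submodule.projectionOnto_apply_of_mem_right hF₂compl
      (Submodule.mem_sup_left hx)
    simp [hz₂def, h1, h2]
  have z₂F : ∀ (f : F₂), z₂ f = ψ f := by
    intro f
    have h1 : πC (f : V) = 0 := Submodule.projectionOnto_apply_of_mem_right hCN (hF₂N f.2)
    have h2 : πF (f : V) = f := Submodule.projectionOnto_apply_left hF₂compl f
    simp [hz₂def, h1, h2]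
  have z₂C : ∀ (c : C), z₂ c = φ c := by
    intro c
    have h1 : πC (c : V) = c := Submodule.projectionOnto_apply_left hCN c
    have h2 : πF (c : V) = 0 := Submodule.projectionOnto_apply_of_mem_right hF₂compl
      (Submodule.mem_sup_right c.2)
    simp [hz₂def, h1, h2]
  -- range of z₂
  have hz₂range : range z₂ = A ⊔ B := by
    apply le_antisymm
    · rintro x ⟨w, rfl⟩
      simp only [hz₂def, LinearMap.add_apply, coe_comp, Function.comp_apply, coe_subtype]
      exact Submodule.add_mem _ (Submodule.mem_sup_left (φ (πC w)).2)
        (Submodule.mem_sup_right (ψ (πF w)).2)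
    · rw [sup_le_iff]
      constructor
      · intro a ha
        refine ⟨(φ.symm ⟨a, ha⟩ : V), ?_⟩
        rw [z₂C (φ.symm ⟨a, ha⟩), LinearEquiv.apply_symm_apply]
      · intro x hx
        refine ⟨(ψ.symm ⟨x, hx⟩ : V), ?_⟩
        rw [z₂F (ψ.symm ⟨x, hx⟩), LinearEquiv.apply_symm_apply]
  have hABbot : A ⊓ B = ⊥ := by
    rw [eq_bot_iff]
    rintro x ⟨h1, h2⟩
    have : x ∈ A ⊓ U := ⟨h1, Submodule.mem_sup_right h2⟩
    rwa [hAU] at this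
  have hz₂rank : finrank 𝔽 (range z₂) = r + (ν - m₂) := by
    rw [hz₂range, finrank_sup_of_disjoint hABbot, hArank, hBrank]
  have hz₂ker : finrank 𝔽 (ker z₂) = m₂ := by
    have h1 := z₂.finrank_range_add_finrank_ker
    rw [hz₂rank] at h1
    omega
  have hz₂sq : z₂ ∘ₗ z₂ = 0 := by
    ext x
    have hmem : z₂ x ∈ K₂ := (sup_le hAK₂ hBK₂) (hz₂range ▸ LinearMap.mem_range_self z₂ x)
    simp only [coe_comp, Function.comp_apply, LinearMap.zero_apply]
    exact z₂K _ hmem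
  -- z₁
  set πA := Submodule.projectionOnto A (X ⊔ Y) hcomplA with hπA
  set πY := Submodule.projectionOnto Y (A ⊔ X) hcomplY with hπY
  set z₁ : V →ₗ[𝔽] V :=
    g ∘ₗ C.subtype ∘ₗ φ.symm.toLinearMap ∘ₗ πA + Y'.subtype ∘ₗ γ.toLinearMap ∘ₗ πY with hz₁def
  have z₁A : ∀ (a : A), z₁ a = g (φ.symm a) := by
    intro a
    have h1 : πA (a : V) = a := Submodule.projectionOnto_apply_left hcomplA a
    have h2 : πY (a : V) = 0 := Submodule.projectionOnto_apply_of_mem_right hcomplY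
      (Submodule.mem_sup_left a.2)
    simp [hz₁def, h1, h2]
  have z₁X : ∀ x ∈ X, z₁ x = 0 := by
    intro x hx
    have h1 : πA x = 0 := Submodule.projectionOnto_apply_of_mem_right hcomplA
      (Submodule.mem_sup_left hx)
    have h2 : πY x = 0 := Submodule.projectionOnto_apply_of_mem_right hcomplY
      (Submodule.mem_sup_right hx)
    simp [hz₁def, h1, h2]
  have z₁Y : ∀ (y : Y), z₁ y = γ y := by
    intro y
    have h1 : πA (y : V) = 0 := Submodule.projectionOnto_apply_of_mem_right hcomplA
      (Submodule.mem_sup_right y.2)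
    have h2 : πY (y : V) = y := Submodule.projectionOnto_apply_left hcomplY y
    simp [hz₁def, h1, h2]
  have hz₁range : range z₁ = R ⊔ Y' := by
    apply le_antisymm
    · rintro x ⟨w, rfl⟩
      simp only [hz₁def, LinearMap.add_apply, coe_comp, Function.comp_apply, coe_subtype]
      exact Submodule.add_mem _ (Submodule.mem_sup_left (LinearMap.mem_range_self g _))
        (Submodule.mem_sup_right (γ (πY w)).2)
    · rw [sup_le_iff]
      constructor
      · rintro ρ ⟨w, rfl⟩
        have htop : w ∈ (⊤ : Submodule 𝔽 V) := trivial
        rw [← hNC.sup_eq_top] at htop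
        obtain ⟨nx, hnx, c, hc, rfl⟩ := Submodule.mem_sup.1 htop
        refine ⟨(φ (⟨c, hc⟩ : C) : V), ?_⟩
        rw [z₁A (φ ⟨c, hc⟩), LinearEquiv.symm_apply_apply]
        have hnx0 : g nx = 0 := hnx
        simp [map_add, hnx0]
      · intro y' hy'
        refine ⟨(γ.symm ⟨y', hy'⟩ : V), ?_⟩
        rw [z₁Y (γ.symm ⟨y', hy'⟩), LinearEquiv.apply_symm_apply]
  have hRY' : R ⊓ Y' = ⊥ := by rw [inf_comm]; exact hY'R
  have hz₁rank : finrank 𝔽 (range z₁) = r + (ν - m₁) := by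
    rw [hz₁range, finrank_sup_of_disjoint hRY', hY'rank, ← hrdef]
  have hz₁ker : finrank 𝔽 (ker z₁) = m₁ := by
    have h1 := z₁.finrank_range_add_finrank_ker
    rw [hz₁rank] at h1
    omega
  have hz₁sq : z₁ ∘ₗ z₁ = 0 := by
    ext x
    have hmem : z₁ x ∈ X := (sup_le hRX hY'X) (hz₁range ▸ LinearMap.mem_range_self z₁ x)
    simp only [coe_comp, Function.comp_apply, LinearMap.zero_apply]
    exact z₁X _ hmem
  -- the factorization
  have hfact : g = z₁ ∘ₗ z₂ := by
    ext x
    have htop : x ∈ (⊤ : Submodule 𝔽 V) := trivial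
    rw [← hNC.sup_eq_top] at htop
    obtain ⟨w, hw, c, hc, rfl⟩ := Submodule.mem_sup.1 htop
    rw [← hKF₂sup] at hw
    obtain ⟨kk, hkk, ff, hff, rfl⟩ := Submodule.mem_sup.1 hw
    have hgx : g (kk + ff + c) = g c := by
      have h1 : g kk = 0 := hK₂N hkk
      have h2 : g ff = 0 := hF₂N hff
      simp [map_add, h1, h2]
    have hz₂x : z₂ (kk + ff + c) = (ψ ⟨ff, hff⟩ : V) + (φ ⟨c, hc⟩ : V) := by
      rw [map_add, map_add, z₂K kk hkk, zero_add, z₂F ⟨ff, hff⟩, z₂C ⟨c, hc⟩]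
    simp only [coe_comp, Function.comp_apply]
    rw [hgx, hz₂x, map_add]
    rw [z₁X _ ((le_sup_right.trans le_sup_left : B ≤ X) (ψ ⟨ff, hff⟩).2), zero_add]
    rw [z₁A (φ ⟨c, hc⟩), LinearEquiv.symm_apply_apply]
  exact ⟨z₁, z₂, hfact, hz₁sq, hz₂sq, hz₁ker, hz₂ker⟩

lemma lemC (g : V →ₗ[𝔽] V) (t : ℕ) (ht : t ≤ finrank 𝔽 (ker g)) :
    ∃ e g' : V →ₗ[𝔽] V, g = e ∘ₗ g' ∧ e ∘ₗ e = e ∧ finrank 𝔽 (ker e) = t ∧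
      ker g' = ker g ∧ finrank 𝔽 (range g') = finrank 𝔽 (range g) ∧
      finrank 𝔽 (range g' ⊓ ker g' : Submodule 𝔽 V)
        + min t (finrank 𝔽 (range g ⊓ ker g : Submodule 𝔽 V))
        = finrank 𝔽 (range g ⊓ ker g : Submodule 𝔽 V) := by
  classical
  set nn := finrank 𝔽 V with hnn
  set R := LinearMap.range g with hRdef
  set N := LinearMap.ker g with hNdef
  set D := R ⊓ N with hDdef
  set r := finrank 𝔽 R with hrdef
  set ν := finrank 𝔽 N with hνdef
  set d := finrank 𝔽 D with hddef
  have hrn : r + ν = nn := g.finrank_range_add_finrank_ker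
  have hDN : D ≤ N := inf_le_right
  have hDR : D ≤ R := inf_le_left
  have hdν : d ≤ ν := Submodule.finrank_mono hDN
  have hdr : d ≤ r := Submodule.finrank_mono hDR
  set s := min t d with hsdef
  obtain ⟨D₂, hD₂D, hD₂rank⟩ := exists_le_finrank D s (by omega)
  obtain ⟨D₁, hD₁D, hD₁sup, hD₁inf⟩ := compl_within hD₂D
  have hD₁rank : s + finrank 𝔽 D₁ = d := by
    have h1 := finrank_sup_of_disjoint hD₁inf
    rw [hD₁sup, hD₂rank] at h1
    omega
  obtain ⟨R₁, hR₁R, hDR₁sup, hDR₁inf⟩ := compl_within hDR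
  have hR₁rank : d + finrank 𝔽 R₁ = r := by
    have h1 := finrank_sup_of_disjoint hDR₁inf
    rw [hDR₁sup] at h1
    omega
  set R₀ := D₁ ⊔ R₁ with hR₀def
  have hD₁R₁ : D₁ ⊓ R₁ = ⊥ := by
    rw [eq_bot_iff]
    rintro x ⟨h1, h2⟩
    have : x ∈ D ⊓ R₁ := ⟨hD₁D h1, h2⟩
    rwa [hDR₁inf] at this
  have hR₀rank : s + finrank 𝔽 R₀ = r := by
    rw [hR₀def, finrank_sup_of_disjoint hD₁R₁]
    omega
  have hR₀R : R₀ ≤ R := sup_le (le_trans hD₁D hDR) hR₁R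
  have hR₀D₂sup : R₀ ⊔ D₂ = R := by
    rw [hR₀def, sup_right_comm, sup_comm D₁ D₂, hD₁sup, hDR₁sup]
  have hR₀D₂inf : R₀ ⊓ D₂ = ⊥ := by
    rw [eq_bot_iff]
    rintro x ⟨h1, h2⟩
    obtain ⟨δ₁, hδ₁, ρ₁, hρ₁, rfl⟩ := Submodule.mem_sup.1 h1
    have hρ : ρ₁ ∈ D ⊓ R₁ := ⟨by simpa using D.sub_mem (hD₂D h2) (hD₁D hδ₁), hρ₁⟩
    rw [hDR₁inf, Submodule.mem_bot] at hρ
    subst hρ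
    rw [add_zero] at h2 ⊢
    have : δ₁ ∈ D₂ ⊓ D₁ := ⟨h2, hδ₁⟩
    rwa [hD₁inf, Submodule.mem_bot] at this
  -- choose S away from R ⊔ N
  have hRNrank : finrank 𝔽 (R ⊔ N : Submodule 𝔽 V) + d = r + ν := by
    have := Submodule.finrank_sup_add_finrank_inf_eq R N
    rw [← hDdef] at this
    omega
  obtain ⟨S, hStop, hSrank, hSRN⟩ := exists_le_finrank_disjoint ⊤ (R ⊔ N) s
    (by rw [top_inf_eq, finrank_top]; omega)
  let φ : D₂ ≃ₗ[𝔽] S := LinearEquiv.ofFinrankEq _ _ (by rw [hD₂rank, hSrank])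
  have hSR : S ⊓ R = ⊥ := by
    rw [eq_bot_iff]
    rintro x ⟨h1, h2⟩
    have : x ∈ S ⊓ (R ⊔ N) := ⟨h1, Submodule.mem_sup_left h2⟩
    rwa [hSRN] at this
  have hSN : S ⊓ N = ⊥ := by
    rw [eq_bot_iff]
    rintro x ⟨h1, h2⟩
    have : x ∈ S ⊓ (R ⊔ N) := ⟨h1, Submodule.mem_sup_right h2⟩
    rwa [hSRN] at this
  set G₀ := R₀ ⊔ S with hG₀def
  have hD₂G₀ : D₂ ⊓ G₀ = ⊥ := by
    rw [eq_bot_iff]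
    rintro x ⟨h1, h2⟩
    obtain ⟨ρ₀, hρ₀, σ, hσ, rfl⟩ := Submodule.mem_sup.1 h2
    have hxR : ρ₀ + σ ∈ R := hDR (hD₂D h1)
    have hσ' : σ ∈ S ⊓ R := ⟨hσ, by simpa using R.sub_mem hxR (hR₀R hρ₀)⟩
    rw [hSR, Submodule.mem_bot] at hσ'
    subst hσ'
    rw [add_zero] at h1 ⊢
    have : ρ₀ ∈ R₀ ⊓ D₂ := ⟨hρ₀, h1⟩
    rwa [hR₀D₂inf, Submodule.mem_bot] at this
  obtain ⟨W', hW'⟩ := Submodule.exists_isCompl (D₂ ⊔ G₀)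
  have hCCcompl : IsCompl D₂ (G₀ ⊔ W') := isCompl_unshift hW' hD₂G₀
  set CC := G₀ ⊔ W' with hCCdef
  set πD₂ := Submodule.projectionOnto D₂ CC hCCcompl with hπD₂
  set πCC := Submodule.projectionOnto CC D₂ hCCcompl.symm with hπCC
  set θ : V →ₗ[𝔽] V := S.subtype ∘ₗ φ.toLinearMap ∘ₗ πD₂ + CC.subtype ∘ₗ πCC with hθdef
  have θCC : ∀ x ∈ CC, θ x = x := by
    intro x hx
    have h1 : πD₂ x = 0 := Submodule.projectionOnto_apply_of_mem_right hCCcompl hx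
    have h2 : (πCC x : V) = x := by
      have := Submodule.projectionOnto_apply_left hCCcompl.symm (⟨x, hx⟩ : CC)
      rw [this]
    simp [hθdef, h1, h2]
  have θD₂ : ∀ (x : D₂), θ x = φ x := by
    intro x
    have h1 : πD₂ (x : V) = x := Submodule.projectionOnto_apply_left hCCcompl x
    have h2 : πCC (x : V) = 0 :=
      Submodule.projectionOnto_apply_of_mem_right hCCcompl.symm x.2
    simp [hθdef, h1, h2]
  have hR₀CC : R₀ ≤ CC := le_trans le_sup_left le_sup_left
  -- θ is injective on R
  have hθinjR : ∀ v ∈ R, θ v = 0 → v = 0 := by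
    intro v hv hθv
    rw [← hR₀D₂sup] at hv
    obtain ⟨ρ₀, hρ₀, δ, hδ, rfl⟩ := Submodule.mem_sup.1 hv
    rw [map_add, θCC ρ₀ (hR₀CC hρ₀), θD₂ ⟨δ, hδ⟩] at hθv
    have hφδ : (φ ⟨δ, hδ⟩ : V) ∈ S ⊓ R :=
      ⟨(φ ⟨δ, hδ⟩).2, by
        have h5 : (φ ⟨δ, hδ⟩ : V) = -ρ₀ := eq_neg_of_add_eq_zero_right hθv
        rw [h5]; exact R.neg_mem (hR₀R hρ₀)⟩
    rw [hSR, Submodule.mem_bot] at hφδ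
    have hδ0 : (⟨δ, hδ⟩ : D₂) = 0 := by
      apply φ.injective
      rw [map_zero]
      exact Subtype.ext (by simpa using hφδ)
    have hδ0' : δ = 0 := congrArg Subtype.val hδ0
    subst hδ0'
    have h6 : (φ ⟨0, hδ⟩ : V) = 0 := by rw [hδ0]; simp
    rw [h6, add_zero] at hθv
    rwa [add_zero]
  set g' : V →ₗ[𝔽] V := θ ∘ₗ g with hg'def
  have hkerg' : ker g' = ker g := by
    apply le_antisymm
    · intro x hx
      have hx' : θ (g x) = 0 := hx
      have : g x = 0 := hθinjR (g x) (LinearMap.mem_range_self g x) hx'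
      exact this
    · intro x hx
      have hx' : g x = 0 := hx
      show θ (g x) = 0
      rw [hx', map_zero]
  have hmapR₀ : Submodule.map θ R₀ = R₀ := by
    apply le_antisymm
    · rintro x ⟨y, hy, rfl⟩
      rw [θCC y (hR₀CC hy)]
      exact hy
    · intro x hx
      exact ⟨x, hx, θCC x (hR₀CC hx)⟩
  have hmapD₂ : Submodule.map θ D₂ = S := by
    apply le_antisymm
    · rintro x ⟨y, hy, rfl⟩
      rw [θD₂ ⟨y, hy⟩]
      exact (φ ⟨y, hy⟩).2
    · intro x hx
      refine ⟨(φ.symm ⟨x, hx⟩ : V), (φ.symm ⟨x, hx⟩).2, ?_⟩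
      rw [θD₂ (φ.symm ⟨x, hx⟩), LinearEquiv.apply_symm_apply]
  have hrangeg' : range g' = R₀ ⊔ S := by
    rw [hg'def, LinearMap.range_comp, ← hRdef, ← hR₀D₂sup, Submodule.map_sup, hmapR₀, hmapD₂]
  have hR₀S : R₀ ⊓ S = ⊥ := by
    rw [eq_bot_iff]
    rintro x ⟨h1, h2⟩
    have : x ∈ S ⊓ R := ⟨h2, hR₀R h1⟩
    rwa [hSR] at this
  have hrankg' : finrank 𝔽 (range g') = r := by
    rw [hrangeg', finrank_sup_of_disjoint hR₀S, hSrank]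
    omega
  -- (R₀ ⊔ S) ⊓ N = D₁
  have hinfg' : (R₀ ⊔ S) ⊓ N = D₁ := by
    apply le_antisymm
    · rintro x ⟨h1, h2⟩
      obtain ⟨ρ₀, hρ₀, σ, hσ, rfl⟩ := Submodule.mem_sup.1 h1
      have hσ' : σ ∈ S ⊓ (R ⊔ N) := by
        refine ⟨hσ, ?_⟩
        have : σ = ρ₀ + σ - ρ₀ := by abel
        rw [this]
        exact Submodule.sub_mem _ (Submodule.mem_sup_right h2)
          (Submodule.mem_sup_left (hR₀R hρ₀))
      rw [hSRN, Submodule.mem_bot] at hσ'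
      subst hσ'
      rw [add_zero] at h2 ⊢
      obtain ⟨δ₁, hδ₁, ρ₁, hρ₁, rfl⟩ := Submodule.mem_sup.1 hρ₀
      have hρ₁' : ρ₁ ∈ D ⊓ R₁ := by
        refine ⟨⟨?_, ?_⟩, hρ₁⟩
        · exact hR₁R hρ₁
        · have : ρ₁ = δ₁ + ρ₁ - δ₁ := by abel
          rw [this]
          exact N.sub_mem h2 (hDN (hD₁D hδ₁))
      rw [hDR₁inf, Submodule.mem_bot] at hρ₁'
      subst hρ₁'
      rwa [add_zero]
    · intro x hx
      exact ⟨Submodule.mem_sup_left (Submodule.mem_sup_left hx), hDN (hD₁D hx)⟩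
  have hinfrankg' : finrank 𝔽 (range g' ⊓ ker g' : Submodule 𝔽 V) = finrank 𝔽 D₁ := by
    rw [hkerg', hrangeg', ← hNdef, hinfg']
  -- build the idempotent e
  have hRS : R ⊓ S = ⊥ := by rw [inf_comm]; exact hSR
  obtain ⟨Wc, hWc⟩ := Submodule.exists_isCompl (R ⊔ S)
  have hRSrank : finrank 𝔽 (R ⊔ S : Submodule 𝔽 V) = r + s := by
    rw [finrank_sup_of_disjoint hRS, hSrank, ← hrdef]
  have hWcrank : r + s + finrank 𝔽 Wc = nn := by
    have := Submodule.finrank_add_eq_of_isCompl hWc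
    rw [hRSrank] at this
    omega
  obtain ⟨W₁, hW₁Wc, hW₁rank⟩ := exists_le_finrank Wc (t - s) (by omega)
  obtain ⟨W₀, hW₀Wc, hWsup, hWinf⟩ := compl_within hW₁Wc
  have hW₀rank : (t - s) + finrank 𝔽 W₀ = finrank 𝔽 Wc := by
    have h1 := finrank_sup_of_disjoint hWinf
    rw [hWsup, hW₁rank] at h1
    omega
  have hcomplR : IsCompl R (S ⊔ Wc) := isCompl_unshift hWc hRS
  have hcomplS : IsCompl S (R ⊔ Wc) := by
    refine isCompl_unshift ?_ ?_
    · rw [sup_comm]; exact hWc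
    · exact hSR
  have hcomplW₀ : IsCompl W₀ ((R ⊔ S) ⊔ W₁) := (isCompl_shift hWc hWsup hWinf).symm
  set πR := Submodule.projectionOnto R (S ⊔ Wc) hcomplR with hπR
  set πS := Submodule.projectionOnto S (R ⊔ Wc) hcomplS with hπS
  set πW₀ := Submodule.projectionOnto W₀ ((R ⊔ S) ⊔ W₁) hcomplW₀ with hπW₀
  set ee : V →ₗ[𝔽] V :=
    R.subtype ∘ₗ πR + D₂.subtype ∘ₗ φ.symm.toLinearMap ∘ₗ πS + W₀.subtype ∘ₗ πW₀
    with heedef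
  have eeR : ∀ x ∈ R, ee x = x := by
    intro x hx
    have h1 : (πR x : V) = x := by
      have := Submodule.projectionOnto_apply_left hcomplR (⟨x, hx⟩ : R)
      rw [this]
    have h2 : πS x = 0 := Submodule.projectionOnto_apply_of_mem_right hcomplS
      (Submodule.mem_sup_left hx)
    have h3 : πW₀ x = 0 := Submodule.projectionOnto_apply_of_mem_right hcomplW₀
      (Submodule.mem_sup_left (Submodule.mem_sup_left hx))
    simp [heedef, h1, h2, h3]
  have eeS : ∀ (σ : S), ee σ = φ.symm σ := by
    intro σ
    have h1 : πR (σ : V) = 0 := Submodule.projectionOnto_apply_of_mem_right hcomplR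
      (Submodule.mem_sup_left σ.2)
    have h2 : πS (σ : V) = σ := Submodule.projectionOnto_apply_left hcomplS σ
    have h3 : πW₀ (σ : V) = 0 := Submodule.projectionOnto_apply_of_mem_right hcomplW₀
      (Submodule.mem_sup_left (Submodule.mem_sup_right σ.2))
    simp [heedef, h1, h2, h3]
  have eeW₀ : ∀ x ∈ W₀, ee x = x := by
    intro x hx
    have h1 : πR x = 0 := Submodule.projectionOnto_apply_of_mem_right hcomplR
      (Submodule.mem_sup_right (hW₀Wc hx))
    have h2 : πS x = 0 := Submodule.projectionOnto_apply_of_mem_right hcomplS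
      (Submodule.mem_sup_right (hW₀Wc hx))
    have h3 : (πW₀ x : V) = x := by
      have := Submodule.projectionOnto_apply_left hcomplW₀ (⟨x, hx⟩ : W₀)
      rw [this]
    simp [heedef, h1, h2, h3]
  have eeW₁ : ∀ x ∈ W₁, ee x = 0 := by
    intro x hx
    have h1 : πR x = 0 := Submodule.projectionOnto_apply_of_mem_right hcomplR
      (Submodule.mem_sup_right (hW₁Wc hx))
    have h2 : πS x = 0 := Submodule.projectionOnto_apply_of_mem_right hcomplS
      (Submodule.mem_sup_right (hW₁Wc hx))
    have h3 : πW₀ x = 0 := Submodule.projectionOnto_apply_of_mem_right hcomplW₀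
      (Submodule.mem_sup_right hx)
    simp [heedef, h1, h2, h3]
  have eeidem : ee ∘ₗ ee = ee := by
    ext x
    simp only [coe_comp, Function.comp_apply]
    have hx : ee x = (πR x : V) + ((φ.symm (πS x) : D₂) : V) + (πW₀ x : V) := by
      simp [heedef]
    rw [hx, map_add, map_add]
    rw [eeR _ (πR x).2, eeR _ (hDR (hD₂D (φ.symm (πS x)).2)), eeW₀ _ (πW₀ x).2]
  have eerange : range ee = R ⊔ W₀ := by
    apply le_antisymm
    · rintro x ⟨w, rfl⟩
      simp only [heedef, LinearMap.add_apply, coe_comp, Function.comp_apply, coe_subtype]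
      refine Submodule.add_mem _ (Submodule.add_mem _ ?_ ?_) ?_
      · exact Submodule.mem_sup_left (πR w).2
      · exact Submodule.mem_sup_left (hDR (hD₂D (φ.symm (πS w)).2))
      · exact Submodule.mem_sup_right (πW₀ w).2
    · rw [sup_le_iff]
      exact ⟨fun x hx => ⟨x, eeR x hx⟩, fun x hx => ⟨x, eeW₀ x hx⟩⟩
  have hRW₀ : R ⊓ W₀ = ⊥ := by
    rw [eq_bot_iff]
    rintro x ⟨h1, h2⟩
    have : x ∈ (R ⊔ S) ⊓ Wc := ⟨Submodule.mem_sup_left h1, hW₀Wc h2⟩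
    rwa [hWc.inf_eq_bot] at this
  have eekerrank : finrank 𝔽 (ker ee) = t := by
    have h1 := ee.finrank_range_add_finrank_ker
    rw [eerange, finrank_sup_of_disjoint hRW₀, ← hrdef] at h1
    omega
  -- the factorization g = ee ∘ g'
  have hfact : g = ee ∘ₗ g' := by
    ext x
    simp only [coe_comp, Function.comp_apply]
    have hgx : g x ∈ R := LinearMap.mem_range_self g x
    rw [← hR₀D₂sup] at hgx
    obtain ⟨ρ₀, hρ₀, δ, hδ, hxx⟩ := Submodule.mem_sup.1 hgx
    have hg'x : g' x = ρ₀ + (φ ⟨δ, hδ⟩ : V) := by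
      show θ (g x) = _
      rw [← hxx, map_add, θCC ρ₀ (hR₀CC hρ₀), θD₂ ⟨δ, hδ⟩]
    rw [hg'x, map_add, eeR ρ₀ (hR₀R hρ₀)]
    have : ee (φ ⟨δ, hδ⟩ : V) = ((φ.symm (φ ⟨δ, hδ⟩) : D₂) : V) := eeS (φ ⟨δ, hδ⟩)
    rw [this, LinearEquiv.symm_apply_apply, ← hxx]
  refine ⟨ee, g', hfact, eeidem, eekerrank, hkerg', hrankg', ?_⟩
  rw [hinfrankg']
  omega


lemma master : ∀ (k : ℕ) (g : V →ₗ[𝔽] V) (nv : Fin k → ℕ) (m₁ m₂ : ℕ),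
    (finrank 𝔽 (range g) ≤ (∑ i, nv i) +
      (finrank 𝔽 (ker g) - finrank 𝔽 (range g ⊓ ker g : Submodule 𝔽 V))) →
    (∀ i, nv i ≤ finrank 𝔽 (ker g)) →
    m₁ ≤ finrank 𝔽 (ker g) → m₂ ≤ finrank 𝔽 (ker g) →
    finrank 𝔽 V ≤ 2 * m₁ → finrank 𝔽 V ≤ 2 * m₂ →
    ∃ (e : Fin k → Module.End 𝔽 V) (z₁ z₂ : Module.End 𝔽 V),
      g = (List.ofFn e).prod * z₁ * z₂ ∧
      (∀ i, e i * e i = e i ∧ finrank 𝔽 (ker (e i)) = nv i) ∧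
      z₁ * z₁ = 0 ∧ z₂ * z₂ = 0 ∧
      finrank 𝔽 (ker z₁) = m₁ ∧ finrank 𝔽 (ker z₂) = m₂ := by
  intro k
  induction k with
  | zero =>
    intro g nv m₁ m₂ h₁ h₂ hm₁ hm₂ h2m₁ h2m₂
    have hd : finrank 𝔽 (range g ⊓ ker g : Submodule 𝔽 V) ≤ finrank 𝔽 (ker g) :=
      Submodule.finrank_mono inf_le_right
    obtain ⟨z₁, z₂, hfact, hsq1, hsq2, hk1, hk2⟩ :=
      thmB g m₁ m₂ (by simp only [Finset.univ_eq_empty, Finset.sum_empty, zero_add] at h₁; omega)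
        hm₁ hm₂ h2m₁ h2m₂
    refine ⟨Fin.elim0, z₁, z₂, ?_, fun i => i.elim0, hsq1, hsq2, hk1, hk2⟩
    simpa [List.ofFn_zero, Module.End.mul_eq_comp] using hfact
  | succ k ih =>
    intro g nv m₁ m₂ h₁ h₂ hm₁ hm₂ h2m₁ h2m₂
    obtain ⟨e₀, g', hfact, hidem, hkere, hkerg', hrank, hinf⟩ := lemC g (nv 0) (h₂ 0)
    have hdν : finrank 𝔽 (range g ⊓ ker g : Submodule 𝔽 V) ≤ finrank 𝔽 (ker g) :=
      Submodule.finrank_mono inf_le_right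
    have hrν : finrank 𝔽 (range g) ≤ finrank 𝔽 (ker g) := by
      have := g.finrank_range_add_finrank_ker
      omega
    have hkf : finrank 𝔽 (ker g') = finrank 𝔽 (ker g) := by rw [hkerg']
    obtain ⟨e', z₁, z₂, hf', he', hsq1, hsq2, hk1, hk2⟩ :=
      ih g' (fun i => nv (Fin.succ i)) m₁ m₂
        (by
          beta_reduce
          simp only [Fin.sum_univ_succ] at h₁
          omega)
        (fun i => by rw [hkerg']; exact h₂ _)
        (by rwa [hkerg']) (by rwa [hkerg']) h2m₁ h2m₂
    refine ⟨Fin.cons e₀ e', z₁, z₂, ?_, ?_, hsq1, hsq2, hk1, hk2⟩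
    · have hprod : (List.ofFn (Fin.cons e₀ e' : Fin (k+1) → Module.End 𝔽 V)).prod
          = e₀ * (List.ofFn e').prod := by
        rw [List.ofFn_succ]
        simp [Fin.cons_zero, Fin.cons_succ]
      rw [hprod, hfact, hf']
      simp [Module.End.mul_eq_comp, mul_assoc]
      rfl
    · intro i
      refine Fin.cases ?_ ?_ i
      · simpa [Fin.cons_zero, Module.End.mul_eq_comp] using ⟨hidem, hkere⟩
      · intro j
        exact he' j

end Stmt2Aux

/-- Sufficiency: if `r(G) ≤ n₁ + ⋯ + n_k + n₀(G)`, the numbers `n₁, …, n_k, m₁, m₂` are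
all at most `n(G)`, and `m₁, m₂ ≥ n/2`, then `G = E₁⋯E_k Z₁ Z₂` with `Eᵢ` idempotent of
nullity `nᵢ` and `Z₁, Z₂` square-zero of nullities `m₁, m₂`. -/
theorem stmt2 {𝔽 : Type*} [Field 𝔽] {n k : ℕ} (G : Matrix (Fin n) (Fin n) 𝔽)
    (nv : Fin k → ℕ) (m₁ m₂ : ℕ)
    (h₁ : G.rank ≤ (∑ i, nv i) + nZero G)
    (h₂ : ∀ i, nv i ≤ nullity G) (h₂₁ : m₁ ≤ nullity G) (h₂₂ : m₂ ≤ nullity G)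
    (h₃₁ : n ≤ 2 * m₁) (h₃₂ : n ≤ 2 * m₂) :
    ∃ (E : Fin k → Matrix (Fin n) (Fin n) 𝔽) (Z₁ Z₂ : Matrix (Fin n) (Fin n) 𝔽),
      G = (List.ofFn E).prod * Z₁ * Z₂ ∧
      (∀ i, E i * E i = E i ∧ nullity (E i) = nv i) ∧
      Z₁ * Z₁ = 0 ∧ Z₂ * Z₂ = 0 ∧ nullity Z₁ = m₁ ∧ nullity Z₂ = m₂ := by
  classical
  have hdim : Module.finrank 𝔽 (Fin n → 𝔽) = n := by simp
  obtain ⟨e, z₁, z₂, hfact, he, hsq1, hsq2, hk1, hk2⟩ :=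
    Stmt2Aux.master k G.mulVecLin nv m₁ m₂
      (by simpa [Matrix.rank, nullity, nZero] using h₁)
      (fun i => by simpa [nullity] using h₂ i)
      (by simpa [nullity] using h₂₁)
      (by simpa [nullity] using h₂₂)
      (by rwa [hdim]) (by rwa [hdim])
  have key : ∀ f : (Fin n → 𝔽) →ₗ[𝔽] (Fin n → 𝔽),
      (LinearMap.toMatrixAlgEquiv' f).mulVecLin = f := by
    intro f
    have h1 : (LinearMap.toMatrixAlgEquiv' f).mulVecLin
        = Matrix.toLinAlgEquiv' (LinearMap.toMatrixAlgEquiv' f) := rfl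
    rw [h1, ← LinearMap.toMatrixAlgEquiv'_symm, AlgEquiv.symm_apply_apply]
  refine ⟨fun i => LinearMap.toMatrixAlgEquiv' (e i),
    LinearMap.toMatrixAlgEquiv' z₁, LinearMap.toMatrixAlgEquiv' z₂, ?_, ?_, ?_, ?_, ?_, ?_⟩
  · have hG : G = LinearMap.toMatrixAlgEquiv' G.mulVecLin := by
      have h1 : G.mulVecLin = Matrix.toLinAlgEquiv' G := rfl
      rw [h1, ← LinearMap.toMatrixAlgEquiv'_symm, AlgEquiv.apply_symm_apply]
    rw [hG, hfact, _root_.map_mul, _root_.map_mul]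
    congr 1
    congr 1
    rw [map_list_prod]
    congr 1
    rw [List.map_ofFn]
    rfl
  · intro i
    constructor
    · rw [← _root_.map_mul, (he i).1]
    · show Module.finrank 𝔽 (LinearMap.ker
        (LinearMap.toMatrixAlgEquiv' (e i)).mulVecLin) = nv i
      rw [key]
      exact (he i).2
  · rw [← _root_.map_mul, hsq1, map_zero]
  · rw [← _root_.map_mul, hsq2, map_zero]
  · show Module.finrank 𝔽 (LinearMap.ker (LinearMap.toMatrixAlgEquiv' z₁).mulVecLin) = m₁
    rw [key]; exact hk1
  · show Module.finrank 𝔽 (LinearMap.ker (LinearMap.toMatrixAlgEquiv' z₂).mulVecLin) = m₂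
    rw [key]; exact hk2
end

section
/- Let G = H·F where H and F are arbitrary n×n matrices over a field 𝔽. Then dim(R(G) ∩ N(F)) ≥ n(F) − n₀(G). -/
open Matrix

/-- **Lemma 2.** If `G = H F`, then `dim(R(G) ∩ N(F)) ≥ n(F) − n₀(G)`. -/
theorem stmt3 {𝔽 : Type*} [Field 𝔽] {n : ℕ}
    (G H F : Matrix (Fin n) (Fin n) 𝔽) (hG : G = H * F) :
    nullity F - nZero G ≤
      Module.finrank 𝔽
        (LinearMap.range G.mulVecLin ⊓ LinearMap.ker F.mulVecLin :
          Submodule 𝔽 (Fin n → 𝔽)) := by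
  set X : Submodule 𝔽 (Fin n → 𝔽) :=
    LinearMap.range G.mulVecLin ⊓ LinearMap.ker G.mulVecLin with hX
  set Y : Submodule 𝔽 (Fin n → 𝔽) := LinearMap.ker F.mulVecLin with hY
  have hker : Y ≤ LinearMap.ker G.mulVecLin := by
    intro x hx
    rw [hG]
    simp only [LinearMap.mem_ker, Matrix.mulVecLin_mul, LinearMap.comp_apply]
    rw [LinearMap.mem_ker] at hx
    rw [hx]
    simp
  have hXY : X ⊓ Y = LinearMap.range G.mulVecLin ⊓ Y := by
    rw [hX, inf_assoc, inf_eq_right.mpr hker]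
  have hsum := Submodule.finrank_sup_add_finrank_inf_eq X Y
  have hsup : X ⊔ Y ≤ LinearMap.ker G.mulVecLin := sup_le inf_le_right hker
  have hsupdim : Module.finrank 𝔽 (X ⊔ Y : Submodule 𝔽 (Fin n → 𝔽)) ≤
      Module.finrank 𝔽 (LinearMap.ker G.mulVecLin) := Submodule.finrank_mono hsup
  have hXdim : Module.finrank 𝔽 X ≤ Module.finrank 𝔽 (LinearMap.ker G.mulVecLin) :=
    Submodule.finrank_mono inf_le_right
  rw [← hXY]
  unfold nullity nZero nullity
  rw [← hX, ← hY]
  omega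
end

section
/- Let G = H·F where H is an arbitrary n×n matrix over a field 𝔽 and F = Z₁·Z₂ with Z₁² = Z₂² = 0. If R(G) ∩ N(F) = R(G) ∩ R(F) ∩ N(F), then r(G) ≤ n₀(G). -/
open Matrix

/-- **Lemma 3.** If `G = H F` with `F = Z₁ Z₂`, `Z₁² = Z₂² = 0`, and
`R(G) ∩ N(F) = R(G) ∩ R(F) ∩ N(F)`, then `r(G) ≤ n₀(G)`. -/
theorem stmt4 {𝔽 : Type*} [Field 𝔽] {n : ℕ}
    (G H F Z₁ Z₂ : Matrix (Fin n) (Fin n) 𝔽)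
    (hG : G = H * F) (hF : F = Z₁ * Z₂) (hZ₁ : Z₁ * Z₁ = 0) (hZ₂ : Z₂ * Z₂ = 0)
    (hint : LinearMap.range G.mulVecLin ⊓ LinearMap.ker F.mulVecLin =
      LinearMap.range G.mulVecLin ⊓ LinearMap.range F.mulVecLin ⊓
        LinearMap.ker F.mulVecLin) :
    G.rank ≤ nZero G := by
  classical
  set RG := LinearMap.range G.mulVecLin with hRG
  set NG := LinearMap.ker G.mulVecLin with hNG
  set RF := LinearMap.range F.mulVecLin with hRF
  set NF := LinearMap.ker F.mulVecLin with hNF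
  set R2 := LinearMap.range Z₂.mulVecLin with hR2
  set K1 := LinearMap.ker Z₁.mulVecLin with hK1
  set W : Submodule 𝔽 (Fin n → 𝔽) := RF ⊓ NF with hW
  have hGm : G.mulVecLin = H.mulVecLin ∘ₗ F.mulVecLin := by
    rw [hG, Matrix.mulVecLin_mul]
  have hFm : F.mulVecLin = Z₁.mulVecLin ∘ₗ Z₂.mulVecLin := by
    rw [hF, Matrix.mulVecLin_mul]
  -- N(F) ≤ N(G)
  have hNFNG : NF ≤ NG := by
    intro x hx
    rw [hNG, LinearMap.mem_ker, hGm]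
    rw [hNF, LinearMap.mem_ker] at hx
    simp [hx]
  -- R(Z₂) ≤ N(F)
  have hR2NF : R2 ≤ NF := by
    rintro x ⟨y, rfl⟩
    rw [hNF, LinearMap.mem_ker, hFm]
    have : Z₂.mulVecLin (Z₂.mulVecLin y) = 0 := by
      rw [← LinearMap.comp_apply, ← Matrix.mulVecLin_mul, hZ₂]
      simp
    rw [LinearMap.comp_apply, this, map_zero]
  -- R(F) ≤ N(Z₁)
  have hRFK1 : RF ≤ K1 := by
    rintro x ⟨y, rfl⟩
    rw [hK1, LinearMap.mem_ker, hFm]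
    have : Z₁.mulVecLin (Z₁.mulVecLin (Z₂.mulVecLin y)) = 0 := by
      rw [← LinearMap.comp_apply, ← Matrix.mulVecLin_mul, hZ₁]
      simp
    simpa using this
  -- rank-nullity of Z₁ restricted to R(Z₂): dim(K1 ⊓ R2) + dim RF = dim R2
  have hcore : Module.finrank 𝔽 (K1 ⊓ R2 : Submodule 𝔽 (Fin n → 𝔽)) +
      Module.finrank 𝔽 RF = Module.finrank 𝔽 R2 := by
    have h := LinearMap.finrank_range_add_finrank_ker (Z₁.mulVecLin.domRestrict R2)
    have hrange : LinearMap.range (Z₁.mulVecLin.domRestrict R2) = RF := by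
      rw [LinearMap.range_domRestrict, hRF, hFm, LinearMap.range_comp, hR2]
    have hker : Module.finrank 𝔽 (LinearMap.ker (Z₁.mulVecLin.domRestrict R2)) =
        Module.finrank 𝔽 (K1 ⊓ R2 : Submodule 𝔽 (Fin n → 𝔽)) := by
      have hker' : LinearMap.ker (Z₁.mulVecLin.domRestrict R2) =
          Submodule.comap R2.subtype (K1 ⊓ R2) := by
        ext x
        simp only [LinearMap.mem_ker, LinearMap.domRestrict_apply, Submodule.mem_comap,
          Submodule.mem_inf, hK1, LinearMap.mem_ker]
        exact ⟨fun h => ⟨h, x.2⟩, fun h => h.1⟩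
      rw [hker']
      exact (Submodule.comapSubtypeEquivOfLe inf_le_right).finrank_eq
    rw [hrange, hker] at h
    omega
  -- W ⊔ R2 ≤ NF
  have hWR2NF : W ⊔ R2 ≤ NF := sup_le inf_le_right hR2NF
  -- W ⊓ R2 ≤ K1 ⊓ R2
  have hWR2K1 : W ⊓ R2 ≤ K1 ⊓ R2 :=
    inf_le_inf_right R2 (le_trans inf_le_left hRFK1)
  -- dimension bookkeeping
  have e1 : Module.finrank 𝔽 (W ⊔ R2 : Submodule 𝔽 (Fin n → 𝔽)) +
      Module.finrank 𝔽 (W ⊓ R2 : Submodule 𝔽 (Fin n → 𝔽)) =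
      Module.finrank 𝔽 W + Module.finrank 𝔽 R2 :=
    Submodule.finrank_sup_add_finrank_inf_eq W R2
  have e2 : Module.finrank 𝔽 (W ⊔ R2 : Submodule 𝔽 (Fin n → 𝔽)) ≤
      Module.finrank 𝔽 NF := Submodule.finrank_mono hWR2NF
  have e3 : Module.finrank 𝔽 (W ⊓ R2 : Submodule 𝔽 (Fin n → 𝔽)) ≤
      Module.finrank 𝔽 (K1 ⊓ R2 : Submodule 𝔽 (Fin n → 𝔽)) :=
    Submodule.finrank_mono hWR2K1
  -- so dim NF ≥ dim RF + dim W
  have hNFbig : Module.finrank 𝔽 RF + Module.finrank 𝔽 W ≤ Module.finrank 𝔽 NF := by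
    omega
  -- R(G) ⊓ N(F) ≤ W
  have hintW : RG ⊓ NF ≤ W := by
    rw [hint]
    exact inf_le_inf_right NF (inf_le_right)
  have e4 : Module.finrank 𝔽 (RG ⊓ NF : Submodule 𝔽 (Fin n → 𝔽)) ≤
      Module.finrank 𝔽 W := Submodule.finrank_mono hintW
  -- rank G ≤ rank F
  have e5 : Module.finrank 𝔽 RG ≤ Module.finrank 𝔽 RF := by
    have : RG = Submodule.map H.mulVecLin RF := by
      rw [hRG, hGm, LinearMap.range_comp, hRF]
    rw [this]
    exact Submodule.finrank_map_le H.mulVecLin RF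
  -- sup/inf identities for the goal
  have e6 : Module.finrank 𝔽 (RG ⊔ NF : Submodule 𝔽 (Fin n → 𝔽)) +
      Module.finrank 𝔽 (RG ⊓ NF : Submodule 𝔽 (Fin n → 𝔽)) =
      Module.finrank 𝔽 RG + Module.finrank 𝔽 NF :=
    Submodule.finrank_sup_add_finrank_inf_eq RG NF
  have e7 : Module.finrank 𝔽 (RG ⊔ NG : Submodule 𝔽 (Fin n → 𝔽)) +
      Module.finrank 𝔽 (RG ⊓ NG : Submodule 𝔽 (Fin n → 𝔽)) =
      Module.finrank 𝔽 RG + Module.finrank 𝔽 NG :=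
    Submodule.finrank_sup_add_finrank_inf_eq RG NG
  have e8 : Module.finrank 𝔽 (RG ⊔ NF : Submodule 𝔽 (Fin n → 𝔽)) ≤
      Module.finrank 𝔽 (RG ⊔ NG : Submodule 𝔽 (Fin n → 𝔽)) :=
    Submodule.finrank_mono (sup_le_sup_left hNFNG RG)
  -- unfold the goal
  have hrank : G.rank = Module.finrank 𝔽 RG := rfl
  have hnul : nullity G = Module.finrank 𝔽 NG := rfl
  rw [nZero, hnul, hrank, hRG, hNG]
  rw [← hRG, ← hNG]
  apply Nat.le_sub_of_add_le
  omega
end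

section
/- Let G = H·F where H is an arbitrary n×n matrix over a field 𝔽 and F = Z₁·Z₂ with Z₁² = Z₂² = 0. Then r(G) ≤ n₀(G) + r(I − H), where I is the n×n identity matrix. -/
open Matrix

/-- Rank–nullity for a linear map restricted to a submodule. -/
lemma finrank_eq_map_add_inf_ker {𝔽 V : Type*} [Field 𝔽] [AddCommGroup V] [Module 𝔽 V]
    [FiniteDimensional 𝔽 V] (f : V →ₗ[𝔽] V) (p : Submodule 𝔽 V) :
    Module.finrank 𝔽 p =
      Module.finrank 𝔽 (p.map f) +
        Module.finrank 𝔽 (p ⊓ LinearMap.ker f : Submodule 𝔽 V) := by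
  have h := LinearMap.finrank_range_add_finrank_ker (f.domRestrict p)
  rw [LinearMap.range_domRestrict, LinearMap.ker_domRestrict] at h
  rw [← h]
  congr 1
  rw [← Submodule.finrank_map_subtype_eq p ((LinearMap.ker f).comap p.subtype),
    Submodule.map_comap_subtype]

/-- **Proposition 4.** If `G = H F` with `F = Z₁ Z₂` and `Z₁² = Z₂² = 0`, then
`r(G) ≤ n₀(G) + r(I − H)`. -/
theorem stmt5 {𝔽 : Type*} [Field 𝔽] {n : ℕ}
    (G H F Z₁ Z₂ : Matrix (Fin n) (Fin n) 𝔽)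
    (hG : G = H * F) (hF : F = Z₁ * Z₂) (hZ₁ : Z₁ * Z₁ = 0) (hZ₂ : Z₂ * Z₂ = 0) :
    G.rank ≤ nZero G + (1 - H).rank := by
  classical
  have hGr : G = H * Z₁ * Z₂ := by rw [hG, hF, ← mul_assoc]
  set g : (Fin n → 𝔽) →ₗ[𝔽] (Fin n → 𝔽) := G.mulVecLin with hg
  set φ : (Fin n → 𝔽) →ₗ[𝔽] (Fin n → 𝔽) := (H * Z₁).mulVecLin with hφ
  set W : Submodule 𝔽 (Fin n → 𝔽) := LinearMap.range Z₂.mulVecLin with hW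
  set Rg : Submodule 𝔽 (Fin n → 𝔽) := LinearMap.range g with hRg
  set Ng : Submodule 𝔽 (Fin n → 𝔽) := LinearMap.ker g with hNg
  -- `φ(W) = Rg`
  have hmapW : W.map φ = Rg := by
    rw [hW, hφ, hRg, ← LinearMap.range_comp, ← Matrix.mulVecLin_mul, hg, ← hGr]
  -- `W ≤ Ng`
  have hWker : W ≤ Ng := by
    rw [hW, hNg, LinearMap.range_le_ker_iff, hg, ← Matrix.mulVecLin_mul]
    have hGZ : G * Z₂ = 0 := by rw [hGr, mul_assoc, hZ₂, mul_zero]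
    rw [hGZ, Matrix.mulVecLin_zero]
  -- `φ(Rg)` has dimension at most `r(1 - H)`
  have hmapRg : Rg.map φ = LinearMap.range ((H * Z₁ * G).mulVecLin) := by
    rw [Matrix.mulVecLin_mul, LinearMap.range_comp, hφ, hRg, hg]
  have hkey : (H * Z₁ * G).rank ≤ (1 - H).rank := by
    have e1 : H * Z₁ * ((H - 1) * (Z₁ * Z₂)) =
        H * Z₁ * (H * (Z₁ * Z₂)) - H * (Z₁ * Z₁) * Z₂ := by noncomm_ring
    rw [hZ₁, mul_zero, zero_mul, sub_zero] at e1
    have e2 : H * Z₁ * G = H * Z₁ * ((H - 1) * (Z₁ * Z₂)) := by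
      rw [e1, hG, hF, mul_assoc]
    have e3 : H - 1 = (-1 : Matrix (Fin n) (Fin n) 𝔽) * (1 - H) := by noncomm_ring
    calc (H * Z₁ * G).rank = (H * Z₁ * ((H - 1) * (Z₁ * Z₂))).rank := by rw [e2]
      _ ≤ ((H - 1) * (Z₁ * Z₂)).rank := Matrix.rank_mul_le_right _ _
      _ ≤ (H - 1).rank := Matrix.rank_mul_le_left _ _
      _ = ((-1 : Matrix (Fin n) (Fin n) 𝔽) * (1 - H)).rank := by rw [← e3]
      _ ≤ (1 - H).rank := Matrix.rank_mul_le_right _ _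
  have hmapRg_le : Module.finrank 𝔽 (Rg.map φ) ≤ (1 - H).rank := by
    rw [hmapRg]; exact hkey
  -- dimension bookkeeping
  have E1 : Module.finrank 𝔽 W =
      Module.finrank 𝔽 Rg +
        Module.finrank 𝔽 (W ⊓ LinearMap.ker φ : Submodule 𝔽 (Fin n → 𝔽)) := by
    have := finrank_eq_map_add_inf_ker φ W
    rwa [hmapW] at this
  have E2 : Module.finrank 𝔽 (Rg ⊓ W : Submodule 𝔽 (Fin n → 𝔽)) =
      Module.finrank 𝔽 ((Rg ⊓ W : Submodule 𝔽 (Fin n → 𝔽)).map φ) +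
        Module.finrank 𝔽 ((Rg ⊓ W : Submodule 𝔽 (Fin n → 𝔽)) ⊓ LinearMap.ker φ :
          Submodule 𝔽 (Fin n → 𝔽)) :=
    finrank_eq_map_add_inf_ker φ _
  have E2a : Module.finrank 𝔽 ((Rg ⊓ W : Submodule 𝔽 (Fin n → 𝔽)).map φ) ≤ (1 - H).rank :=
    le_trans (Submodule.finrank_mono (Submodule.map_mono inf_le_left)) hmapRg_le
  have E2b : Module.finrank 𝔽 ((Rg ⊓ W : Submodule 𝔽 (Fin n → 𝔽)) ⊓ LinearMap.ker φ :
      Submodule 𝔽 (Fin n → 𝔽)) ≤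
      Module.finrank 𝔽 (W ⊓ LinearMap.ker φ : Submodule 𝔽 (Fin n → 𝔽)) :=
    Submodule.finrank_mono (inf_le_inf_right _ inf_le_right)
  have E3 : Module.finrank 𝔽 (Rg ⊔ W : Submodule 𝔽 (Fin n → 𝔽)) +
      Module.finrank 𝔽 (Rg ⊓ W : Submodule 𝔽 (Fin n → 𝔽)) =
      Module.finrank 𝔽 Rg + Module.finrank 𝔽 W :=
    Submodule.finrank_sup_add_finrank_inf_eq _ _
  have E4 : Module.finrank 𝔽 (Rg ⊔ W : Submodule 𝔽 (Fin n → 𝔽)) ≤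
      Module.finrank 𝔽 (Rg ⊔ Ng : Submodule 𝔽 (Fin n → 𝔽)) :=
    Submodule.finrank_mono (sup_le_sup_left hWker _)
  have E5 : Module.finrank 𝔽 (Rg ⊔ Ng : Submodule 𝔽 (Fin n → 𝔽)) +
      Module.finrank 𝔽 (Rg ⊓ Ng : Submodule 𝔽 (Fin n → 𝔽)) =
      Module.finrank 𝔽 Rg + Module.finrank 𝔽 Ng :=
    Submodule.finrank_sup_add_finrank_inf_eq _ _
  have E6 : Module.finrank 𝔽 (Rg ⊓ Ng : Submodule 𝔽 (Fin n → 𝔽)) ≤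
      Module.finrank 𝔽 Ng :=
    Submodule.finrank_mono inf_le_right
  have hrank : G.rank = Module.finrank 𝔽 Rg := rfl
  have hnul : nullity G = Module.finrank 𝔽 Ng := rfl
  have hnz : nZero G = nullity G -
      Module.finrank 𝔽 (Rg ⊓ Ng : Submodule 𝔽 (Fin n → 𝔽)) := rfl
  rw [hnz, hrank, hnul]
  omega
end

section
/- Let k ≥ 2 and let J_k(0) be the k×k nilpotent Jordan block over a field 𝔽. Then there exist k×k matrices E and F over 𝔽 such that J_k(0) = E·F, N(F) = N(J_k(0)), n₀(F) = 1, E² = E, and n(E) = 1. -/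
open Matrix

/-- The `k × k` nilpotent Jordan block `J_k(0)`: zero diagonal and ones on the
subdiagonal. -/
def jordanBlock (𝔽 : Type*) [Field 𝔽] (k : ℕ) : Matrix (Fin k) (Fin k) 𝔽 :=
  Matrix.of fun i j => if (i : ℕ) = (j : ℕ) + 1 then 1 else 0

set_option maxHeartbeats 1000000 in
/-- **Lemma 5.** For `k ≥ 2`, `J_k(0) = E F` with `N(F) = N(J_k(0))`, `n₀(F) = 1`,
`E² = E`, and `n(E) = 1`. -/
theorem stmt6 {𝔽 : Type*} [Field 𝔽] {k : ℕ} (hk : 2 ≤ k) :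
    ∃ E F : Matrix (Fin k) (Fin k) 𝔽,
      jordanBlock 𝔽 k = E * F ∧
      LinearMap.ker F.mulVecLin = LinearMap.ker (jordanBlock 𝔽 k).mulVecLin ∧
      nZero F = 1 ∧ E * E = E ∧ nullity E = 1 := by
  classical
  set d : Fin k → 𝔽 := fun i => if (i : ℕ) = 0 then 0 else 1 with hd
  set E : Matrix (Fin k) (Fin k) 𝔽 := Matrix.diagonal d with hE
  set F : Matrix (Fin k) (Fin k) 𝔽 :=
    Matrix.of (fun i j => if (i : ℕ) = (j : ℕ) + 1 then 1
      else if (i : ℕ) = 0 ∧ (j : ℕ) = k - 2 then 1 else 0) with hFdef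
  set pen : Fin k := ⟨k - 2, by omega⟩ with hpen
  set lastk : Fin k := ⟨k - 1, by omega⟩ with hlastk
  -- row formula for F
  have hFrow : ∀ (x : Fin k → 𝔽) (i : Fin k), F.mulVec x i =
      if (i : ℕ) = 0 then x pen
      else x ⟨(i : ℕ) - 1, lt_of_le_of_lt (Nat.sub_le _ _) i.isLt⟩ := by
    intro x i
    rcases Nat.eq_zero_or_pos (i : ℕ) with h | h
    · rw [if_pos h]
      have : F.mulVec x i = ∑ j, (if j = pen then x j else 0) := by
        simp only [Matrix.mulVec, dotProduct]
        refine Finset.sum_congr rfl fun j _ => ?_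
        rw [hFdef]
        by_cases hj : j = pen
        · subst hj
          rw [Matrix.of_apply, if_neg (by omega), if_pos ⟨h, by simp [hpen]⟩,
            one_mul, if_pos rfl]
        · have hj' : (j : ℕ) ≠ k - 2 := by
            intro hcon; exact hj (Fin.ext (by simp [hpen, hcon]))
          rw [Matrix.of_apply, if_neg (by omega), if_neg (by tauto), zero_mul,
            if_neg hj]
      rw [this, Finset.sum_ite_eq' _ pen x, if_pos (Finset.mem_univ _)]
    · rw [if_neg (by omega)]
      set t : Fin k := ⟨(i : ℕ) - 1, lt_of_le_of_lt (Nat.sub_le _ _) i.isLt⟩ with ht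
      have : F.mulVec x i = ∑ j, (if j = t then x j else 0) := by
        simp only [Matrix.mulVec, dotProduct]
        refine Finset.sum_congr rfl fun j _ => ?_
        rw [hFdef]
        by_cases hj : j = t
        · subst hj
          rw [Matrix.of_apply, if_pos (by simp [ht]; omega), one_mul, if_pos rfl]
        · have hj' : (i : ℕ) ≠ (j : ℕ) + 1 := by
            intro hcon
            exact hj (Fin.ext (by simp [ht]; omega))
          rw [Matrix.of_apply, if_neg hj', if_neg (by omega), zero_mul, if_neg hj]
      rw [this, Finset.sum_ite_eq' _ t x, if_pos (Finset.mem_univ _)]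
  -- row formula for J
  have hJrow : ∀ (x : Fin k → 𝔽) (i : Fin k), (jordanBlock 𝔽 k).mulVec x i =
      if (i : ℕ) = 0 then 0
      else x ⟨(i : ℕ) - 1, lt_of_le_of_lt (Nat.sub_le _ _) i.isLt⟩ := by
    intro x i
    rcases Nat.eq_zero_or_pos (i : ℕ) with h | h
    · rw [if_pos h]
      have : (jordanBlock 𝔽 k).mulVec x i = ∑ _j : Fin k, (0 : 𝔽) := by
        simp only [Matrix.mulVec, dotProduct]
        refine Finset.sum_congr rfl fun j _ => ?_
        rw [jordanBlock, Matrix.of_apply, if_neg (by omega), zero_mul]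
      rw [this, Finset.sum_const, smul_zero]
    · rw [if_neg (by omega)]
      set t : Fin k := ⟨(i : ℕ) - 1, lt_of_le_of_lt (Nat.sub_le _ _) i.isLt⟩ with ht
      have : (jordanBlock 𝔽 k).mulVec x i = ∑ j, (if j = t then x j else 0) := by
        simp only [Matrix.mulVec, dotProduct]
        refine Finset.sum_congr rfl fun j _ => ?_
        rw [jordanBlock]
        by_cases hj : j = t
        · subst hj
          rw [Matrix.of_apply, if_pos (by simp [ht]; omega), one_mul, if_pos rfl]
        · have hj' : (i : ℕ) ≠ (j : ℕ) + 1 := by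
            intro hcon
            exact hj (Fin.ext (by simp [ht]; omega))
          rw [Matrix.of_apply, if_neg hj', zero_mul, if_neg hj]
      rw [this, Finset.sum_ite_eq' _ t x, if_pos (Finset.mem_univ _)]
  -- kernel characterizations
  have hkerF : ∀ x : Fin k → 𝔽, F.mulVec x = 0 ↔
      ∀ j : Fin k, (j : ℕ) < k - 1 → x j = 0 := by
    intro x
    constructor
    · intro h j hj
      have hi : ((j : ℕ) + 1) < k := by omega
      have := congrFun h ⟨(j : ℕ) + 1, hi⟩
      rw [hFrow, if_neg (by simp)] at this
      simpa using this
    · intro h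
      funext i
      rw [hFrow]
      rcases Nat.eq_zero_or_pos (i : ℕ) with hi | hi
      · rw [if_pos hi]
        exact (h pen (by simp [hpen]; omega)).trans rfl
      · rw [if_neg (by omega)]
        have := i.isLt
        exact (h _ (by simp; omega)).trans rfl
  have hkerJ : ∀ x : Fin k → 𝔽, (jordanBlock 𝔽 k).mulVec x = 0 ↔
      ∀ j : Fin k, (j : ℕ) < k - 1 → x j = 0 := by
    intro x
    constructor
    · intro h j hj
      have hi : ((j : ℕ) + 1) < k := by omega
      have := congrFun h ⟨(j : ℕ) + 1, hi⟩
      rw [hJrow, if_neg (by simp)] at this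
      simpa using this
    · intro h
      funext i
      rw [hJrow]
      rcases Nat.eq_zero_or_pos (i : ℕ) with hi | hi
      · rw [if_pos hi]; rfl
      · rw [if_neg (by omega)]
        have := i.isLt
        exact (h _ (by simp; omega)).trans rfl
  -- ker F as a span
  have hv1 : ((Pi.single lastk (1 : 𝔽)) : Fin k → 𝔽) lastk = 1 := by simp
  have hvne : ((Pi.single lastk (1 : 𝔽)) : Fin k → 𝔽) ≠ 0 := by
    intro h
    have := congrFun h lastk
    rw [hv1] at this
    simp at this
  have hspanF : LinearMap.ker F.mulVecLin = 𝔽 ∙ (Pi.single lastk (1 : 𝔽)) := by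
    apply le_antisymm
    · intro x hx
      rw [LinearMap.mem_ker, Matrix.mulVecLin_apply, hkerF] at hx
      rw [Submodule.mem_span_singleton]
      refine ⟨x lastk, funext fun j => ?_⟩
      by_cases hj : j = lastk
      · subst hj; simp
      · have hj' : (j : ℕ) < k - 1 := by
          have := j.isLt
          have : (j : ℕ) ≠ k - 1 := fun hc => hj (Fin.ext (by simp [hlastk, hc]))
          omega
        rw [hx j hj', Pi.smul_apply, Pi.single_eq_of_ne hj, smul_zero]
    · rw [Submodule.span_singleton_le_iff_mem, LinearMap.mem_ker,
        Matrix.mulVecLin_apply, hkerF]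
      intro j hj
      apply Pi.single_eq_of_ne
      intro hc
      rw [hc] at hj
      simp [hlastk] at hj
  -- range ∩ ker = ⊥ for F
  have hint : (LinearMap.range F.mulVecLin ⊓ LinearMap.ker F.mulVecLin :
      Submodule 𝔽 (Fin k → 𝔽)) = ⊥ := by
    rw [eq_bot_iff]
    rintro y hy
    rw [Submodule.mem_inf] at hy
    obtain ⟨⟨x, rfl⟩, hker⟩ := hy
    rw [LinearMap.mem_ker] at hker
    rw [Matrix.mulVecLin_apply] at *
    rw [hkerF] at hker
    have h0 : F.mulVec x ⟨0, by omega⟩ = 0 := hker _ (by simp; omega)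
    rw [hFrow, if_pos rfl] at h0
    rw [Submodule.mem_bot]
    funext j
    by_cases hj : (j : ℕ) < k - 1
    · exact hker j hj
    · have hjl : j = lastk := Fin.ext (by simp [hlastk]; have := j.isLt; omega)
      subst hjl
      rw [hFrow, if_neg (by simp [hlastk]; omega)]
      convert h0 using 2
      · exact Fin.ext (by simp only [hpen, hlastk, Fin.val_mk]; omega)
      · rfl
  refine ⟨E, F, ?_, ?_, ?_, ?_, ?_⟩
  · -- J = E * F
    ext i j
    simp only [hE, hd, hFdef, jordanBlock, Matrix.diagonal_mul, Matrix.of_apply]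
    by_cases hi : (i : ℕ) = 0
    · rw [if_pos hi, zero_mul, if_neg (by omega)]
    · rw [if_neg hi, one_mul]
      by_cases hij : (i : ℕ) = (j : ℕ) + 1
      · rw [if_pos hij, if_pos hij]
      · rw [if_neg hij, if_neg hij, if_neg (by tauto)]
  · -- ker F = ker J
    ext x
    rw [LinearMap.mem_ker, LinearMap.mem_ker, Matrix.mulVecLin_apply,
      Matrix.mulVecLin_apply, hkerF, hkerJ]
  · -- nZero F = 1
    rw [nZero, nullity, hint, finrank_bot, hspanF, finrank_span_singleton hvne]
  · -- E idempotent
    have hdd : (fun i => d i * d i) = d := by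
      funext i
      by_cases hi : (i : ℕ) = 0 <;> simp [hd, hi]
    rw [hE, Matrix.diagonal_mul_diagonal, hdd]
  · -- nullity E = 1
    have hkerE : LinearMap.ker E.mulVecLin = 𝔽 ∙ (Pi.single (⟨0, by omega⟩ : Fin k) (1 : 𝔽)) := by
      apply le_antisymm
      · intro x hx
        rw [LinearMap.mem_ker, Matrix.mulVecLin_apply] at hx
        rw [Submodule.mem_span_singleton]
        refine ⟨x ⟨0, by omega⟩, funext fun j => ?_⟩
        by_cases hj : j = (⟨0, by omega⟩ : Fin k)
        · subst hj; simp
        · have := congrFun hx j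
          simp only [hE, hd, Matrix.mulVec_diagonal, Pi.zero_apply] at this
          rw [if_neg (fun hc => hj (Fin.ext (by simp [hc]))), one_mul] at this
          rw [this, Pi.smul_apply, Pi.single_eq_of_ne hj, smul_zero]
      · rw [Submodule.span_singleton_le_iff_mem, LinearMap.mem_ker,
          Matrix.mulVecLin_apply]
        funext i
        simp only [hE, hd, Matrix.mulVec_diagonal]
        by_cases hi : (i : ℕ) = 0
        · rw [if_pos hi, zero_mul]; rfl
        · rw [if_neg hi, one_mul,
            Pi.single_eq_of_ne (fun hc => hi (by rw [hc]))]; rfl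
    rw [nullity, hkerE, finrank_span_singleton]
    intro h
    have := congrFun h ⟨0, by omega⟩
    rw [Pi.single_eq_same] at this
    simp at this
end

section
/- Let J = J_{k₁}(0) ⊕ ⋯ ⊕ J_{k_m}(0) be a direct sum (block diagonal matrix) of m nilpotent Jordan blocks over a field 𝔽 with each kᵢ ≥ 2. Then for every pair of natural numbers s, t with 0 ≤ s ≤ t ≤ m, there exist matrices E and F of the same size as J such that J = E·F, E² = E, N(F) = N(J), n₀(F) = s, and n(E) = t. -/
open Matrix

section aux
variable {𝔽 : Type*} [Field 𝔽]

def Pmat (𝔽 : Type*) [Field 𝔽] (k : ℕ) : Matrix (Fin k) (Fin k) 𝔽 :=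
  Matrix.of fun a b => if a = b ∧ (a : ℕ) ≠ 0 then 1 else 0

def Dmat (𝔽 : Type*) [Field 𝔽] (k : ℕ) : Matrix (Fin k) (Fin k) 𝔽 :=
  Matrix.of fun a b => if (a : ℕ) = 0 ∧ (b : ℕ) = k - 2 then 1 else 0

lemma Pmat_mul_Pmat (k : ℕ) : Pmat 𝔽 k * Pmat 𝔽 k = Pmat 𝔽 k := by
  ext a b
  simp only [Pmat, Matrix.mul_apply, Matrix.of_apply, ite_and, ite_mul, one_mul, zero_mul]
  rw [Finset.sum_eq_single a] <;> aesop

lemma Pmat_mul_jordan (k : ℕ) : Pmat 𝔽 k * jordanBlock 𝔽 k = jordanBlock 𝔽 k := by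
  ext a b
  simp only [Pmat, jordanBlock, Matrix.mul_apply, Matrix.of_apply, ite_and, ite_mul, one_mul,
    zero_mul]
  rw [Finset.sum_eq_single a] <;> aesop

lemma Pmat_mul_Dmat (k : ℕ) : Pmat 𝔽 k * Dmat 𝔽 k = 0 := by
  ext a b
  simp only [Pmat, Dmat, Matrix.mul_apply, Matrix.of_apply, ite_and, ite_mul, one_mul,
    zero_mul, Matrix.zero_apply]
  rw [Finset.sum_eq_zero]
  aesop

lemma jordan_mulVec (k : ℕ) (v : Fin k → 𝔽) (a : Fin k) :
    (jordanBlock 𝔽 k).mulVec v a =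
      if h : (a : ℕ) ≠ 0 then v ⟨(a : ℕ) - 1, Nat.lt_of_le_of_lt (Nat.sub_le _ _) a.isLt⟩ else 0 := by
  classical
  unfold Matrix.mulVec dotProduct jordanBlock
  by_cases h : (a : ℕ) ≠ 0
  · rw [dif_pos h, Finset.sum_eq_single (⟨(a:ℕ)-1, Nat.lt_of_le_of_lt (Nat.sub_le _ _) a.isLt⟩ : Fin k)]
    · simp; omega
    · intro b _ hb
      simp only [Matrix.of_apply, ite_mul, one_mul, zero_mul, ite_eq_right_iff]
      intro hab; exfalso; apply hb; apply Fin.ext; simp; omega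
    · simp
  · rw [dif_neg h, Finset.sum_eq_zero]
    intro b _
    simp only [Matrix.of_apply, ite_mul, one_mul, zero_mul, ite_eq_right_iff]
    intro hab; omega

lemma Pmat_mulVec (k : ℕ) (v : Fin k → 𝔽) (a : Fin k) :
    (Pmat 𝔽 k).mulVec v a = if (a : ℕ) = 0 then 0 else v a := by
  classical
  unfold Matrix.mulVec dotProduct Pmat
  by_cases h : (a : ℕ) = 0
  · rw [if_pos h, Finset.sum_eq_zero]; aesop
  · rw [if_neg h, Finset.sum_eq_single a] <;> aesop

lemma Dmat_mulVec (k : ℕ) (hk : 2 ≤ k) (v : Fin k → 𝔽) (a : Fin k) :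
    (Dmat 𝔽 k).mulVec v a = if (a : ℕ) = 0 then v ⟨k - 2, by omega⟩ else 0 := by
  classical
  unfold Matrix.mulVec dotProduct Dmat
  by_cases h : (a : ℕ) = 0
  · rw [if_pos h, Finset.sum_eq_single (⟨k-2, by omega⟩ : Fin k)]
    · simp [h]
    · intro b _ hb
      simp only [Matrix.of_apply, ite_mul, one_mul, zero_mul, ite_eq_right_iff]
      rintro ⟨-, hb2⟩; exfalso; apply hb; apply Fin.ext; simp [hb2]
    · simp
  · rw [if_neg h, Finset.sum_eq_zero]; aesop

lemma blockDiagonal'_mulVec {m : ℕ} {κ : Fin m → ℕ}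
    (M : ∀ i, Matrix (Fin (κ i)) (Fin (κ i)) 𝔽) (x : ((i : Fin m) × Fin (κ i)) → 𝔽)
    (i : Fin m) (a : Fin (κ i)) :
    (Matrix.blockDiagonal' M).mulVec x ⟨i, a⟩ = (M i).mulVec (fun b => x ⟨i, b⟩) a := by
  classical
  unfold Matrix.mulVec dotProduct
  rw [show (Finset.univ : Finset ((i : Fin m) × Fin (κ i))) = Finset.univ.sigma fun _ => Finset.univ from (Finset.univ_sigma_univ).symm, Finset.sum_sigma]
  rw [Finset.sum_eq_single i]
  · congr 1; ext b; simp only [Matrix.blockDiagonal'_apply_eq]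
  · intro j _ hj
    apply Finset.sum_eq_zero
    intro b _
    simp only [Matrix.blockDiagonal'_apply_ne _ _ _ (Ne.symm hj), zero_mul]
  · simp

end aux

section phi
variable {𝔽 : Type*} [Field 𝔽] {m : ℕ} (κ : Fin m → ℕ)

def phiMap (P : Fin m → Prop) [DecidablePred P] (g : ∀ i, Fin (κ i)) :
    ({i : Fin m // P i} → 𝔽) →ₗ[𝔽] (((i : Fin m) × Fin (κ i)) → 𝔽) where
  toFun c := fun p => if h : P p.1 ∧ p.2 = g p.1 then c ⟨p.1, h.1⟩ else 0
  map_add' c d := by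
    funext p; by_cases h : P p.1 ∧ p.2 = g p.1 <;> simp [h]
  map_smul' r c := by
    funext p; by_cases h : P p.1 ∧ p.2 = g p.1 <;> simp [h]

lemma phiMap_inj (P : Fin m → Prop) [DecidablePred P] (g : ∀ i, Fin (κ i)) :
    Function.Injective (phiMap (𝔽 := 𝔽) κ P g) := by
  intro c d h
  funext ⟨i, hi⟩
  have h2 := congrFun h ⟨i, g i⟩
  simpa [phiMap, hi] using h2

lemma finrank_range_phiMap (P : Fin m → Prop) [DecidablePred P] (g : ∀ i, Fin (κ i)) :
    Module.finrank 𝔽 (LinearMap.range (phiMap (𝔽 := 𝔽) κ P g)) = Fintype.card {i // P i} := by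
  rw [LinearMap.finrank_range_of_inj (phiMap_inj κ P g)]
  simp [Module.finrank_pi]

lemma mem_range_phiMap (P : Fin m → Prop) [DecidablePred P] (g : ∀ i, Fin (κ i))
    (y : ((i : Fin m) × Fin (κ i)) → 𝔽) :
    y ∈ LinearMap.range (phiMap (𝔽 := 𝔽) κ P g) ↔
      ∀ p : (i : Fin m) × Fin (κ i), (¬ P p.1 ∨ p.2 ≠ g p.1) → y p = 0 := by
  constructor
  · rintro ⟨c, rfl⟩ p hp
    have : ¬ (P p.1 ∧ p.2 = g p.1) := by tauto
    simp [phiMap, this]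
  · intro h
    refine ⟨fun i => y ⟨i.1, g i.1⟩, ?_⟩
    funext p
    by_cases hp : P p.1 ∧ p.2 = g p.1
    · obtain ⟨i, a⟩ := p
      obtain ⟨hp1, hp2⟩ := hp
      simp only at hp1 hp2
      subst hp2
      simp [phiMap, hp1]
    · simp only [phiMap, LinearMap.coe_mk, AddHom.coe_mk, dif_neg hp]
      exact (h p (by tauto)).symm

end phi

lemma card_subtype_lt {m t : ℕ} (htm : t ≤ m) :
    Fintype.card {i : Fin m // (i : ℕ) < t} = t := by
  rw [Fintype.card_congr
    (⟨fun x => ⟨x.1, x.2⟩, fun y => ⟨⟨y.1, lt_of_lt_of_le y.2 htm⟩, y.2⟩,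
      fun x => by apply Subtype.ext; apply Fin.ext; rfl,
      fun y => by apply Fin.ext; rfl⟩ :
      {i : Fin m // (i : ℕ) < t} ≃ Fin t)]
  exact Fintype.card_fin t

lemma card_subtype_le {m s : ℕ} (hsm : s ≤ m) :
    Fintype.card {i : Fin m // s ≤ (i : ℕ)} = m - s := by
  rw [Fintype.card_congr
    (⟨fun x => ⟨x.1 - s, by have := x.1.isLt; omega⟩,
      fun y => ⟨⟨y.1 + s, by have := y.isLt; omega⟩, by simp⟩,
      fun x => by apply Subtype.ext; apply Fin.ext; have := x.2; simp; omega,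
      fun y => by apply Fin.ext; simp⟩ :
      {i : Fin m // s ≤ (i : ℕ)} ≃ Fin (m - s))]
  exact Fintype.card_fin _

lemma card_subtype_true {m : ℕ} :
    Fintype.card {i : Fin m // True} = m := by
  rw [Fintype.card_congr (Equiv.subtypeUnivEquiv (fun _ => trivial))]
  exact Fintype.card_fin m
/-- **Corollary 6.** Let `J = J_{k₁}(0) ⊕ ⋯ ⊕ J_{k_m}(0)` with each `kᵢ ≥ 2`.
For all `0 ≤ s ≤ t ≤ m` there are `E, F` with `J = E F`, `E² = E`, `N(F) = N(J)`,
`n₀(F) = s`, and `n(E) = t`. -/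
theorem stmt7 {𝔽 : Type*} [Field 𝔽] {m : ℕ} (κ : Fin m → ℕ) (hκ : ∀ i, 2 ≤ κ i)
    (s t : ℕ) (hst : s ≤ t) (htm : t ≤ m) :
    ∃ E F : Matrix ((i : Fin m) × Fin (κ i)) ((i : Fin m) × Fin (κ i)) 𝔽,
      Matrix.blockDiagonal' (fun i => jordanBlock 𝔽 (κ i)) = E * F ∧
      E * E = E ∧
      LinearMap.ker F.mulVecLin =
        LinearMap.ker (Matrix.blockDiagonal' (fun i => jordanBlock 𝔽 (κ i))).mulVecLin ∧
      nZero F = s ∧ nullity E = t := by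
  classical
  set Eblk : ∀ i : Fin m, Matrix (Fin (κ i)) (Fin (κ i)) 𝔽 :=
    fun i => if (i : ℕ) < t then Pmat 𝔽 (κ i) else 1 with hEblk
  set Fblk : ∀ i : Fin m, Matrix (Fin (κ i)) (Fin (κ i)) 𝔽 :=
    fun i => if (i : ℕ) < s then jordanBlock 𝔽 (κ i) + Dmat 𝔽 (κ i) else jordanBlock 𝔽 (κ i)
    with hFblk
  set E : Matrix ((i : Fin m) × Fin (κ i)) ((i : Fin m) × Fin (κ i)) 𝔽 :=
    Matrix.blockDiagonal' Eblk with hE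
  set F : Matrix ((i : Fin m) × Fin (κ i)) ((i : Fin m) × Fin (κ i)) 𝔽 :=
    Matrix.blockDiagonal' Fblk with hF
  have hblkEF : ∀ i, Eblk i * Fblk i = jordanBlock 𝔽 (κ i) := by
    intro i
    by_cases h1 : (i : ℕ) < s
    · rw [hEblk, hFblk]
      simp only [if_pos h1, if_pos (lt_of_lt_of_le h1 hst)]
      rw [mul_add, Pmat_mul_jordan, Pmat_mul_Dmat, add_zero]
    · by_cases h2 : (i : ℕ) < t
      · rw [hEblk, hFblk]
        simp only [if_pos h2, if_neg h1]
        rw [Pmat_mul_jordan]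
      · rw [hEblk, hFblk]
        simp only [if_neg h1, if_neg h2]
        rw [one_mul]
  have hEF : Matrix.blockDiagonal' (fun i => jordanBlock 𝔽 (κ i)) = E * F := by
    rw [hE, hF, ← Matrix.blockDiagonal'_mul]
    exact congrArg _ (funext fun i => (hblkEF i).symm)
  have hEE : E * E = E := by
    rw [hE, ← Matrix.blockDiagonal'_mul]
    refine congrArg _ (funext fun i => ?_)
    by_cases h2 : (i : ℕ) < t
    · rw [hEblk]; simp only [if_pos h2]; exact Pmat_mul_Pmat _
    · rw [hEblk]; simp only [if_neg h2]; exact one_mul 1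
  -- characterization of the kernel of J
  have hkerJ : ∀ x : ((i : Fin m) × Fin (κ i)) → 𝔽,
      (Matrix.blockDiagonal' (fun i => jordanBlock 𝔽 (κ i))).mulVec x = 0 ↔
        ∀ (i : Fin m) (b : Fin (κ i)), (b : ℕ) + 1 < κ i → x ⟨i, b⟩ = 0 := by
    intro x
    constructor
    · intro h i b hb
      have h2 := congrFun h ⟨i, ⟨(b : ℕ) + 1, hb⟩⟩
      rw [blockDiagonal'_mulVec, jordan_mulVec] at h2
      rw [dif_pos (by simp)] at h2
      simpa using h2
    · intro h
      funext p
      obtain ⟨i, a⟩ := p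
      rw [Pi.zero_apply, blockDiagonal'_mulVec, jordan_mulVec]
      split
      · next ha => exact h i _ (by simp; omega)
      · rfl
  -- characterization of the kernel of F
  have hkerF : ∀ x : ((i : Fin m) × Fin (κ i)) → 𝔽,
      F.mulVec x = 0 ↔
        ∀ (i : Fin m) (b : Fin (κ i)), (b : ℕ) + 1 < κ i → x ⟨i, b⟩ = 0 := by
    intro x
    constructor
    · intro h
      rw [← hkerJ]
      rw [hEF, ← Matrix.mulVec_mulVec, h, Matrix.mulVec_zero]
    · intro h
      funext p
      obtain ⟨i, a⟩ := p
      rw [Pi.zero_apply, hF, blockDiagonal'_mulVec, hFblk]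
      by_cases h1 : (i : ℕ) < s
      · simp only [if_pos h1]
        rw [Matrix.add_mulVec, Pi.add_apply, jordan_mulVec, Dmat_mulVec _ (hκ i)]
        have e1 : (if (a : ℕ) = 0 then x ⟨i, ⟨κ i - 2, by have := hκ i; omega⟩⟩ else 0) = 0 := by
          split
          · exact h i _ (by have := hκ i; simp; omega)
          · rfl
        rw [e1, add_zero]
        split
        · next ha => exact h i _ (by simp; omega)
        · rfl
      · simp only [if_neg h1]
        rw [jordan_mulVec]
        split
        · next ha => exact h i _ (by simp; omega)
        · rfl
  have hker : LinearMap.ker F.mulVecLin =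
      LinearMap.ker (Matrix.blockDiagonal' (fun i => jordanBlock 𝔽 (κ i))).mulVecLin := by
    ext x
    simp only [LinearMap.mem_ker, Matrix.mulVecLin_apply]
    rw [hkerF, hkerJ]
  -- the "last coordinate of each block" map
  have hgl : ∀ i : Fin m, κ i - 1 < κ i := fun i => by have := hκ i; omega
  set gl : ∀ i : Fin m, Fin (κ i) := fun i => ⟨κ i - 1, hgl i⟩ with hgldef
  -- kernel of F as a range
  have hkerF_range : LinearMap.ker F.mulVecLin =
      LinearMap.range (phiMap (𝔽 := 𝔽) κ (fun _ => True) gl) := by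
    ext x
    rw [LinearMap.mem_ker, Matrix.mulVecLin_apply, hkerF, mem_range_phiMap]
    constructor
    · rintro h ⟨i, b⟩ hb
      rcases hb with hb | hb
      · exact absurd trivial hb
      · refine h i b ?_
        have hb2 : (b : ℕ) ≠ κ i - 1 := by
          intro hc; exact hb (Fin.ext hc)
        have := b.isLt; have := hκ i; omega
    · intro h i b hb
      refine h ⟨i, b⟩ (Or.inr ?_)
      intro hc
      have : (b : ℕ) = κ i - 1 := congrArg Fin.val hc
      omega
  have hnF : nullity F = m := by
    rw [nullity, hkerF_range, finrank_range_phiMap, card_subtype_true]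
  -- range ∩ kernel of F
  have hrk : (LinearMap.range F.mulVecLin ⊓ LinearMap.ker F.mulVecLin :
      Submodule 𝔽 (((i : Fin m) × Fin (κ i)) → 𝔽)) =
      LinearMap.range (phiMap (𝔽 := 𝔽) κ (fun i => s ≤ (i : ℕ)) gl) := by
    ext y
    rw [Submodule.mem_inf, mem_range_phiMap]
    simp only [LinearMap.mem_range, LinearMap.mem_ker, Matrix.mulVecLin_apply]
    constructor
    · rintro ⟨⟨x, hx⟩, hy⟩
      rw [hkerF] at hy
      rintro ⟨i, b⟩ hb
      by_cases hbg : b = gl i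
      · subst hbg
        rcases hb with hb | hb
        · -- i < s : the type C block, last coordinate not in range
          push_neg at hb
          have hki := hκ i
          -- coordinate (i, 0) of y
          have h0 : y ⟨i, ⟨0, by omega⟩⟩ = 0 := hy i _ (by simp; omega)
          have hx0 := congrFun hx ⟨i, ⟨0, by omega⟩⟩
          rw [hF, blockDiagonal'_mulVec, hFblk] at hx0
          simp only [if_pos hb] at hx0
          rw [Matrix.add_mulVec, Pi.add_apply, jordan_mulVec, Dmat_mulVec _ hki] at hx0
          rw [dif_neg (by simp), if_pos (by simp)] at hx0
          have hxk2' : x ⟨i, ⟨κ i - 2, by omega⟩⟩ = 0 := by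
            rw [zero_add] at hx0
            exact hx0.trans h0
          have hxk2 : ∀ b : Fin (κ i), (b : ℕ) = κ i - 2 → x ⟨i, b⟩ = 0 := by
            intro b hb2
            have hbeq : b = ⟨κ i - 2, by omega⟩ := Fin.ext hb2
            rw [hbeq]; exact hxk2'
          -- coordinate (i, κ i - 1) of y
          show y ⟨i, ⟨κ i - 1, hgl i⟩⟩ = 0
          have hxl := congrFun hx ⟨i, ⟨κ i - 1, hgl i⟩⟩
          rw [hF, blockDiagonal'_mulVec, hFblk] at hxl
          simp only [if_pos hb] at hxl
          rw [Matrix.add_mulVec, Pi.add_apply, jordan_mulVec, Dmat_mulVec _ hki] at hxl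
          rw [dif_pos (by simp; omega), if_neg (by simp; omega)] at hxl
          rw [← hxl, add_zero]
          exact hxk2 _ (by simp; omega)
        · exact absurd rfl hb
      · refine hy i b ?_
        have : (b : ℕ) ≠ κ i - 1 := by
          intro hc; exact hbg (Fin.ext (by simp [hgldef, hc]))
        have := b.isLt; have := hκ i; omega
    · intro h
      constructor
      · -- y is in the range of F
        refine ⟨fun p => if hp : s ≤ (p.1 : ℕ) ∧ (p.2 : ℕ) = κ p.1 - 2
            then y ⟨p.1, gl p.1⟩ else 0, ?_⟩
        funext p
        obtain ⟨i, a⟩ := p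
        rw [hF, blockDiagonal'_mulVec, hFblk]
        by_cases h1 : (i : ℕ) < s
        · simp only [if_pos h1]
          have hz : (fun b => if hp : s ≤ ((⟨i, b⟩ : (j : Fin m) × Fin (κ j)).1 : ℕ) ∧
              ((⟨i, b⟩ : (j : Fin m) × Fin (κ j)).2 : ℕ) = κ (⟨i, b⟩ : (j : Fin m) × Fin (κ j)).1 - 2
              then y ⟨(⟨i, b⟩ : (j : Fin m) × Fin (κ j)).1, gl (⟨i, b⟩ : (j : Fin m) × Fin (κ j)).1⟩ else 0)
              = (0 : Fin (κ i) → 𝔽) := by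
            funext b
            rw [Pi.zero_apply, dif_neg]
            intro hs
            exact (Nat.not_le.mpr h1) hs.1
          rw [hz, Matrix.mulVec_zero]
          exact (h ⟨i, a⟩ (Or.inl (Nat.not_le.mpr h1))).symm
        · simp only [if_neg h1]
          push_neg at h1
          have hki := hκ i
          rw [jordan_mulVec]
          by_cases ha : (a : ℕ) = 0
          · rw [dif_neg (by omega)]
            refine (h ⟨i, a⟩ (Or.inr ?_)).symm
            intro hc
            have : (a : ℕ) = κ i - 1 := congrArg Fin.val hc
            omega
          · rw [dif_pos ha]
            by_cases hal : (a : ℕ) = κ i - 1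
            · rw [dif_pos (by simp; constructor; exact h1; omega)]
              have : (⟨i, a⟩ : (j : Fin m) × Fin (κ j)) = ⟨i, gl i⟩ := by
                congr 1; apply Fin.ext; simp [hgldef, hal]
              rw [this]
            · rw [dif_neg (by simp; intro _; omega)]
              refine (h ⟨i, a⟩ (Or.inr ?_)).symm
              intro hc
              exact hal (congrArg Fin.val hc)
      · -- y is in the kernel of F
        rw [hkerF]
        intro i b hb
        refine h ⟨i, b⟩ (Or.inr ?_)
        intro hc
        have : (b : ℕ) = κ i - 1 := congrArg Fin.val hc
        omega
  have hrkrank : Module.finrank 𝔽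
      (LinearMap.range F.mulVecLin ⊓ LinearMap.ker F.mulVecLin :
        Submodule 𝔽 (((i : Fin m) × Fin (κ i)) → 𝔽)) = m - s := by
    rw [hrk, finrank_range_phiMap, card_subtype_le (le_trans hst htm)]
  have hnZero : nZero F = s := by
    rw [nZero, hnF, hrkrank]
    omega
  -- kernel of E
  have hkerE : ∀ x : ((i : Fin m) × Fin (κ i)) → 𝔽,
      E.mulVec x = 0 ↔
        ∀ p : (i : Fin m) × Fin (κ i), (¬ ((p.1 : ℕ) < t) ∨ (p.2 : ℕ) ≠ 0) → x p = 0 := by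
    intro x
    constructor
    · rintro h ⟨i, a⟩ hp
      have h2 := congrFun h ⟨i, a⟩
      rw [hE, blockDiagonal'_mulVec, hEblk, Pi.zero_apply] at h2
      by_cases h1 : (i : ℕ) < t
      · simp only [if_pos h1] at h2
        rw [Pmat_mulVec] at h2
        rcases hp with hp | hp
        · exact absurd h1 hp
        · rwa [if_neg hp] at h2
      · simp only [if_neg h1] at h2
        rwa [Matrix.one_mulVec] at h2
    · intro h
      funext p
      obtain ⟨i, a⟩ := p
      rw [Pi.zero_apply, hE, blockDiagonal'_mulVec, hEblk]
      by_cases h1 : (i : ℕ) < t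
      · simp only [if_pos h1]
        rw [Pmat_mulVec]
        split
        · rfl
        · next ha => exact h ⟨i, a⟩ (Or.inr ha)
      · simp only [if_neg h1]
        rw [Matrix.one_mulVec]
        exact h ⟨i, a⟩ (Or.inl h1)
  have hg0 : ∀ i : Fin m, 0 < κ i := fun i => lt_of_lt_of_le two_pos (hκ i)
  have hkerE_range : LinearMap.ker E.mulVecLin =
      LinearMap.range (phiMap (𝔽 := 𝔽) κ (fun i => (i : ℕ) < t) (fun i => ⟨0, hg0 i⟩)) := by
    ext x
    rw [LinearMap.mem_ker, Matrix.mulVecLin_apply, hkerE, mem_range_phiMap]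
    constructor
    · rintro h ⟨i, b⟩ hb
      refine h ⟨i, b⟩ ?_
      rcases hb with hb | hb
      · exact Or.inl hb
      · refine Or.inr ?_
        intro hc
        exact hb (Fin.ext hc)
    · rintro h ⟨i, b⟩ hb
      refine h ⟨i, b⟩ ?_
      rcases hb with hb | hb
      · exact Or.inl hb
      · refine Or.inr ?_
        intro hc
        exact hb (congrArg Fin.val hc)
  have hnE : nullity E = t := by
    rw [nullity, hkerE_range, finrank_range_phiMap, card_subtype_lt htm]
  exact ⟨E, F, hEF, hEE, hker, hnZero, hnE⟩
end

section
/- Let G be an n×n matrix over a field 𝔽, let n₁, …, n_k, m₁ be natural numbers, let c₁, …, c_k be nonzero scalars in 𝔽, and set c = (c₁⋯c_k)⁻¹. The following are equivalent: (1) There exist idempotent n×n matrices E₁, …, E_k with n(Eᵢ) = nᵢ for each i and a square-zero n×n matrix Z₁ with n(Z₁) = m₁ such that G = (c₁E₁)⋯(c_kE_k)·Z₁. (2) n₁, …, n_k, m₁ ≤ n(G), m₁ ≥ n/2, and dim(R(G) + N(G)) ≤ n₁ + ⋯ + n_k + m₁. -/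
set_option synthInstance.maxHeartbeats 1000000
set_option maxHeartbeats 1000000
set_option linter.unusedSectionVars false
set_option linter.unusedVariables false

open Matrix

namespace Stmt9Aux


variable {𝔽 : Type*} [Field 𝔽] {n : ℕ}

lemma nullity_add_rank (A : Matrix (Fin n) (Fin n) 𝔽) : nullity A + A.rank = n := by
  rw [nullity, Matrix.rank, add_comm]
  have := LinearMap.finrank_range_add_finrank_ker A.mulVecLin
  simpa [Module.finrank_pi] using this

lemma rank_smul_of_ne_zero (c : 𝔽) (hc : c ≠ 0) (A : Matrix (Fin n) (Fin n) 𝔽) :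
    (c • A).rank = A.rank := by
  refine le_antisymm ?_ ?_
  · rw [show c • A = (c • (1 : Matrix (Fin n) (Fin n) 𝔽)) * A by
      rw [smul_mul_assoc, one_mul]]
    exact Matrix.rank_mul_le_right _ _
  · conv_lhs => rw [show A = (c⁻¹ • (1 : Matrix (Fin n) (Fin n) 𝔽)) * (c • A) by
      rw [smul_mul_assoc, one_mul, smul_smul, inv_mul_cancel₀ hc, one_smul]]
    exact Matrix.rank_mul_le_right _ _

lemma rank_unit_mul (P A : Matrix (Fin n) (Fin n) 𝔽) (Pi : Matrix (Fin n) (Fin n) 𝔽)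
    (hPi : Pi * P = 1) : (P * A).rank = A.rank := by
  refine le_antisymm (Matrix.rank_mul_le_right _ _) ?_
  conv_lhs => rw [show A = Pi * (P * A) by rw [← Matrix.mul_assoc, hPi, Matrix.one_mul]]
  exact Matrix.rank_mul_le_right _ _

lemma rank_mul_unit (A P : Matrix (Fin n) (Fin n) 𝔽) (Pi : Matrix (Fin n) (Fin n) 𝔽)
    (hPi : P * Pi = 1) : (A * P).rank = A.rank := by
  refine le_antisymm (Matrix.rank_mul_le_left _ _) ?_
  conv_lhs => rw [show A = (A * P) * Pi by rw [Matrix.mul_assoc, hPi, Matrix.mul_one]]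
  exact Matrix.rank_mul_le_left _ _

lemma nullity_eq (A : Matrix (Fin n) (Fin n) 𝔽) : nullity A = n - A.rank := by
  have := nullity_add_rank A; omega

lemma nullity_smul_of_ne_zero (c : 𝔽) (hc : c ≠ 0) (A : Matrix (Fin n) (Fin n) 𝔽) :
    nullity (c • A) = nullity A := by
  rw [nullity_eq, nullity_eq, rank_smul_of_ne_zero c hc]

lemma nullity_conj (P A Pi : Matrix (Fin n) (Fin n) 𝔽)
    (h1 : P * Pi = 1) (h2 : Pi * P = 1) : nullity (P * A * Pi) = nullity A := by
  rw [nullity_eq, nullity_eq, rank_mul_unit _ _ P h2, rank_unit_mul _ _ Pi h2]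

lemma rank_add_le (A B : Matrix (Fin n) (Fin n) 𝔽) : (A + B).rank ≤ A.rank + B.rank := by
  have hle : LinearMap.range (A + B).mulVecLin ≤
      LinearMap.range A.mulVecLin ⊔ LinearMap.range B.mulVecLin := by
    rintro x ⟨v, rfl⟩
    rw [Matrix.mulVecLin_add]
    exact Submodule.add_mem_sup (LinearMap.mem_range_self _ v) (LinearMap.mem_range_self _ v)
  have h2 := Submodule.finrank_sup_add_finrank_inf_eq
    (LinearMap.range A.mulVecLin) (LinearMap.range B.mulVecLin)
  have h3 := Submodule.finrank_mono hle
  rw [Matrix.rank, Matrix.rank, Matrix.rank]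
  omega


-- extract one factor from a product of a list of matrices
lemma prod_factor {k : ℕ} (f : Fin k → Matrix (Fin n) (Fin n) 𝔽) (i : Fin k) :
    ∃ A B : Matrix (Fin n) (Fin n) 𝔽, (List.ofFn f).prod = A * f i * B := by
  induction k with
  | zero => exact i.elim0
  | succ m ih =>
    rw [List.ofFn_succ, List.prod_cons]
    rcases i with ⟨iv, hi⟩
    rcases Nat.eq_zero_or_pos iv with rfl | hpos
    · exact ⟨1, (List.ofFn fun i => f i.succ).prod, by simp [Matrix.mul_assoc]⟩
    · obtain ⟨A, B, hAB⟩ := ih (fun i => f i.succ) ⟨iv - 1, by omega⟩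
      refine ⟨f 0 * A, B, ?_⟩
      have hidx : (⟨iv, hi⟩ : Fin (m+1)) = Fin.succ ⟨iv - 1, by omega⟩ := by
        ext; simp; omega
      rw [hidx, hAB]
      noncomm_ring

lemma prod_smul {k : ℕ} (c : Fin k → 𝔽) (f : Fin k → Matrix (Fin n) (Fin n) 𝔽) :
    (List.ofFn fun i => c i • f i).prod = (∏ i, c i) • (List.ofFn f).prod := by
  induction k with
  | zero => simp
  | succ m ih =>
    rw [List.ofFn_succ, List.ofFn_succ, List.prod_cons, List.prod_cons]
    show c 0 • f 0 * (List.ofFn fun i => c i.succ • f i.succ).prod = _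
    rw [ih (fun i => c i.succ) (fun i => f i.succ), Fin.prod_univ_succ,
      Matrix.mul_smul, Matrix.smul_mul, smul_smul, mul_comm (∏ i : Fin m, c i.succ) (c 0)]

lemma prod_conj {k : ℕ} (Q Qi : Matrix (Fin n) (Fin n) 𝔽) (hQ : Q * Qi = 1) (hQ' : Qi * Q = 1)
    (f : Fin k → Matrix (Fin n) (Fin n) 𝔽) :
    (List.ofFn fun i => Q * f i * Qi).prod = Q * (List.ofFn f).prod * Qi := by
  induction k with
  | zero => simp [hQ]
  | succ m ih =>
    rw [List.ofFn_succ, List.ofFn_succ, List.prod_cons, List.prod_cons]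
    show Q * f 0 * Qi * (List.ofFn fun i => Q * f i.succ * Qi).prod = _
    rw [ih (fun i => f i.succ)]
    simp only [Matrix.mul_assoc]
    rw [← Matrix.mul_assoc Qi Q, hQ', Matrix.one_mul]

lemma prod_diagonal {k : ℕ} (g : Fin k → Fin n → 𝔽) :
    (List.ofFn fun i => diagonal (g i)).prod = diagonal (fun j => ∏ i, g i j) := by
  induction k with
  | zero =>
    rw [List.ofFn_zero, List.prod_nil]
    rw [show (fun j => ∏ i : Fin 0, g i j) = fun _ => (1:𝔽) by funext j; simp]
    exact Matrix.diagonal_one.symm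
  | succ m ih =>
    rw [List.ofFn_succ, List.prod_cons]
    show diagonal (g 0) * (List.ofFn fun i => diagonal (g i.succ)).prod = _
    rw [ih (fun i => g i.succ), Matrix.diagonal_mul_diagonal]
    have h : (fun j => ∏ i : Fin (m+1), g i j) = fun j => g 0 j * ∏ i : Fin m, g i.succ j := by
      funext j; rw [Fin.prod_univ_succ]
    rw [h]

-- range of (1 - E) for idempotent E equals kernel of E
lemma rank_one_sub_idem (E : Matrix (Fin n) (Fin n) 𝔽) (hE : E * E = E) :
    ((1 : Matrix (Fin n) (Fin n) 𝔽) - E).rank = nullity E := by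
  have hset : LinearMap.range ((1:Matrix (Fin n) (Fin n) 𝔽) - E).mulVecLin
      = LinearMap.ker E.mulVecLin := by
    apply le_antisymm
    · rintro x ⟨v, rfl⟩
      simp only [LinearMap.mem_ker, Matrix.mulVecLin_apply]
      have h0 : E * (1 - E) = 0 := by rw [Matrix.mul_sub, Matrix.mul_one, hE, sub_self]
      rw [Matrix.mulVec_mulVec, h0, Matrix.zero_mulVec]
    · intro x hx
      simp only [LinearMap.mem_ker, Matrix.mulVecLin_apply] at hx
      refine ⟨x, ?_⟩
      simp [Matrix.mulVecLin_apply, Matrix.sub_mulVec, hx, Matrix.one_mulVec]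
  rw [Matrix.rank, nullity, hset]

lemma rank_sub_smul_one_idem (c : 𝔽) (hc : c ≠ 0) (E : Matrix (Fin n) (Fin n) 𝔽)
    (hE : E * E = E) : (c • E - c • 1).rank = nullity E := by
  have h : c • E - c • (1 : Matrix (Fin n) (Fin n) 𝔽) = (-c) • (1 - E) := by
    rw [neg_smul, smul_sub, neg_sub]
  rw [h, rank_smul_of_ne_zero _ (by simpa using hc), rank_one_sub_idem _ hE]

-- key bound: rank (∏ cᵢEᵢ - (∏cᵢ)•1) ≤ ∑ nullity Eᵢ
lemma rank_prod_sub_le {k : ℕ} (c : Fin k → 𝔽) (hc : ∀ i, c i ≠ 0)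
    (E : Fin k → Matrix (Fin n) (Fin n) 𝔽) (hE : ∀ i, E i * E i = E i) :
    ((List.ofFn fun i => c i • E i).prod - (∏ i, c i) • 1).rank ≤ ∑ i, nullity (E i) := by
  induction k with
  | zero => simp
  | succ m ih =>
    have hIH := ih (fun i : Fin m => c i.succ) (fun i => hc _) (fun i : Fin m => E i.succ)
      (fun i => hE _)
    rw [List.ofFn_succ, List.prod_cons, Fin.prod_univ_succ, Fin.sum_univ_succ]
    set Q := (List.ofFn fun i : Fin m => c i.succ • E i.succ).prod with hQdef
    have hexp : c 0 • E 0 * Q - (c 0 * ∏ i : Fin m, c i.succ) • (1 : Matrix (Fin n) (Fin n) 𝔽)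
        = (c 0 • E 0 - c 0 • 1) * Q + c 0 • (Q - (∏ i : Fin m, c i.succ) • 1) := by
      simp only [Matrix.sub_mul, smul_mul_assoc, Matrix.one_mul, smul_sub, smul_smul]
      abel
    have h1 : ((c 0 • E 0 - c 0 • 1) * Q).rank ≤ nullity (E 0) := by
      rw [← rank_sub_smul_one_idem (c 0) (hc 0) (E 0) (hE 0)]
      exact Matrix.rank_mul_le_left _ _
    have h2 : (c 0 • (Q - (∏ i : Fin m, c i.succ) • 1)).rank
        ≤ ∑ i : Fin m, nullity (E i.succ) := by
      rw [rank_smul_of_ne_zero _ (hc 0)]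
      exact hIH
    calc (c 0 • E 0 * Q - (c 0 * ∏ i : Fin m, c i.succ) • (1:Matrix (Fin n) (Fin n) 𝔽)).rank
        = ((c 0 • E 0 - c 0 • 1) * Q + c 0 • (Q - (∏ i : Fin m, c i.succ) • 1)).rank := by rw [hexp]
      _ ≤ _ + _ := rank_add_le _ _
      _ ≤ nullity (E 0) + ∑ i : Fin m, nullity (E i.succ) := add_le_add h1 h2



variable {𝔽 : Type*} [Field 𝔽] {n : ℕ}

/-- matrix whose `j`-th column is `e_v` if `τ j = some v`, else `0`. -/
def colMat (τ : ℕ → Option ℕ) : Matrix (Fin n) (Fin n) 𝔽 :=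
  Matrix.of fun i j => if τ j.val = some i.val then 1 else 0

lemma colMat_congr {τ₁ τ₂ : ℕ → Option ℕ} (h : ∀ j < n, τ₁ j = τ₂ j) :
    (colMat τ₁ : Matrix (Fin n) (Fin n) 𝔽) = colMat τ₂ := by
  ext i j; simp only [colMat, Matrix.of_apply, h j.val j.isLt]

lemma colMat_none {τ : ℕ → Option ℕ} (h : ∀ j < n, τ j = none) :
    (colMat τ : Matrix (Fin n) (Fin n) 𝔽) = 0 := by
  ext i j; simp [colMat, h j.val j.isLt]

lemma one_eq_colMat : (1 : Matrix (Fin n) (Fin n) 𝔽) = colMat (fun j => some j) := by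
  ext i j
  simp only [colMat, Matrix.of_apply, Matrix.one_apply, Option.some_inj]
  by_cases h : i = j
  · subst h; simp
  · rw [if_neg h, if_neg (by intro hv; exact h (Fin.ext hv.symm))]

lemma diagonal_eq_colMat (p : ℕ → Prop) [DecidablePred p] :
    diagonal (fun j : Fin n => if p j.val then (0:𝔽) else 1)
      = colMat (fun j => if p j then none else some j) := by
  ext i j
  simp only [colMat, Matrix.of_apply]
  rcases eq_or_ne i j with rfl | hne
  · simp only [Matrix.diagonal_apply_eq]
    by_cases h : p i.val <;> simp [h]
  · rw [Matrix.diagonal_apply_ne _ hne]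
    by_cases h : p j.val
    · simp [h]
    · simp only [h, if_false]
      rw [if_neg]
      intro hv
      exact hne (Fin.ext (Option.some_inj.mp hv).symm)

lemma colMat_mul {τ₁ τ₂ : ℕ → Option ℕ} (hbd : ∀ j < n, ∀ v, τ₂ j = some v → v < n) :
    (colMat τ₁ : Matrix (Fin n) (Fin n) 𝔽) * colMat τ₂
      = colMat (fun j => (τ₂ j).bind τ₁) := by
  ext i j
  rw [Matrix.mul_apply]
  rcases hcase : τ₂ j.val with _ | v
  · simp [colMat, hcase]
  · have hv : v < n := hbd j.val j.isLt v hcase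
    rw [Finset.sum_eq_single ⟨v, hv⟩]
    · simp [colMat, hcase]
    · intro b _ hb
      have h2 : (colMat τ₂ : Matrix (Fin n) (Fin n) 𝔽) b j = 0 := by
        simp only [colMat, Matrix.of_apply, hcase]
        rw [if_neg]
        intro hsome
        exact hb (Fin.ext (Option.some_inj.mp hsome).symm)
      rw [h2, mul_zero]
    · intro h; exact absurd (Finset.mem_univ _) h

lemma mul_colMat_apply_some (M : Matrix (Fin n) (Fin n) 𝔽) {τ : ℕ → Option ℕ} (i j : Fin n)
    {v : ℕ} (hv : v < n) (h : τ j.val = some v) :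
    (M * (colMat τ : Matrix (Fin n) (Fin n) 𝔽)) i j = M i ⟨v, hv⟩ := by
  rw [Matrix.mul_apply, Finset.sum_eq_single ⟨v, hv⟩]
  · simp [colMat, h]
  · intro b _ hb
    have h2 : (colMat τ : Matrix (Fin n) (Fin n) 𝔽) b j = 0 := by
      simp only [colMat, Matrix.of_apply, h]
      rw [if_neg]
      intro hsome
      exact hb (Fin.ext (Option.some_inj.mp hsome).symm)
    rw [h2, mul_zero]
  · intro h; exact absurd (Finset.mem_univ _) h

lemma mul_colMat_apply_none (M : Matrix (Fin n) (Fin n) 𝔽) {τ : ℕ → Option ℕ} (i j : Fin n)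
    (h : τ j.val = none) : (M * (colMat τ : Matrix (Fin n) (Fin n) 𝔽)) i j = 0 := by
  rw [Matrix.mul_apply]
  apply Finset.sum_eq_zero
  intro b _
  simp [colMat, h]

lemma rank_colMat {τ : ℕ → Option ℕ} (hbd : ∀ j < n, ∀ v, τ j = some v → v < n)
    (hinj : ∀ j₁ < n, ∀ j₂ < n, ∀ v, τ j₁ = some v → τ j₂ = some v → j₁ = j₂) :
    (colMat τ : Matrix (Fin n) (Fin n) 𝔽).rank
      = (Finset.univ.filter (fun j : Fin n => (τ j.val).isSome)).card := by
  classical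
  set s := Finset.univ.filter (fun j : Fin n => (τ j.val).isSome) with hs
  -- target of each support column
  have htgt : ∀ j : ↥s, ∃ v : Fin n, τ (j:Fin n).val = some v.val := by
    rintro ⟨j, hj⟩
    rw [hs, Finset.mem_filter] at hj
    rcases Option.isSome_iff_exists.mp hj.2 with ⟨v, hv⟩
    exact ⟨⟨v, hbd j.val j.isLt v hv⟩, hv⟩
  choose tgt htgtspec using htgt
  have htinj : Function.Injective tgt := by
    rintro ⟨j₁, h₁⟩ ⟨j₂, h₂⟩ heq
    apply Subtype.ext
    apply Fin.ext
    exact hinj _ j₁.isLt _ j₂.isLt (tgt ⟨j₁,h₁⟩).val (htgtspec ⟨j₁,h₁⟩)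
      (by rw [heq]; exact htgtspec ⟨j₂,h₂⟩)
  have hli : LinearIndependent 𝔽 (fun j : ↥s => (Pi.single (tgt j) (1:𝔽) : Fin n → 𝔽)) := by
    have h1 : LinearIndependent 𝔽 (fun i : Fin n => Pi.single i (1:𝔽)) := by
      have h0 := (Pi.basisFun 𝔽 (Fin n)).linearIndependent
      have : ⇑(Pi.basisFun 𝔽 (Fin n)) = fun i : Fin n => (Pi.single i (1:𝔽) : Fin n → 𝔽) := by
        funext i; exact Pi.basisFun_apply 𝔽 (Fin n) i
      rwa [this] at h0
    exact h1.comp tgt htinj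
  have hspan : LinearMap.range (colMat τ : Matrix (Fin n) (Fin n) 𝔽).mulVecLin
      = Submodule.span 𝔽 (Set.range (fun j : ↥s => (Pi.single (tgt j) (1:𝔽) : Fin n → 𝔽))) := by
    rw [Matrix.range_mulVecLin]
    apply le_antisymm <;> rw [Submodule.span_le]
    · rintro x ⟨j, rfl⟩
      rcases hcol : τ j.val with _ | v
      · have : (colMat τ : Matrix (Fin n) (Fin n) 𝔽)ᵀ j = 0 := by
          funext i; simp [colMat, Matrix.transpose_apply, hcol]
        change (colMat τ : Matrix (Fin n) (Fin n) 𝔽)ᵀ j ∈ _; rw [this]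
        exact Submodule.zero_mem _
      · have hjs : j ∈ s := by
          rw [hs, Finset.mem_filter]
          exact ⟨Finset.mem_univ _, by rw [hcol]; rfl⟩
        have hcoleq : (colMat τ : Matrix (Fin n) (Fin n) 𝔽)ᵀ j
            = (Pi.single (tgt ⟨j, hjs⟩) (1:𝔽) : Fin n → 𝔽) := by
          funext i
          have hv := htgtspec ⟨j, hjs⟩
          simp only [colMat, Matrix.transpose_apply, Matrix.of_apply]
          rcases eq_or_ne i (tgt ⟨j, hjs⟩) with rfl | hne
          · rw [hv, if_pos rfl, Pi.single_eq_same]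
          · rw [Pi.single_eq_of_ne hne, hv, if_neg]
            intro hsome
            exact hne (Fin.ext (Option.some_inj.mp hsome).symm)
        change (colMat τ : Matrix (Fin n) (Fin n) 𝔽)ᵀ j ∈ _; rw [hcoleq]
        exact Submodule.subset_span ⟨⟨j, hjs⟩, rfl⟩
    · rintro x ⟨j, rfl⟩
      apply Submodule.subset_span
      refine ⟨(j : Fin n), ?_⟩
      have hv := htgtspec j
      funext i
      simp only [colMat, Matrix.col_apply, Matrix.transpose_apply, Matrix.of_apply, hv]
      rcases eq_or_ne (tgt j) i with rfl | hne
      · rw [Pi.single_eq_same, if_pos rfl]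
      · rw [Pi.single_eq_of_ne (Ne.symm hne), if_neg]
        intro hsome
        exact hne (Fin.ext (Option.some_inj.mp hsome))
  rw [Matrix.rank, hspan, finrank_span_eq_card hli, Fintype.card_coe]

lemma nullity_colMat {τ : ℕ → Option ℕ} (hbd : ∀ j < n, ∀ v, τ j = some v → v < n)
    (hinj : ∀ j₁ < n, ∀ j₂ < n, ∀ v, τ j₁ = some v → τ j₂ = some v → j₁ = j₂) :
    nullity (colMat τ : Matrix (Fin n) (Fin n) 𝔽)
      = (Finset.univ.filter (fun j : Fin n => τ j.val = none)).card := by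
  classical
  have h1 : nullity (colMat τ : Matrix (Fin n) (Fin n) 𝔽)
      + (colMat τ : Matrix (Fin n) (Fin n) 𝔽).rank = n := by
    rw [nullity, Matrix.rank, add_comm]
    have := LinearMap.finrank_range_add_finrank_ker
      (colMat τ : Matrix (Fin n) (Fin n) 𝔽).mulVecLin
    simpa [Module.finrank_pi] using this
  rw [rank_colMat hbd hinj] at h1
  have h2 := Finset.card_filter_add_card_filter_not
    (s := (Finset.univ : Finset (Fin n))) (p := fun j : Fin n => (τ j.val).isSome)
  have hneg : (Finset.univ.filter (fun j : Fin n => ¬ ((τ j.val).isSome = true)))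
      = Finset.univ.filter (fun j : Fin n => τ j.val = none) := by
    apply Finset.filter_congr
    intro j _
    simp [Option.not_isSome_iff_eq_none]
  rw [hneg] at h2
  simp only [Finset.card_univ, Fintype.card_fin] at h2
  omega

-- cardinality of an interval of Fin n
lemma card_filter_interval (a b : ℕ) (hb : b ≤ n) :
    (Finset.univ.filter (fun j : Fin n => a ≤ j.val ∧ j.val < b)).card = b - a := by
  classical
  rw [← Nat.card_Ico a b]
  apply Finset.card_bij (fun j _ => j.val)
  · intro j hj
    rw [Finset.mem_filter] at hj
    rw [Finset.mem_Ico]; exact hj.2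
  · intro j₁ h₁ j₂ h₂ h
    exact Fin.ext h
  · intro v hv
    rw [Finset.mem_Ico] at hv
    exact ⟨⟨v, by omega⟩, Finset.mem_filter.mpr ⟨Finset.mem_univ _, hv⟩, rfl⟩


lemma finrank_comap_le (g : (Fin n → 𝔽) →ₗ[𝔽] (Fin n → 𝔽)) (S : Submodule 𝔽 (Fin n → 𝔽)) :
    Module.finrank 𝔽 (Submodule.comap g S)
      ≤ Module.finrank 𝔽 (LinearMap.ker g) + Module.finrank 𝔽 S := by
  classical
  have h1 := LinearMap.finrank_range_add_finrank_ker (g.domRestrict (Submodule.comap g S))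
  have hrle : Module.finrank 𝔽 (LinearMap.range (g.domRestrict (Submodule.comap g S)))
      ≤ Module.finrank 𝔽 S := by
    apply Submodule.finrank_mono
    rintro y ⟨⟨x, hxW⟩, rfl⟩
    exact hxW
  have hkle : Module.finrank 𝔽 (LinearMap.ker (g.domRestrict (Submodule.comap g S)))
      ≤ Module.finrank 𝔽 (LinearMap.ker g) := by
    have hmem : ∀ x : LinearMap.ker (g.domRestrict (Submodule.comap g S)),
        ((x : ↥(Submodule.comap g S)) : Fin n → 𝔽) ∈ LinearMap.ker g := by
      rintro ⟨⟨x, hxW⟩, hxk⟩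
      exact hxk
    let φ : LinearMap.ker (g.domRestrict (Submodule.comap g S)) →ₗ[𝔽] LinearMap.ker g :=
      { toFun := fun x => ⟨((x : ↥(Submodule.comap g S)) : Fin n → 𝔽), hmem x⟩
        map_add' := by intro a b; rfl
        map_smul' := by intro a b; rfl }
    apply LinearMap.finrank_le_finrank_of_injective (f := φ)
    intro a b hab
    have h5 := congrArg (fun z : ↥(LinearMap.ker g) => (z : Fin n → 𝔽)) hab
    exact Subtype.ext (Subtype.ext h5)
  omega

-- the main forward inequality
lemma forward_sup_le (P Z : Matrix (Fin n) (Fin n) 𝔽) (γ : 𝔽) (hγ : γ ≠ 0)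
    (hZ : Z * Z = 0) :
    Module.finrank 𝔽
        (LinearMap.range (P * Z).mulVecLin ⊔ LinearMap.ker (P * Z).mulVecLin :
          Submodule 𝔽 (Fin n → 𝔽))
      ≤ (P - γ • 1).rank + nullity Z := by
  classical
  set D := P - γ • (1 : Matrix (Fin n) (Fin n) 𝔽) with hD
  set RD := LinearMap.range D.mulVecLin with hRD
  set RZ := LinearMap.range Z.mulVecLin with hRZ
  set W := Submodule.comap Z.mulVecLin (RD ⊓ RZ) with hW
  have hPd : P = γ • 1 + D := by rw [hD]; abel
  have hZRZ : ∀ u ∈ RZ, Z.mulVec u = 0 := by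
    rintro u ⟨w, rfl⟩
    rw [Matrix.mulVecLin_apply, Matrix.mulVec_mulVec, hZ, Matrix.zero_mulVec]
  have hRZ_le_W : RZ ≤ W := by
    intro u hu
    rw [hW, Submodule.mem_comap, Matrix.mulVecLin_apply, hZRZ u hu]
    exact Submodule.zero_mem _
  -- P*Z mulVec decomposition
  have hGv : ∀ v, (P * Z).mulVec v = γ • (Z.mulVec v) + D.mulVec (Z.mulVec v) := by
    intro v
    rw [← Matrix.mulVec_mulVec, hPd, Matrix.add_mulVec, Matrix.smul_mulVec,
      Matrix.one_mulVec]
  have hrange : LinearMap.range (P * Z).mulVecLin ≤ W ⊔ RD := by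
    rintro x ⟨v, rfl⟩
    rw [Matrix.mulVecLin_apply, hGv v]
    apply Submodule.add_mem_sup
    · exact Submodule.smul_mem _ _ (hRZ_le_W (LinearMap.mem_range_self _ v))
    · exact LinearMap.mem_range_self _ _
  have hker : LinearMap.ker (P * Z).mulVecLin ≤ W := by
    intro x hx
    rw [LinearMap.mem_ker, Matrix.mulVecLin_apply, hGv x] at hx
    have hZx : Z.mulVec x = (-γ⁻¹) • (D.mulVec (Z.mulVec x)) := by
      have h3 : γ • Z.mulVec x = -(D.mulVec (Z.mulVec x)) := eq_neg_of_add_eq_zero_left hx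
      have h4 : Z.mulVec x = γ⁻¹ • -(D.mulVec (Z.mulVec x)) := by
        rw [← h3, smul_smul, inv_mul_cancel₀ hγ, one_smul]
      conv_lhs => rw [h4]
      rw [smul_neg, neg_smul]
    rw [hW, Submodule.mem_comap]
    constructor
    · rw [Matrix.mulVecLin_apply, hZx]
      exact Submodule.smul_mem _ _ (LinearMap.mem_range_self D.mulVecLin (Z.mulVec x))
    · exact LinearMap.mem_range_self _ x
  have hsuple : LinearMap.range (P * Z).mulVecLin ⊔ LinearMap.ker (P * Z).mulVecLin
      ≤ W ⊔ RD := sup_le hrange (le_trans hker le_sup_left)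
  -- finrank W ≤ nullity Z + finrank (RD ⊓ RZ)
  have hWbound : Module.finrank 𝔽 W ≤ nullity Z + Module.finrank 𝔽 (RD ⊓ RZ : Submodule 𝔽 (Fin n → 𝔽)) := by
    rw [hW, nullity]
    exact finrank_comap_le _ _
  have hWRD := Submodule.finrank_sup_add_finrank_inf_eq W RD
  have hinf_ge : Module.finrank 𝔽 (RD ⊓ RZ : Submodule 𝔽 (Fin n → 𝔽))
      ≤ Module.finrank 𝔽 (W ⊓ RD : Submodule 𝔽 (Fin n → 𝔽)) := by
    apply Submodule.finrank_mono
    exact le_inf (le_trans inf_le_right hRZ_le_W) inf_le_left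
  have hmono := Submodule.finrank_mono hsuple
  have : (D.rank : ℕ) = Module.finrank 𝔽 RD := rfl
  omega


lemma exists_compl_within {p q : Submodule 𝔽 (Fin n → 𝔽)} (hpq : p ≤ q) :
    ∃ w : Submodule 𝔽 (Fin n → 𝔽), w ≤ q ∧ p ⊓ w = ⊥ ∧ p ⊔ w = q := by
  obtain ⟨t, ht⟩ := Submodule.exists_isCompl (Submodule.comap q.subtype p)
  have hinj : Function.Injective q.subtype := Submodule.injective_subtype q
  have hmapc : (Submodule.comap q.subtype p).map q.subtype = p := by
    rw [Submodule.map_comap_subtype, inf_eq_right.mpr hpq]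
  refine ⟨t.map q.subtype, Submodule.map_subtype_le q t, ?_, ?_⟩
  · rw [← hmapc, ← Submodule.map_inf _ hinj, ht.inf_eq_bot, Submodule.map_bot]
  · rw [← hmapc, ← Submodule.map_sup, ht.sup_eq_top, Submodule.map_top,
      Submodule.range_subtype]

lemma subspace_le_span {S : Submodule 𝔽 (Fin n → 𝔽)} {ι : Type*} (b : Module.Basis ι 𝔽 ↥S)
    {T : Set (Fin n → 𝔽)} (hT : ∀ i, (b i : Fin n → 𝔽) ∈ T) :
    S ≤ Submodule.span 𝔽 T := by
  have h1 : S = Submodule.span 𝔽 (Set.range (fun i => (b i : Fin n → 𝔽))) := by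
    conv_lhs => rw [← Submodule.map_subtype_top S]
    rw [← b.span_eq, Submodule.map_span]
    congr 1
    rw [← Set.range_comp]
    rfl
  rw [h1]
  exact Submodule.span_mono (Set.range_subset_iff.mpr hT)

lemma subspace_le {S M : Submodule 𝔽 (Fin n → 𝔽)} {ι : Type*} (b : Module.Basis ι 𝔽 ↥S)
    (hT : ∀ i, (b i : Fin n → 𝔽) ∈ M) : S ≤ M := by
  have h := subspace_le_span b (T := (M : Set (Fin n → 𝔽))) hT
  rwa [Submodule.span_eq] at h

lemma exists_bases (G : Matrix (Fin n) (Fin n) 𝔽) :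
    ∃ (Pa Pb Pai Pbi : Matrix (Fin n) (Fin n) 𝔽),
      Pa * Pai = 1 ∧ Pai * Pa = 1 ∧ Pb * Pbi = 1 ∧ Pbi * Pb = 1 ∧
      (∀ i j : Fin n, j.val < nullity G → Pa i j = Pb i j) ∧
      G * Pa = Pb * colMat (fun j => if j < nullity G then none
        else if j < nullity G + Module.finrank 𝔽
            (LinearMap.range G.mulVecLin ⊓ LinearMap.ker G.mulVecLin :
              Submodule 𝔽 (Fin n → 𝔽))
          then some (j - nullity G) else some j) := by
  classical
  set RR := LinearMap.range G.mulVecLin with hRRdef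
  set NN := LinearMap.ker G.mulVecLin with hNNdef
  set d := Module.finrank 𝔽 (RR ⊓ NN : Submodule 𝔽 (Fin n → 𝔽)) with hd
  have hν : nullity G = Module.finrank 𝔽 NN := rfl
  set ν := nullity G with hνdef
  set r := Module.finrank 𝔽 RR with hr
  have hrν : r + ν = n := by
    rw [hr, hν]
    have := LinearMap.finrank_range_add_finrank_ker G.mulVecLin
    simpa [Module.finrank_pi] using this
  have hdr : d ≤ r := Submodule.finrank_mono inf_le_left
  have hdν : d ≤ ν := by rw [hν]; exact Submodule.finrank_mono inf_le_right
  -- complements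
  obtain ⟨W, hWle, hWinf, hWsup⟩ := exists_compl_within (inf_le_right : RR ⊓ NN ≤ NN)
  obtain ⟨Y, hYle, hYinf, hYsup⟩ := exists_compl_within (inf_le_left : RR ⊓ NN ≤ RR)
  obtain ⟨Zc, hZcCompl⟩ := Submodule.exists_isCompl (RR ⊔ NN)
  have hWd : Module.finrank 𝔽 W = ν - d := by
    have h1 := Submodule.finrank_sup_add_finrank_inf_eq (RR ⊓ NN) W
    rw [hWsup, hWinf, finrank_bot] at h1
    rw [hν] at *
    omega
  have hYd : Module.finrank 𝔽 Y = r - d := by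
    have h1 := Submodule.finrank_sup_add_finrank_inf_eq (RR ⊓ NN) Y
    rw [hYsup, hYinf, finrank_bot] at h1
    omega
  have hRN : Module.finrank 𝔽 (RR ⊔ NN : Submodule 𝔽 (Fin n → 𝔽)) = r + ν - d := by
    have h1 := Submodule.finrank_sup_add_finrank_inf_eq RR NN
    rw [← hd, ← hr, ← hν] at h1
    omega
  have hZcd : Module.finrank 𝔽 Zc = d := by
    have h1 := Submodule.finrank_sup_add_finrank_inf_eq (RR ⊔ NN) Zc
    rw [hZcCompl.sup_eq_top, hZcCompl.inf_eq_bot, finrank_bot, finrank_top] at h1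
    rw [hRN] at h1
    simp only [Module.finrank_pi, Fintype.card_fin] at h1
    omega
  -- bases of the pieces
  let bI : Module.Basis (Fin d) 𝔽 ↥(RR ⊓ NN) := Module.finBasis 𝔽 ↥(RR ⊓ NN)
  let bW : Module.Basis (Fin (ν - d)) 𝔽 ↥W := (Module.finBasis 𝔽 ↥W).reindex (finCongr hWd)
  let bY : Module.Basis (Fin (r - d)) 𝔽 ↥Y := (Module.finBasis 𝔽 ↥Y).reindex (finCongr hYd)
  let bZc : Module.Basis (Fin d) 𝔽 ↥Zc := (Module.finBasis 𝔽 ↥Zc).reindex (finCongr hZcd)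
  -- vector families
  let uf : ℕ → (Fin n → 𝔽) := fun i => if h : i < d then (bI ⟨i, h⟩ : Fin n → 𝔽) else 0
  let wf : ℕ → (Fin n → 𝔽) := fun i => if h : i < ν - d then (bW ⟨i, h⟩ : Fin n → 𝔽) else 0
  let yf : ℕ → (Fin n → 𝔽) := fun i => if h : i < r - d then (bY ⟨i, h⟩ : Fin n → 𝔽) else 0
  let zf : ℕ → (Fin n → 𝔽) := fun i => if h : i < d then (bZc ⟨i, h⟩ : Fin n → 𝔽) else 0
  have hufmem : ∀ i, uf i ∈ RR ⊓ NN := by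
    intro i; simp only [uf]; split
    · exact (bI _).2
    · exact Submodule.zero_mem _
  have hwfmem : ∀ i, wf i ∈ W := by
    intro i; simp only [wf]; split
    · exact (bW _).2
    · exact Submodule.zero_mem _
  have hyfmem : ∀ i, yf i ∈ Y := by
    intro i; simp only [yf]; split
    · exact (bY _).2
    · exact Submodule.zero_mem _
  have hzfmem : ∀ i, zf i ∈ Zc := by
    intro i; simp only [zf]; split
    · exact (bZc _).2
    · exact Submodule.zero_mem _
  -- preimages
  have hufRR : ∀ i, uf i ∈ RR := fun i => (hufmem i).1
  have hyfRR : ∀ i, yf i ∈ Y := hyfmem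
  have hqex : ∀ i : ℕ, ∃ x, G.mulVecLin x = uf i := fun i => (hufRR i)
  have hpex : ∀ i : ℕ, ∃ x, G.mulVecLin x = yf i := fun i => hYle (hyfmem i)
  let qf : ℕ → (Fin n → 𝔽) := fun i => Classical.choose (hqex i)
  let pf : ℕ → (Fin n → 𝔽) := fun i => Classical.choose (hpex i)
  have hqf : ∀ i, G.mulVecLin (qf i) = uf i := fun i => Classical.choose_spec (hqex i)
  have hpf : ∀ i, G.mulVecLin (pf i) = yf i := fun i => Classical.choose_spec (hpex i)
  -- the two families
  let βf : Fin n → (Fin n → 𝔽) := fun j =>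
    if j.val < d then uf j.val
    else if j.val < ν then wf (j.val - d)
    else if j.val < ν + d then zf (j.val - ν)
    else yf (j.val - ν - d)
  let αf : Fin n → (Fin n → 𝔽) := fun j =>
    if j.val < d then uf j.val
    else if j.val < ν then wf (j.val - d)
    else if j.val < ν + d then qf (j.val - ν)
    else pf (j.val - ν - d)
  -- span facts
  have hdn : d ≤ n := le_trans hdν (by omega)
  have hνn : ν ≤ n := by omega
  have hspanβ : ⊤ ≤ Submodule.span 𝔽 (Set.range βf) := by
    have hIle : RR ⊓ NN ≤ Submodule.span 𝔽 (Set.range βf) :=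
      subspace_le_span bI (fun i => ⟨⟨i.val, lt_of_lt_of_le i.isLt hdn⟩, by
        simp only [βf, uf]
        rw [if_pos i.isLt, dif_pos i.isLt]⟩)
    have hWle' : W ≤ Submodule.span 𝔽 (Set.range βf) :=
      subspace_le_span bW (fun i => ⟨⟨d + i.val, by omega⟩, by
        have h1 : ¬ (d + i.val < d) := by omega
        have h2 : d + i.val < ν := by have := i.isLt; omega
        simp only [βf, wf]
        rw [if_neg h1, if_pos h2]
        have h3 : d + i.val - d = i.val := by omega
        rw [h3, dif_pos i.isLt]⟩)
    have hYle' : Y ≤ Submodule.span 𝔽 (Set.range βf) :=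
      subspace_le_span bY (fun i => ⟨⟨ν + d + i.val, by have := i.isLt; omega⟩, by
        have h1 : ¬ (ν + d + i.val < d) := by omega
        have h2 : ¬ (ν + d + i.val < ν) := by omega
        have h3 : ¬ (ν + d + i.val < ν + d) := by omega
        simp only [βf, yf]
        rw [if_neg h1, if_neg h2, if_neg h3]
        have h4 : ν + d + i.val - ν - d = i.val := by omega
        rw [h4, dif_pos i.isLt]⟩)
    have hZle' : Zc ≤ Submodule.span 𝔽 (Set.range βf) :=
      subspace_le_span bZc (fun i => ⟨⟨ν + i.val, by have := i.isLt; omega⟩, by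
        have h1 : ¬ (ν + i.val < d) := by omega
        have h2 : ¬ (ν + i.val < ν) := by omega
        have h3 : ν + i.val < ν + d := by have := i.isLt; omega
        simp only [βf, zf]
        rw [if_neg h1, if_neg h2, if_pos h3]
        have h4 : ν + i.val - ν = i.val := by omega
        rw [h4, dif_pos i.isLt]⟩)
    intro x _
    have hx : x ∈ (RR ⊔ NN) ⊔ Zc := by rw [hZcCompl.sup_eq_top]; trivial
    have hRRle : RR ≤ Submodule.span 𝔽 (Set.range βf) := by
      rw [← hYsup]; exact sup_le hIle hYle'
    have hNNle : NN ≤ Submodule.span 𝔽 (Set.range βf) := by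
      rw [← hWsup]; exact sup_le hIle hWle'
    exact (sup_le (sup_le hRRle hNNle) hZle') hx
  have hspanα : ⊤ ≤ Submodule.span 𝔽 (Set.range αf) := by
    have hIle : RR ⊓ NN ≤ Submodule.span 𝔽 (Set.range αf) :=
      subspace_le_span bI (fun i => ⟨⟨i.val, lt_of_lt_of_le i.isLt hdn⟩, by
        simp only [αf, uf]
        rw [if_pos i.isLt, dif_pos i.isLt]⟩)
    have hWle' : W ≤ Submodule.span 𝔽 (Set.range αf) :=
      subspace_le_span bW (fun i => ⟨⟨d + i.val, by omega⟩, by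
        have h1 : ¬ (d + i.val < d) := by omega
        have h2 : d + i.val < ν := by have := i.isLt; omega
        simp only [αf, wf]
        rw [if_neg h1, if_pos h2]
        have h3 : d + i.val - d = i.val := by omega
        rw [h3, dif_pos i.isLt]⟩)
    have hNNle : NN ≤ Submodule.span 𝔽 (Set.range αf) := by
      rw [← hWsup]; exact sup_le hIle hWle'
    have hqmem : ∀ i, i < d → qf i ∈ Submodule.span 𝔽 (Set.range αf) := by
      intro i hi
      apply Submodule.subset_span
      refine ⟨⟨ν + i, by omega⟩, ?_⟩
      have h1 : ¬ (ν + i < d) := by omega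
      have h2 : ¬ (ν + i < ν) := by omega
      have h3 : ν + i < ν + d := by omega
      simp only [αf]
      rw [if_neg h1, if_neg h2, if_pos h3]
      have h5 : ν + i - ν = i := by omega
      rw [h5]
    have hpmem : ∀ i, i < r - d → pf i ∈ Submodule.span 𝔽 (Set.range αf) := by
      intro i hi
      apply Submodule.subset_span
      refine ⟨⟨ν + d + i, by omega⟩, ?_⟩
      have h1 : ¬ (ν + d + i < d) := by omega
      have h2 : ¬ (ν + d + i < ν) := by omega
      have h3 : ¬ (ν + d + i < ν + d) := by omega
      simp only [αf]
      rw [if_neg h1, if_neg h2, if_neg h3]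
      have h5 : ν + d + i - ν - d = i := by omega
      rw [h5]
    -- RR is contained in the image of span αf under G.mulVecLin
    have hRRim : RR ≤ Submodule.map G.mulVecLin (Submodule.span 𝔽 (Set.range αf)) := by
      have hIle2 : RR ⊓ NN ≤ Submodule.map G.mulVecLin (Submodule.span 𝔽 (Set.range αf)) :=
        subspace_le bI (fun i => by
          have hb : (bI i : Fin n → 𝔽) = uf i.val := by
            simp only [uf]
            rw [dif_pos i.isLt]
          rw [hb, ← hqf i.val]
          exact Submodule.mem_map_of_mem (hqmem i.val i.isLt))
      have hYle2 : Y ≤ Submodule.map G.mulVecLin (Submodule.span 𝔽 (Set.range αf)) :=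
        subspace_le bY (fun i => by
          have hb : (bY i : Fin n → 𝔽) = yf i.val := by
            simp only [yf]
            rw [dif_pos i.isLt]
          rw [hb, ← hpf i.val]
          exact Submodule.mem_map_of_mem (hpmem i.val i.isLt))
      rw [← hYsup]
      exact sup_le hIle2 hYle2
    intro x _
    have hfx : G.mulVecLin x ∈ RR := LinearMap.mem_range_self _ x
    obtain ⟨s, hs, hfs⟩ := hRRim hfx
    have hxs : x - s ∈ NN := by
      rw [hNNdef, LinearMap.mem_ker, map_sub, hfs, sub_self]
    have := Submodule.add_mem _ (hNNle hxs) hs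
    simpa using this
  -- build the bases and matrices
  have hcard : Fintype.card (Fin n) = Module.finrank 𝔽 (Fin n → 𝔽) := by
    simp [Module.finrank_pi]
  let αB : Module.Basis (Fin n) 𝔽 (Fin n → 𝔽) := basisOfTopLeSpanOfCardEqFinrank αf hspanα hcard
  let βB : Module.Basis (Fin n) 𝔽 (Fin n → 𝔽) := basisOfTopLeSpanOfCardEqFinrank βf hspanβ hcard
  have hαB : ⇑αB = αf := coe_basisOfTopLeSpanOfCardEqFinrank _ _ _
  have hβB : ⇑βB = βf := coe_basisOfTopLeSpanOfCardEqFinrank _ _ _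
  let Pa := (Pi.basisFun 𝔽 (Fin n)).toMatrix ⇑αB
  let Pb := (Pi.basisFun 𝔽 (Fin n)).toMatrix ⇑βB
  have hPa_apply : ∀ i j, Pa i j = αf j i := by
    intro i j
    simp only [Pa, Module.Basis.toMatrix_apply, Pi.basisFun_repr, hαB]
  have hPb_apply : ∀ i j, Pb i j = βf j i := by
    intro i j
    simp only [Pb, Module.Basis.toMatrix_apply, Pi.basisFun_repr, hβB]
  refine ⟨Pa, Pb, αB.toMatrix ⇑(Pi.basisFun 𝔽 (Fin n)), βB.toMatrix ⇑(Pi.basisFun 𝔽 (Fin n)),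
    Module.Basis.toMatrix_mul_toMatrix_flip _ _, Module.Basis.toMatrix_mul_toMatrix_flip _ _,
    Module.Basis.toMatrix_mul_toMatrix_flip _ _, Module.Basis.toMatrix_mul_toMatrix_flip _ _, ?_, ?_⟩
  · -- shared first ν columns
    intro i j hj
    rw [hPa_apply, hPb_apply]
    simp only [αf, βf]
    by_cases h1 : j.val < d
    · rw [if_pos h1, if_pos h1]
    · rw [if_neg h1, if_neg h1, if_pos hj, if_pos hj]
  · -- G * Pa = Pb * G₀
    ext i j
    have hL : (G * Pa) i j = G.mulVecLin (αf j) i := by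
      rw [Matrix.mul_apply, Matrix.mulVecLin_apply]
      show _ = Finset.univ.sum (fun l => G i l * (αf j) l)
      apply Finset.sum_congr rfl
      intro l _
      rw [hPa_apply]
    rw [hL]
    by_cases h1 : j.val < ν
    · rw [mul_colMat_apply_none _ _ _ (by rw [if_pos h1])]
      have hmem : αf j ∈ NN := by
        simp only [αf]
        by_cases h2 : j.val < d
        · rw [if_pos h2]; exact (hufmem j.val).2
        · rw [if_neg h2, if_pos h1]; exact hWle (hwfmem _)
      rw [LinearMap.mem_ker.mp hmem]
      rfl
    · by_cases h2 : j.val < ν + d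
      · have hv : j.val - ν < n := by omega
        rw [mul_colMat_apply_some _ _ _ hv (by rw [if_neg h1, if_pos h2])]
        have hα : αf j = qf (j.val - ν) := by
          simp only [αf]
          rw [if_neg (by omega : ¬ j.val < d), if_neg h1, if_pos h2]
        have hβ : Pb i ⟨j.val - ν, hv⟩ = uf (j.val - ν) i := by
          rw [hPb_apply]
          simp only [βf]
          rw [if_pos (by omega : j.val - ν < d)]
        rw [hα, hβ, hqf]
      · have hv : j.val < n := j.isLt
        rw [mul_colMat_apply_some _ _ _ hv (by rw [if_neg h1, if_neg h2])]
        have hα : αf j = pf (j.val - ν - d) := by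
          simp only [αf]
          rw [if_neg (by omega : ¬ j.val < d), if_neg h1, if_neg h2]
        have hβ : Pb i ⟨j.val, hv⟩ = yf (j.val - ν - d) i := by
          rw [hPb_apply]
          simp only [βf]
          rw [if_neg (by omega : ¬ j.val < d), if_neg h1, if_neg h2]
        rw [hα, hβ, hpf]


lemma diagonal_mul_colMat (p : ℕ → Prop) [DecidablePred p] (τ : ℕ → Option ℕ) :
    (diagonal (fun j : Fin n => if p j.val then (0:𝔽) else 1)) * colMat τ
      = colMat (fun j => (τ j).bind (fun v => if p v then none else some v)) := by
  ext i j
  rw [Matrix.diagonal_mul]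
  rcases hcase : τ j.val with _ | v
  · simp [colMat, hcase]
  · simp only [colMat, Matrix.of_apply, hcase, Option.bind_some]
    by_cases hp : p v <;> by_cases hvi : v = i.val <;> simp_all

lemma colMat_mul_diagonal (p : ℕ → Prop) [DecidablePred p] (τ : ℕ → Option ℕ) :
    (colMat τ : Matrix (Fin n) (Fin n) 𝔽)
        * (diagonal (fun j : Fin n => if p j.val then (0:𝔽) else 1))
      = colMat (fun j => if p j then none else τ j) := by
  ext i j
  rw [Matrix.mul_diagonal]
  by_cases hp : p j.val <;> simp [colMat, hp]

lemma colMat_add {a b c : ℕ → Option ℕ}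
    (h : ∀ j < n, (a j = c j ∧ b j = none) ∨ (a j = none ∧ b j = c j)) :
    (colMat a : Matrix (Fin n) (Fin n) 𝔽) + colMat b = colMat c := by
  ext i j
  simp only [Matrix.add_apply, colMat, Matrix.of_apply]
  rcases h j.val j.isLt with ⟨h1, h2⟩ | ⟨h1, h2⟩
  · rw [h1, h2]; simp
  · rw [h1, h2]; simp

section Identities

def τU (d r ν : ℕ) : ℕ → Option ℕ := fun j => if d ≤ j ∧ j < r then some (ν + j) else none
def τZ (r ν m₁ : ℕ) : ℕ → Option ℕ := fun j =>
  if j < m₁ then none else if j < ν then some (j + r - m₁) else some (j - ν)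
def τG (d ν : ℕ) : ℕ → Option ℕ := fun j =>
  if j < ν then none else if j < ν + d then some (j - ν) else some j

abbrev pD (d t : ℕ) : ℕ → Prop := fun j => d ≤ j ∧ j < d + t

instance {d t : ℕ} : DecidablePred (pD d t) := fun _ => instDecidableAnd

/-- the diagonal idempotent `D` -/
noncomputable def Dmat (d t : ℕ) : Matrix (Fin n) (Fin n) 𝔽 :=
  diagonal (fun j : Fin n => if pD d t j.val then (0:𝔽) else 1)

variable {d r ν m₁ t : ℕ}
variable (hdr : d ≤ r) (hrm : r ≤ m₁) (hmν : m₁ ≤ ν) (hrν : r + ν = n)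
  (hnt : n ≤ d + t + m₁) (htν : t ≤ ν) (h2m : n ≤ 2 * m₁)

include hrν in
lemma τU_bound : ∀ j < n, ∀ v, τU d r ν j = some v → v < n := by
  intro j hj v hv
  simp only [τU] at hv
  by_cases hc : d ≤ j ∧ j < r
  · rw [if_pos hc] at hv
    have := Option.some_inj.mp hv
    omega
  · rw [if_neg hc] at hv
    exact absurd hv (by simp)

include hrm hmν hrν in
lemma τZ_bound : ∀ j < n, ∀ v, τZ r ν m₁ j = some v → v < n := by
  intro j hj v hv
  simp only [τZ] at hv
  by_cases h1 : j < m₁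
  · rw [if_pos h1] at hv; exact absurd hv (by simp)
  · rw [if_neg h1] at hv
    by_cases h2 : j < ν
    · rw [if_pos h2] at hv
      have := Option.some_inj.mp hv
      omega
    · rw [if_neg h2] at hv
      have := Option.some_inj.mp hv
      omega

include hdr hrm hmν hrν in
lemma UU_eq_zero :
    (colMat (τU d r ν) : Matrix (Fin n) (Fin n) 𝔽) * colMat (τU d r ν) = 0 := by
  rw [colMat_mul (τU_bound hrν)]
  apply colMat_none
  intro j hj
  unfold τU
  by_cases hc : d ≤ j ∧ j < r
  · rw [if_pos hc, Option.bind_some, if_neg (by omega)]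
  · rw [if_neg hc, Option.bind_none]

include hdr hrm hmν hrν htν in
lemma DU_eq_U :
    (Dmat d t : Matrix (Fin n) (Fin n) 𝔽) * colMat (τU d r ν) = colMat (τU d r ν) := by
  rw [Dmat, diagonal_mul_colMat]
  apply colMat_congr
  intro j hj
  by_cases hc : d ≤ j ∧ j < r
  · simp only [τU]
    rw [if_pos hc, Option.bind_some, if_neg (by simp only [pD]; omega)]
  · simp only [τU]
    rw [if_neg hc, Option.bind_none]

include hdr hrm hmν hrν hnt htν in
lemma UD_eq_zero :
    (colMat (τU d r ν) : Matrix (Fin n) (Fin n) 𝔽) * (Dmat d t) = 0 := by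
  rw [Dmat, colMat_mul_diagonal]
  apply colMat_none
  intro j hj
  by_cases hp : pD d t j
  · rw [if_pos hp]
  · rw [if_neg hp]
    simp only [τU]
    rw [if_neg]
    intro hc
    exact hp (by simp only [pD]; omega)

include hdr hrm hmν hrν h2m in
lemma ZZ_eq_zero :
    (colMat (τZ r ν m₁) : Matrix (Fin n) (Fin n) 𝔽) * colMat (τZ r ν m₁) = 0 := by
  rw [colMat_mul (τZ_bound hrm hmν hrν)]
  apply colMat_none
  intro j hj
  unfold τZ
  by_cases h1 : j < m₁
  · rw [if_pos h1, Option.bind_none]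
  · rw [if_neg h1]
    by_cases h2 : j < ν
    · rw [if_pos h2, Option.bind_some, if_pos (by omega)]
    · rw [if_neg h2, Option.bind_some, if_pos (by omega)]

include hdr hrm hmν hrν hnt htν in
lemma DUZ_eq_G :
    ((Dmat d t : Matrix (Fin n) (Fin n) 𝔽) + colMat (τU d r ν)) * colMat (τZ r ν m₁)
      = colMat (τG d ν) := by
  rw [Matrix.add_mul, Dmat, diagonal_mul_colMat, colMat_mul (τZ_bound hrm hmν hrν)]
  apply colMat_add
  intro j hj
  unfold τZ τG τU pD
  by_cases h1 : j < m₁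
  · rw [if_pos h1]
    left
    constructor
    · rw [Option.bind_none, if_pos (by omega)]
    · rw [Option.bind_none]
  · rw [if_neg h1]
    by_cases h2 : j < ν
    · -- v = j + r - m₁ ∈ [r, n - m₁) ⊆ [d, d+t)  : D-part dies, U-part dies
      rw [if_pos h2, Option.bind_some, Option.bind_some]
      left
      constructor
      · rw [if_pos (by omega), if_pos (by omega)]
      · rw [if_neg (by omega)]
    · rw [if_neg h2]
      by_cases h3 : j < ν + d
      · -- v = j - ν < d : D-part survives as some (j-ν), U-part dies
        rw [Option.bind_some, Option.bind_some]
        left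
        constructor
        · rw [if_neg (by omega), if_neg (by omega), if_pos h3]
        · rw [if_neg (by omega)]
      · -- v = j - ν ∈ [d, r) : D-part dies, U-part gives some (ν + (j-ν)) = some j
        rw [Option.bind_some, Option.bind_some]
        right
        constructor
        · rw [if_pos (by omega)]
        · rw [if_pos (by omega), if_neg (by omega), if_neg h3]
          congr 1
          omega

end Identities



def sfun {k : ℕ} (nv : Fin k → ℕ) : ℕ → ℕ := fun i => ∑ l, if l.val < i then nv l else 0

def bfun {k : ℕ} (nv : Fin k → ℕ) (t : ℕ) : ℕ → ℕ := fun i => min t (sfun nv (i + 1))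

lemma sfun_zero {k : ℕ} (nv : Fin k → ℕ) : sfun nv 0 = 0 := by
  simp [sfun]

lemma sfun_succ {k : ℕ} (nv : Fin k → ℕ) (j : ℕ) :
    sfun nv (j + 1) = sfun nv j + (if h : j < k then nv ⟨j, h⟩ else 0) := by
  rw [sfun, sfun]
  have h1 : ∀ l : Fin k, (if l.val < j + 1 then nv l else 0)
      = (if l.val < j then nv l else 0) + (if l.val = j then nv l else 0) := by
    intro l
    by_cases h2 : l.val < j
    · rw [if_pos (by omega), if_pos h2, if_neg (by omega), add_zero]
    · by_cases h3 : l.val = j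
      · rw [if_pos (by omega), if_neg h2, if_pos h3, zero_add]
      · rw [if_neg (by omega), if_neg h2, if_neg h3, add_zero]
  rw [Finset.sum_congr rfl (fun l _ => h1 l), Finset.sum_add_distrib]
  congr 1
  by_cases h : j < k
  · rw [dif_pos h, Finset.sum_eq_single ⟨j, h⟩]
    · rw [if_pos rfl]
    · intro b _ hb
      rw [if_neg (fun hc => hb (Fin.ext hc))]
    · intro hc; exact absurd (Finset.mem_univ _) hc
  · rw [dif_neg h]
    apply Finset.sum_eq_zero
    intro l _
    rw [if_neg (by have := l.isLt; omega)]

lemma sfun_total {k : ℕ} (nv : Fin k → ℕ) : sfun nv k = ∑ i, nv i := by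
  rw [sfun]
  apply Finset.sum_congr rfl
  intro l _
  rw [if_pos l.isLt]

lemma cover {k t : ℕ} (nv : Fin k → ℕ) (hts : t ≤ ∑ i, nv i) :
    ∀ x < t, ∃ i : Fin k, bfun nv t i.val - nv i ≤ x ∧ x < bfun nv t i.val := by
  have haux : ∀ j ≤ k, ∀ x, x < min t (sfun nv j) →
      ∃ i : Fin k, i.val < j ∧ bfun nv t i.val - nv i ≤ x ∧ x < bfun nv t i.val := by
    intro j
    induction j with
    | zero => intro _ x hx; rw [sfun_zero] at hx; omega
    | succ m ih =>
      intro hm x hx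
      by_cases hcase : x < min t (sfun nv m)
      · obtain ⟨i, hi1, hi2⟩ := ih (by omega) x hcase
        exact ⟨i, by omega, hi2⟩
      · have hmk : m < k := by omega
        refine ⟨⟨m, hmk⟩, by show m < m + 1; omega, ?_, ?_⟩
        · show bfun nv t m - nv ⟨m, hmk⟩ ≤ x
          have h1 : bfun nv t m ≤ sfun nv (m+1) := min_le_right _ _
          have h2 : sfun nv (m+1) = sfun nv m + nv ⟨m, hmk⟩ := by
            rw [sfun_succ, dif_pos hmk]
          have h3 : bfun nv t m ≤ t := min_le_left _ _
          -- b m - nv m ≤ min t (sfun m) ≤ x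
          have h4 : min t (sfun nv m) ≤ x := by omega
          have h5 : t ≤ sfun nv m ∨ sfun nv m < t := by omega
          rcases h5 with h5 | h5
          · -- then min = t > x, contradiction with x < t... x < min t (sfun (m+1)) ≤ t
            have : x < t := by
              have := min_le_left t (sfun nv (m+1)); omega
            omega
          · have h6 : min t (sfun nv m) = sfun nv m := by omega
            have : bfun nv t m - nv ⟨m, hmk⟩ ≤ sfun nv m := by
              rw [bfun]; omega
            omega
        · show x < bfun nv t m
          rw [bfun]; omega
  intro x hx
  have h1 : min t (sfun nv k) = t := by
    rw [sfun_total]; omega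
  obtain ⟨i, _, h⟩ := haux k (le_refl k) x (by omega)
  exact ⟨i, h⟩


section Split
variable {𝔽 : Type*} [Field 𝔽] {n : ℕ}

/-- the small diagonal idempotents -/
noncomputable def Dl {k : ℕ} (nv : Fin k → ℕ) (t d : ℕ) (i : Fin k) :
    Matrix (Fin n) (Fin n) 𝔽 :=
  diagonal (fun j : Fin n =>
    if d + (bfun nv t i.val - nv i) ≤ j.val ∧ j.val < d + bfun nv t i.val then (0:𝔽) else 1)

lemma Dl_idem {k : ℕ} (nv : Fin k → ℕ) (t d : ℕ) (i : Fin k) :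
    (Dl nv t d i : Matrix (Fin n) (Fin n) 𝔽) * Dl nv t d i = Dl nv t d i := by
  have harg : (fun j : Fin n =>
        (if d + (bfun nv t i.val - nv i) ≤ j.val ∧ j.val < d + bfun nv t i.val
          then (0:𝔽) else 1) *
        (if d + (bfun nv t i.val - nv i) ≤ j.val ∧ j.val < d + bfun nv t i.val
          then (0:𝔽) else 1))
      = fun j : Fin n =>
        if d + (bfun nv t i.val - nv i) ≤ j.val ∧ j.val < d + bfun nv t i.val
        then (0:𝔽) else 1 := by
    funext j
    by_cases h : d + (bfun nv t i.val - nv i) ≤ j.val ∧ j.val < d + bfun nv t i.val <;>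
      simp [h]
  rw [Dl, diagonal_mul_diagonal, harg]

lemma bfun_ge {k t : ℕ} (nv : Fin k → ℕ) (i : Fin k) (h : nv i ≤ t) :
    nv i ≤ bfun nv t i.val := by
  have h1 : sfun nv (i.val + 1) = sfun nv i.val + nv i := by
    rw [sfun_succ, dif_pos i.isLt, Fin.eta]
  rw [bfun]
  omega

lemma Dl_prod {k t d : ℕ} (nv : Fin k → ℕ) (hts : t ≤ ∑ i, nv i) :
    (List.ofFn fun i => (Dl nv t d i : Matrix (Fin n) (Fin n) 𝔽)).prod = Dmat d t := by
  rw [show (fun i => (Dl nv t d i : Matrix (Fin n) (Fin n) 𝔽))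
      = fun i => diagonal (fun j : Fin n =>
        if d + (bfun nv t i.val - nv i) ≤ j.val ∧ j.val < d + bfun nv t i.val
        then (0:𝔽) else 1) from rfl]
  rw [prod_diagonal, Dmat]
  have harg : (fun j : Fin n => ∏ i : Fin k,
        if d + (bfun nv t i.val - nv i) ≤ j.val ∧ j.val < d + bfun nv t i.val
        then (0:𝔽) else 1)
      = fun j : Fin n => if pD d t j.val then (0:𝔽) else 1 := by
    funext j
    by_cases hpd : pD d t j.val
    · rw [if_pos hpd]
      have hj1 : d ≤ j.val ∧ j.val < d + t := hpd
      obtain ⟨i0, hi1, hi2⟩ := cover nv hts (j.val - d) (by omega)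
      apply Finset.prod_eq_zero (Finset.mem_univ i0)
      rw [if_pos (by omega)]
    · rw [if_neg hpd]
      apply Finset.prod_eq_one
      intro i _
      have hble : bfun nv t i.val ≤ t := min_le_left _ _
      rw [if_neg (by simp only [pD] at hpd; omega)]
  rw [harg]

lemma Dl_nullity {k t d : ℕ} (nv : Fin k → ℕ) (i : Fin k)
    (hnt : nv i ≤ t) (hdt : d + t ≤ n) :
    nullity (Dl nv t d i : Matrix (Fin n) (Fin n) 𝔽) = nv i := by
  classical
  have hble : bfun nv t i.val ≤ t := min_le_left _ _
  have hbge : nv i ≤ bfun nv t i.val := bfun_ge nv i hnt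
  have hcol : (Dl nv t d i : Matrix (Fin n) (Fin n) 𝔽)
      = colMat (fun j => if d + (bfun nv t i.val - nv i) ≤ j ∧ j < d + bfun nv t i.val
          then none else some j) := by
    rw [Dl]
    exact diagonal_eq_colMat
      (fun x => d + (bfun nv t i.val - nv i) ≤ x ∧ x < d + bfun nv t i.val)
  rw [hcol, nullity_colMat]
  · have hfe : (Finset.univ.filter (fun j : Fin n =>
        (if d + (bfun nv t i.val - nv i) ≤ j.val ∧ j.val < d + bfun nv t i.val
          then none else some j.val) = none))
        = Finset.univ.filter (fun j : Fin n =>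
          d + (bfun nv t i.val - nv i) ≤ j.val ∧ j.val < d + bfun nv t i.val) := by
      apply Finset.filter_congr
      intro j _
      by_cases h : d + (bfun nv t i.val - nv i) ≤ j.val ∧ j.val < d + bfun nv t i.val <;>
        simp [h]
    rw [hfe, card_filter_interval _ _ (by omega)]
    omega
  · intro j hj v hv
    by_cases h : d + (bfun nv t i.val - nv i) ≤ j ∧ j < d + bfun nv t i.val
    · rw [if_pos h] at hv; exact absurd hv (by simp)
    · rw [if_neg h] at hv; have := Option.some_inj.mp hv; omega
  · intro j₁ h₁ j₂ h₂ v hv₁ hv₂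
    by_cases ha : d + (bfun nv t i.val - nv i) ≤ j₁ ∧ j₁ < d + bfun nv t i.val
    · rw [if_pos ha] at hv₁; exact absurd hv₁ (by simp)
    · by_cases hb : d + (bfun nv t i.val - nv i) ≤ j₂ ∧ j₂ < d + bfun nv t i.val
      · rw [if_pos hb] at hv₂; exact absurd hv₂ (by simp)
      · rw [if_neg ha] at hv₁
        rw [if_neg hb] at hv₂
        have e1 := Option.some_inj.mp hv₁
        have e2 := Option.some_inj.mp hv₂
        omega

lemma Z0_nullity {r ν m₁ : ℕ} (hrm : r ≤ m₁) (hmν : m₁ ≤ ν) (hrν : r + ν = n)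
    (h2m : n ≤ 2 * m₁) :
    nullity (colMat (τZ r ν m₁) : Matrix (Fin n) (Fin n) 𝔽) = m₁ := by
  classical
  rw [nullity_colMat (τZ_bound hrm hmν hrν)]
  · have hfe : (Finset.univ.filter (fun j : Fin n => τZ r ν m₁ j.val = none))
        = Finset.univ.filter (fun j : Fin n => 0 ≤ j.val ∧ j.val < m₁) := by
      apply Finset.filter_congr
      intro j _
      simp only [τZ]
      by_cases h1 : j.val < m₁
      · simp [h1]
      · rw [if_neg h1]
        by_cases h2 : j.val < ν <;> simp [h2, h1]
    rw [hfe, card_filter_interval 0 m₁ (by omega)]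
    omega
  · intro j₁ h₁ j₂ h₂ v hv₁ hv₂
    simp only [τZ] at hv₁ hv₂
    by_cases a1 : j₁ < m₁
    · rw [if_pos a1] at hv₁; exact absurd hv₁ (by simp)
    · rw [if_neg a1] at hv₁
      by_cases a2 : j₂ < m₁
      · rw [if_pos a2] at hv₂; exact absurd hv₂ (by simp)
      · rw [if_neg a2] at hv₂
        by_cases b1 : j₁ < ν <;> by_cases b2 : j₂ < ν
        · rw [if_pos b1] at hv₁; rw [if_pos b2] at hv₂
          have e1 := Option.some_inj.mp hv₁
          have e2 := Option.some_inj.mp hv₂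
          omega
        · rw [if_pos b1] at hv₁; rw [if_neg b2] at hv₂
          have e1 := Option.some_inj.mp hv₁
          have e2 := Option.some_inj.mp hv₂
          omega
        · rw [if_neg b1] at hv₁; rw [if_pos b2] at hv₂
          have e1 := Option.some_inj.mp hv₁
          have e2 := Option.some_inj.mp hv₂
          omega
        · rw [if_neg b1] at hv₁; rw [if_neg b2] at hv₂
          have e1 := Option.some_inj.mp hv₁
          have e2 := Option.some_inj.mp hv₂
          omega

end Split
section Main
variable {𝔽 : Type*} [Field 𝔽] {n : ℕ}

lemma reverse {k : ℕ} (G : Matrix (Fin n) (Fin n) 𝔽) (nv : Fin k → ℕ) (m₁ : ℕ)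
    (c : Fin k → 𝔽) (hc : ∀ i, c i ≠ 0)
    (h1 : ∀ i, nv i ≤ nullity G) (h2 : m₁ ≤ nullity G) (h3 : n ≤ 2 * m₁)
    (h4 : Module.finrank 𝔽 (LinearMap.range G.mulVecLin ⊔ LinearMap.ker G.mulVecLin :
        Submodule 𝔽 (Fin n → 𝔽)) ≤ (∑ i, nv i) + m₁) :
    ∃ (E : Fin k → Matrix (Fin n) (Fin n) 𝔽) (Z₁ : Matrix (Fin n) (Fin n) 𝔽),
      (∀ i, E i * E i = E i ∧ nullity (E i) = nv i) ∧
      Z₁ * Z₁ = 0 ∧ nullity Z₁ = m₁ ∧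
      G = (List.ofFn fun i => c i • E i).prod * Z₁ := by
  classical
  obtain ⟨Pa, Pb, Pai, Pbi, hPa1, hPa2, hPb1, hPb2, hshare, hGPa⟩ := exists_bases G
  set ν := nullity G with hνdef
  set d := Module.finrank 𝔽 (LinearMap.range G.mulVecLin ⊓ LinearMap.ker G.mulVecLin :
    Submodule 𝔽 (Fin n → 𝔽)) with hddef
  set r := Module.finrank 𝔽 (LinearMap.range G.mulVecLin) with hrdef
  have hγ : (∏ i, c i) ≠ 0 := Finset.prod_ne_zero_iff.mpr (fun i _ => hc i)
  have hrν : r + ν = n := by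
    rw [hrdef, hνdef, nullity]
    have := LinearMap.finrank_range_add_finrank_ker G.mulVecLin
    simpa [Module.finrank_pi] using this
  have hdr : d ≤ r := Submodule.finrank_mono inf_le_left
  have hdν : d ≤ ν := by
    rw [hνdef, nullity]
    exact Submodule.finrank_mono inf_le_right
  have hsupfr : Module.finrank 𝔽
      (LinearMap.range G.mulVecLin ⊔ LinearMap.ker G.mulVecLin :
        Submodule 𝔽 (Fin n → 𝔽)) + d = n := by
    have h5 := Submodule.finrank_sup_add_finrank_inf_eq
      (LinearMap.range G.mulVecLin) (LinearMap.ker G.mulVecLin)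
    rw [← hddef, ← hrdef] at h5
    have h6 : Module.finrank 𝔽 (LinearMap.ker G.mulVecLin) = ν := rfl
    omega
  have hrm : r ≤ m₁ := by omega
  set t := max (n - d - m₁) (Finset.univ.sup nv) with htdef
  have hsup_le : Finset.univ.sup nv ≤ ν := Finset.sup_le (fun i _ => h1 i)
  have htν : t ≤ ν := max_le (by omega) hsup_le
  have hnt : n ≤ d + t + m₁ := by
    have := le_max_left (n - d - m₁) (Finset.univ.sup nv)
    omega
  have hsupsum : Finset.univ.sup nv ≤ ∑ i, nv i :=
    Finset.sup_le (fun i _ =>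
      Finset.single_le_sum (f := nv) (fun _ _ => Nat.zero_le _) (Finset.mem_univ i))
  have hts : t ≤ ∑ i, nv i := max_le (by omega) hsupsum
  have hnvt : ∀ i, nv i ≤ t :=
    fun i => le_trans (Finset.le_sup (Finset.mem_univ i)) (le_max_right _ _)
  have hdt_n : d + t ≤ n := by omega
  -- explicit matrix identities
  have hUU := UU_eq_zero (𝔽 := 𝔽) (n := n) hdr hrm h2 hrν
  have hDU := DU_eq_U (𝔽 := 𝔽) (n := n) hdr hrm h2 hrν htν
  have hUD := UD_eq_zero (𝔽 := 𝔽) (n := n) hdr hrm h2 hrν hnt htν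
  have hZZ0 := ZZ_eq_zero (𝔽 := 𝔽) (n := n) hdr hrm h2 hrν h3
  have hDUZ := DUZ_eq_G (𝔽 := 𝔽) (n := n) hdr hrm h2 hrν hnt htν
  set U : Matrix (Fin n) (Fin n) 𝔽 := colMat (τU d r ν) with hU
  set Z₀ : Matrix (Fin n) (Fin n) 𝔽 := colMat (τZ r ν m₁) with hZ₀
  have hSSi : (1 - U) * (1 + U) = 1 := by
    have h5 : (1 - U) * (1 + U) = 1 - U * U := by noncomm_ring
    rw [h5, hUU, sub_zero]
  have hSiS : (1 + U) * (1 - U) = 1 := by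
    have h5 : (1 + U) * (1 - U) = 1 - U * U := by noncomm_ring
    rw [h5, hUU, sub_zero]
  set Q := Pb * (1 - U) with hQ
  set Qi := (1 + U) * Pbi with hQi
  have hQQi : Q * Qi = 1 := by
    rw [hQ, hQi, Matrix.mul_assoc, ← Matrix.mul_assoc (1 - U) (1 + U) Pbi, hSSi,
      Matrix.one_mul, hPb1]
  have hQiQ : Qi * Q = 1 := by
    rw [hQi, hQ, Matrix.mul_assoc, ← Matrix.mul_assoc Pbi Pb (1 - U), hPb2,
      Matrix.one_mul, hSiS]
  refine ⟨fun i => Q * Dl nv t d i * Qi, (∏ i, c i)⁻¹ • (Pa * Z₀ * Pai), ?_, ?_, ?_, ?_⟩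
  · intro i
    constructor
    · have hDl := Dl_idem (𝔽 := 𝔽) (n := n) nv t d i
      have e1 : (Q * Dl nv t d i * Qi) * (Q * Dl nv t d i * Qi)
          = Q * (Dl nv t d i * ((Qi * Q) * Dl nv t d i)) * Qi := by noncomm_ring
      rw [e1, hQiQ, Matrix.one_mul, hDl]
    · rw [nullity_conj Q (Dl nv t d i) Qi hQQi hQiQ, Dl_nullity nv i (hnvt i) hdt_n]
  · -- Z₁² = 0
    rw [Matrix.smul_mul, Matrix.mul_smul, smul_smul]
    have e2 : (Pa * Z₀ * Pai) * (Pa * Z₀ * Pai)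
        = Pa * (Z₀ * ((Pai * Pa) * Z₀)) * Pai := by noncomm_ring
    rw [e2, hPa2, Matrix.one_mul, hZZ0, Matrix.mul_zero, Matrix.zero_mul, smul_zero]
  · -- nullity Z₁ = m₁
    rw [nullity_smul_of_ne_zero _ (inv_ne_zero hγ), nullity_conj Pa Z₀ Pai hPa1 hPa2,
      Z0_nullity hrm h2 hrν h3]
  · -- the product identity
    have hprodE : (List.ofFn fun i => c i • (Q * Dl nv t d i * Qi)).prod
        = (∏ i, c i) • (Q * Dmat d t * Qi) := by
      rw [prod_smul c (fun i => Q * Dl nv t d i * Qi),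
        prod_conj Q Qi hQQi hQiQ (fun i => Dl nv t d i), Dl_prod nv hts]
    rw [hprodE, Matrix.smul_mul, Matrix.mul_smul, smul_smul, mul_inv_cancel₀ hγ, one_smul]
    -- goal : G = Q * Dmat d t * Qi * (Pa * Z₀ * Pai)
    have hPaZ : Pa * Z₀ = Pb * Z₀ := by
      ext i j
      by_cases a1 : j.val < m₁
      · rw [mul_colMat_apply_none _ _ _ (by simp only [τZ]; rw [if_pos a1]),
          mul_colMat_apply_none _ _ _ (by simp only [τZ]; rw [if_pos a1])]
      · by_cases a2 : j.val < ν
        · have hv : j.val + r - m₁ < n := by omega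
          have hτ : τZ r ν m₁ j.val = some (j.val + r - m₁) := by
            simp only [τZ]; rw [if_neg a1, if_pos a2]
          rw [mul_colMat_apply_some _ _ _ hv hτ, mul_colMat_apply_some _ _ _ hv hτ]
          exact hshare _ _ (by show j.val + r - m₁ < ν; omega)
        · have hv : j.val - ν < n := by omega
          have hτ : τZ r ν m₁ j.val = some (j.val - ν) := by
            simp only [τZ]; rw [if_neg a1, if_neg a2]
          rw [mul_colMat_apply_some _ _ _ hv hτ, mul_colMat_apply_some _ _ _ hv hτ]
          exact hshare _ _ (by show j.val - ν < ν; omega)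
    have hSD : (1 - U) * Dmat d t = Dmat d t := by
      rw [Matrix.sub_mul, Matrix.one_mul, hUD, sub_zero]
    have hDSi : Dmat d t * (1 + U) = Dmat d t + U := by
      rw [Matrix.mul_add, Matrix.mul_one, hDU]
    have key : Q * Dmat d t * Qi * (Pa * Z₀ * Pai)
        = Pb * (((1 - U) * Dmat d t) * (1 + U)) * ((Pbi * (Pa * Z₀)) * Pai) := by
      rw [hQ, hQi]; noncomm_ring
    rw [key, hSD, hDSi, hPaZ, ← Matrix.mul_assoc Pbi Pb Z₀, hPb2, Matrix.one_mul]
    have key2 : Pb * (Dmat d t + U) * (Z₀ * Pai)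
        = Pb * ((Dmat d t + U) * Z₀) * Pai := by noncomm_ring
    rw [key2, hDUZ]
    have hτGeq : (colMat (τG d ν) : Matrix (Fin n) (Fin n) 𝔽)
        = colMat (fun j => if j < ν then none
            else if j < ν + d then some (j - ν) else some j) := rfl
    rw [hτGeq, ← hGPa, Matrix.mul_assoc, hPa1, Matrix.mul_one]

end Main
end Stmt9Aux

/-- **Corollary (l = 1).** `G = (c₁E₁)⋯(c_kE_k) Z₁` with `Eᵢ` idempotent of nullity
`nᵢ` and `Z₁` square-zero of nullity `m₁` iff `n₁, …, n_k, m₁ ≤ n(G)`, `m₁ ≥ n/2`, and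
`dim(R(G) + N(G)) ≤ n₁ + ⋯ + n_k + m₁`. -/
theorem stmt9 {𝔽 : Type*} [Field 𝔽] {n k : ℕ} (G : Matrix (Fin n) (Fin n) 𝔽)
    (nv : Fin k → ℕ) (m₁ : ℕ) (c : Fin k → 𝔽) (hc : ∀ i, c i ≠ 0) :
    (∃ (E : Fin k → Matrix (Fin n) (Fin n) 𝔽) (Z₁ : Matrix (Fin n) (Fin n) 𝔽),
        (∀ i, E i * E i = E i ∧ nullity (E i) = nv i) ∧
        Z₁ * Z₁ = 0 ∧ nullity Z₁ = m₁ ∧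
        G = (List.ofFn fun i => c i • E i).prod * Z₁) ↔
      ((∀ i, nv i ≤ nullity G) ∧ m₁ ≤ nullity G ∧ n ≤ 2 * m₁ ∧
        Module.finrank 𝔽
          (LinearMap.range G.mulVecLin ⊔ LinearMap.ker G.mulVecLin :
            Submodule 𝔽 (Fin n → 𝔽)) ≤ (∑ i, nv i) + m₁) := by
  constructor
  · rintro ⟨E, Z₁, hE, hZsq, hZn, hGeq⟩
    have hγ : (∏ i, c i) ≠ 0 := Finset.prod_ne_zero_iff.mpr (fun i _ => hc i)
    refine ⟨?_, ?_, ?_, ?_⟩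
    · intro i
      obtain ⟨A, B, hAB⟩ := Stmt9Aux.prod_factor (fun i => c i • E i) i
      have hr1 : G.rank ≤ (E i).rank := by
        rw [hGeq, hAB]
        calc (A * (c i • E i) * B * Z₁).rank
            ≤ (A * (c i • E i) * B).rank := Matrix.rank_mul_le_left _ _
          _ ≤ (A * (c i • E i)).rank := Matrix.rank_mul_le_left _ _
          _ ≤ (c i • E i).rank := Matrix.rank_mul_le_right _ _
          _ = (E i).rank := Stmt9Aux.rank_smul_of_ne_zero _ (hc i) _
      have e1 := Stmt9Aux.nullity_add_rank G
      have e2 := Stmt9Aux.nullity_add_rank (E i)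
      have e3 := (hE i).2
      omega
    · have hker : LinearMap.ker Z₁.mulVecLin ≤ LinearMap.ker G.mulVecLin := by
        intro x hx
        rw [LinearMap.mem_ker] at hx ⊢
        rw [hGeq, Matrix.mulVecLin_mul, LinearMap.comp_apply, hx, map_zero]
      rw [← hZn]
      exact Submodule.finrank_mono hker
    · have hrange : LinearMap.range Z₁.mulVecLin ≤ LinearMap.ker Z₁.mulVecLin := by
        rintro x ⟨v, rfl⟩
        rw [LinearMap.mem_ker, Matrix.mulVecLin_apply, Matrix.mulVecLin_apply,
          Matrix.mulVec_mulVec, hZsq, Matrix.zero_mulVec]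
      have h5 : Z₁.rank ≤ nullity Z₁ := Submodule.finrank_mono hrange
      have h6 := Stmt9Aux.nullity_add_rank Z₁
      omega
    · rw [hGeq]
      have hb := Stmt9Aux.forward_sup_le (List.ofFn fun i => c i • E i).prod Z₁
        (∏ i, c i) hγ hZsq
      have hb2 := Stmt9Aux.rank_prod_sub_le c hc E (fun i => (hE i).1)
      have hsum : ∑ i, nullity (E i) = ∑ i, nv i :=
        Finset.sum_congr rfl (fun i _ => (hE i).2)
      omega
  · rintro ⟨hA, hB, hC, hD⟩
    exact Stmt9Aux.reverse G nv m₁ c hc hA hB hC hD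
end
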